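/- arXiv:2308.02446 — 9 statements merged into one kernel-verified Lean document; each statement's English description precedes it below -/
import Mathlib

section
/- For every germ φ at +infinity of a continuous real function there exists an overhardian germ y ∈ 𝒞^∞ such that φ <_e y^{⟨m⟩} for all m ∈ ℕ. -/
open Filter Set

noncomputable section

/-- The ring of germs at +∞ of real-valued functions. -/
abbrev RGerm : Type := Filter.Germ (Filter.atTop : Filter ℝ) ℝ

/-- Eventual strict inequality of germs: `f(t) < g(t)` for all sufficiently large `t`. -/
def germLT (f g : RGerm) : Prop := Filter.Germ.LiftRel (· < ·) f g

/-- Eventual inequality of germs: `f(t) ≤ g(t)` for all sufficiently large `t`. -/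
def germLE (f g : RGerm) : Prop := Filter.Germ.LiftRel (· ≤ ·) f g

/-- `g` is the germ of the derivative of (an eventually differentiable representative of) `f`. -/
def HasGermDeriv (f g : RGerm) : Prop :=
  ∃ F : ℝ → ℝ, f = (↑F : RGerm) ∧ (∀ᶠ t in Filter.atTop, DifferentiableAt ℝ F t) ∧
    g = (↑(deriv F) : RGerm)

/-- A Hardy field: a subring of the ring of germs at +∞ which is a field
(every nonzero element has an inverse in it), every element of which is the germ of an
(eventually) differentiable function whose derivative's germ again lies in the subring. -/
def IsHardyField (H : Subring RGerm) : Prop :=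
  (∀ f ∈ H, f ≠ 0 → ∃ g ∈ H, f * g = 1) ∧
  (∀ f ∈ H, ∃ g ∈ H, HasGermDeriv f g)

/-- A maximal Hardy field: one not properly contained in any Hardy field. -/
def IsMaximalHardyField (H : Subring RGerm) : Prop :=
  IsHardyField H ∧ ∀ H' : Subring RGerm, IsHardyField H' → H ≤ H' → H' = H

/-- The germ of a real constant function. -/
def constGerm (c : ℝ) : RGerm := (↑(fun _ : ℝ => c) : RGerm)

/-- Germs of continuous functions. -/
def ContinuousGerm (φ : RGerm) : Prop := ∃ F : ℝ → ℝ, Continuous F ∧ φ = ↑F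

/-- Germs of C^∞ functions. -/
def SmoothGerm (y : RGerm) : Prop := ∃ Y : ℝ → ℝ, (∀ n : ℕ, ContDiff ℝ n Y) ∧ y = ↑Y

/-- Germs in 𝒞^{<∞}: for each `n`, some representative is `C^n` on a half-line. -/
def CltInftyGerm (y : RGerm) : Prop :=
  ∃ Y : ℝ → ℝ, (∀ n : ℕ, ∀ᶠ t in Filter.atTop, ContDiffAt ℝ n Y t) ∧ y = ↑Y

/-- `f ≺ g` for germs: for every `c > 0`, `|f(t)| ≤ c·|g(t)|` eventually. -/
def GermPrec (f g : RGerm) : Prop :=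
  ∀ c : ℝ, 0 < c → Filter.Germ.LiftRel (fun x y : ℝ => |x| ≤ c * |y|) f g

/-- A Liouville closed Hardy field containing ℝ: a Hardy field containing all real constants,
real closed as an ordered field (positive elements are squares and odd-degree polynomials
have roots), closed under exponentiation and under taking antiderivatives. -/
def IsLiouvilleClosedHardyField (H : Subring RGerm) : Prop :=
  IsHardyField H ∧
  (∀ c : ℝ, constGerm c ∈ H) ∧
  (∀ f ∈ H, germLT 0 f → ∃ g ∈ H, g * g = f) ∧
  (∀ p : Polynomial RGerm, (∀ i, p.coeff i ∈ H) → Odd p.natDegree →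
    ∃ x ∈ H, Polynomial.eval x p = 0) ∧
  (∀ f ∈ H, (Filter.Germ.map Real.exp f) ∈ H) ∧
  (∀ f ∈ H, ∃ g ∈ H, HasGermDeriv g f)

/-- `z` is the sequence of iterated logarithmic derivatives of `y`:
`z 0 = y` and `z (i+1) = (z i)′/(z i)`. -/
def IsLogDerivSeq (y : RGerm) (z : ℕ → RGerm) : Prop :=
  z 0 = y ∧ ∀ i, ∃ d : RGerm, HasGermDeriv (z i) d ∧ z i * z (i + 1) = d

/-- `y` is overhardian: all iterated logarithmic derivatives `y⟨i⟩` are defined,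
eventually positive, and `y⟨i+1⟩ <ₑ y⟨i⟩`. -/
def IsOverhardian (y : RGerm) : Prop :=
  ∃ z : ℕ → RGerm, IsLogDerivSeq y z ∧ ∀ i, germLT 0 (z i) ∧ germLT (z (i + 1)) (z i)

/-- `θ` is hardy-bounded: `θ ∈ 𝒞^{<∞}` and each derivative `θ^{(n)}` is eventually bounded. -/
def IsHardyBounded (θ : RGerm) : Prop :=
  ∃ F : ℝ → ℝ, θ = ↑F ∧ ∀ n : ℕ,
    (∀ᶠ t in Filter.atTop, ContDiffAt ℝ n F t) ∧
    ∃ C : ℝ, ∀ᶠ t in Filter.atTop, |iteratedDeriv n F t| ≤ C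

namespace St4

def Phi (f : ℝ → ℝ) (t : ℝ) : ℝ :=
  sSup ((fun s => |f s|) '' Icc 0 (max t 0 + 1)) + 1

variable {f : ℝ → ℝ}

lemma Phi_ge_abs (hf : Continuous f) {t : ℝ} (ht0 : 0 ≤ t) : |f t| + 1 ≤ Phi f t := by
  have hb : BddAbove ((fun s => |f s|) '' Icc 0 (max t 0 + 1)) :=
    (isCompact_Icc.image (continuous_abs.comp hf)).bddAbove
  have ht : t ∈ Icc (0:ℝ) (max t 0 + 1) := ⟨ht0, by nlinarith [le_max_left t 0]⟩
  have := le_csSup hb (mem_image_of_mem _ ht)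
  simp only [Phi]; linarith

lemma Phi_ge_one (hf : Continuous f) (t : ℝ) : 1 ≤ Phi f t := by
  have hb : BddAbove ((fun s => |f s|) '' Icc 0 (max t 0 + 1)) :=
    (isCompact_Icc.image (continuous_abs.comp hf)).bddAbove
  have h0 : (0:ℝ) ∈ Icc (0:ℝ) (max t 0 + 1) := ⟨le_rfl, by nlinarith [le_max_right t 0]⟩
  have := le_csSup hb (mem_image_of_mem _ h0)
  have := abs_nonneg (f 0)
  simp only [Phi]; linarith

lemma Phi_mono (hf : Continuous f) : Monotone (Phi f) := by
  intro a b hab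
  have hsub : Icc (0:ℝ) (max a 0 + 1) ⊆ Icc (0:ℝ) (max b 0 + 1) :=
    Icc_subset_Icc le_rfl (by have : max a 0 ≤ max b 0 := max_le_max hab le_rfl; linarith)
  have hb : BddAbove ((fun s => |f s|) '' Icc 0 (max b 0 + 1)) :=
    (isCompact_Icc.image (continuous_abs.comp hf)).bddAbove
  have hne : ((fun s => |f s|) '' Icc (0:ℝ) (max a 0 + 1)).Nonempty :=
    ⟨|f 0|, mem_image_of_mem _ ⟨le_rfl, by nlinarith [le_max_right a 0]⟩⟩
  have := csSup_le_csSup hb hne (image_mono hsub)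
  simp only [Phi]; linarith

def Psi (f : ℝ → ℝ) (x : ℝ) : ℝ := 20 * Phi f (x + 3) + max x 0 + 100

lemma Psi_mono (hf : Continuous f) : Monotone (Psi f) := by
  intro a b hab
  have h1 := Phi_mono hf (show a + 3 ≤ b + 3 by linarith)
  have h2 : max a 0 ≤ max b 0 := max_le_max hab le_rfl
  simp only [Psi]; linarith

lemma Psi_ge (hf : Continuous f) (x : ℝ) : 120 ≤ Psi f x := by
  have := Phi_ge_one hf (x + 3)
  have := le_max_right x 0
  simp only [Psi]; linarith

def cseq (f : ℝ → ℝ) : ℕ → ℝ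
  | 0 => 0
  | j + 1 => cseq f j + 1 / (1 + Psi f (cseq f j + 1))

def gap (f : ℝ → ℝ) (j : ℕ) : ℝ := 1 / (1 + Psi f (cseq f j + 1))

lemma cseq_succ (j : ℕ) : cseq f (j + 1) = cseq f j + gap f j := rfl

lemma cseq_zero : cseq f 0 = 0 := rfl

lemma gap_pos (hf : Continuous f) (j : ℕ) : 0 < gap f j := by
  have := Psi_ge hf (cseq f j + 1)
  exact div_pos one_pos (by linarith)

lemma gap_le (hf : Continuous f) (j : ℕ) : gap f j ≤ 1/2 := by
  have := Psi_ge hf (cseq f j + 1)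
  rw [gap, div_le_div_iff₀ (by linarith) (by norm_num)]
  linarith

lemma cseq_mono (hf : Continuous f) : Monotone (cseq f) := by
  apply monotone_nat_of_le_succ
  intro j
  rw [cseq_succ]
  linarith [gap_pos hf j]

lemma cseq_nonneg (hf : Continuous f) (j : ℕ) : 0 ≤ cseq f j := by
  simpa [cseq] using cseq_mono hf (Nat.zero_le j)

lemma gap_anti (hf : Continuous f) : Antitone (gap f) := by
  intro a b hab
  rw [gap, gap]
  apply one_div_le_one_div_of_le
  · linarith [Psi_ge hf (cseq f a + 1)]
  · have := Psi_mono hf (show cseq f a + 1 ≤ cseq f b + 1 by linarith [cseq_mono hf hab])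
    linarith

lemma cseq_add_le (hf : Continuous f) (j n : ℕ) :
    cseq f (j + n) ≤ cseq f j + n * gap f j := by
  induction n with
  | zero => simp
  | succ n ih =>
    have h1 : cseq f (j + (n+1)) = cseq f (j + n) + gap f (j + n) := cseq_succ _
    have hg : gap f (j + n) ≤ gap f j := gap_anti hf (Nat.le_add_right j n)
    rw [h1]
    push_cast
    push_cast at ih
    linarith

lemma cseq_unbounded (hf : Continuous f) (x : ℝ) : ∃ j, x < cseq f j := by
  by_contra h
  push_neg at h
  have hinc : ∀ j, 1 / (1 + Psi f (x + 1)) ≤ gap f j := by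
    intro j
    apply one_div_le_one_div_of_le
    · linarith [Psi_ge hf (cseq f j + 1)]
    · have := Psi_mono hf (show cseq f j + 1 ≤ x + 1 by linarith [h j])
      linarith
  have hlin : ∀ j : ℕ, (j : ℝ) * (1 / (1 + Psi f (x + 1))) ≤ cseq f j := by
    intro j
    induction j with
    | zero => simp [cseq]
    | succ j ih =>
      rw [cseq_succ]
      push_cast
      have := hinc j
      linarith
  obtain ⟨n, hn⟩ := exists_nat_gt ((x+1) * (1 + Psi f (x + 1)))
  have hpos : (0:ℝ) < 1 + Psi f (x+1) := by linarith [Psi_ge hf (x+1)]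
  have h2 := hlin n
  have hx : x + 1 ≤ (n:ℝ) * (1 / (1 + Psi f (x+1))) := by
    rw [mul_one_div, le_div_iff₀ hpos]
    nlinarith
  linarith [h n]

def rho (f : ℝ → ℝ) (j : ℕ) (s : ℝ) : ℝ :=
  Real.smoothTransition ((s - cseq f j) / gap f j)

lemma rho_nonneg (j : ℕ) (s : ℝ) : 0 ≤ rho f j s := Real.smoothTransition.nonneg _
lemma rho_le_one (j : ℕ) (s : ℝ) : rho f j s ≤ 1 := Real.smoothTransition.le_one _

lemma rho_zero (hf : Continuous f) {j : ℕ} {s : ℝ} (h : s ≤ cseq f j) : rho f j s = 0 :=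
  Real.smoothTransition.zero_of_nonpos
    (div_nonpos_of_nonpos_of_nonneg (by linarith) (gap_pos hf j).le)

lemma rho_one (hf : Continuous f) {j : ℕ} {s : ℝ} (h : cseq f (j+1) ≤ s) : rho f j s = 1 := by
  apply Real.smoothTransition.one_of_one_le
  rw [le_div_iff₀ (gap_pos hf j)]
  have := cseq_succ (f := f) j
  linarith

lemma rho_pos (hf : Continuous f) {j : ℕ} {s : ℝ} (h : cseq f j < s) : 0 < rho f j s :=
  Real.smoothTransition.pos_of_pos (div_pos (by linarith) (gap_pos hf j))

lemma rho_smooth (hf : Continuous f) (j : ℕ) (n : ℕ) : ContDiff ℝ n (rho f j) := by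
  exact (Real.smoothTransition.contDiff (n := n)).comp
    (((contDiff_id.sub contDiff_const).div_const _))

def Happ (f : ℝ → ℝ) : ℕ → ℕ → ℝ → ℝ
  | 0 => fun _ _ => 1
  | k + 1 => fun j t => Real.exp (∫ s in (cseq f j)..t, rho f j s * Happ f k (j+1) s)

lemma intSmooth (g : ℝ → ℝ) (hg : ∀ n : ℕ, ContDiff ℝ n g) (a : ℝ) (n : ℕ) :
    ContDiff ℝ n (fun t => ∫ s in a..t, g s) := by
  have hd : ∀ t, HasDerivAt (fun u => ∫ s in a..u, g s) (g t) t := by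
    intro t
    exact intervalIntegral.integral_hasDerivAt_right
      ((hg 0).continuous.intervalIntegrable _ _)
      ((hg 0).continuous.stronglyMeasurableAtFilter _ _)
      (hg 0).continuous.continuousAt
  have hdiff : Differentiable ℝ (fun t => ∫ s in a..t, g s) := fun t => (hd t).differentiableAt
  induction n with
  | zero => norm_num; exact hdiff.continuous
  | succ n ih =>
    have : ContDiff ℝ ((n : WithTop ℕ∞) + 1) (fun t => ∫ s in a..t, g s) := by
      rw [contDiff_succ_iff_deriv]
      refine ⟨hdiff, by simp, ?_⟩
      have : deriv (fun t => ∫ s in a..t, g s) = g := funext fun t => (hd t).deriv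
      rw [this]; exact hg n
    exact_mod_cast this

lemma Happ_smooth (hf : Continuous f) (k : ℕ) : ∀ (j : ℕ) (n : ℕ), ContDiff ℝ n (Happ f k j) := by
  induction k with
  | zero => intro j n; exact contDiff_const
  | succ k ih =>
    intro j n
    have hg : ∀ m : ℕ, ContDiff ℝ m (fun s => rho f j s * Happ f k (j+1) s) :=
      fun m => (rho_smooth hf j m).mul (ih (j+1) m)
    exact (Real.contDiff_exp.of_le le_top).comp (intSmooth _ hg (cseq f j) n)

lemma Happ_cont (hf : Continuous f) (k j : ℕ) : Continuous (Happ f k j) :=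
  (Happ_smooth hf k j 0).continuous

lemma Happ_pos (hf : Continuous f) (k j : ℕ) (t : ℝ) : 0 < Happ f k j t := by
  cases k with
  | zero => norm_num [Happ]
  | succ k => exact Real.exp_pos _

/-- Stabilization -/
lemma Happ_stab (hf : Continuous f) :
    ∀ (k j : ℕ) (t : ℝ), t ≤ cseq f (j + k) → Happ f (k+1) j t = Happ f k j t := by
  intro k
  induction k with
  | zero =>
    intro j t ht
    have ht' : t ≤ cseq f j := by simpa using ht
    have hint : (∫ s in (cseq f j)..t, rho f j s * Happ f 0 (j+1) s) = 0 := by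
      have hcongr : EqOn (fun s => rho f j s * Happ f 0 (j+1) s) (fun _ => (0:ℝ))
          (uIcc (cseq f j) t) := by
        intro s hs
        have hs' : s ≤ cseq f j := le_trans hs.2 (le_of_eq (max_eq_left ht'))
        simp [rho_zero hf hs']
      rw [intervalIntegral.integral_congr hcongr]
      simp
    show Real.exp _ = (1:ℝ)
    rw [hint, Real.exp_zero]
  | succ k ih =>
    intro j t ht
    show Real.exp _ = Real.exp _
    congr 1
    apply intervalIntegral.integral_congr
    intro s hs
    have hs' : s ≤ cseq f ((j+1) + k) := by
      have h2 : s ≤ max (cseq f j) t := hs.2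
      have hc : cseq f j ≤ cseq f (j + (k+1)) := cseq_mono hf (Nat.le_add_right _ _)
      have h3 : max (cseq f j) t ≤ cseq f (j + (k+1)) := max_le hc ht
      have h4 : j + (k+1) = (j+1) + k := by omega
      rw [h4] at h3
      exact le_trans h2 h3
    show rho f j s * Happ f (k+1) (j+1) s = rho f j s * Happ f k (j+1) s
    rw [ih (j+1) s hs']

lemma Happ_stab' (hf : Continuous f) (k k' j : ℕ) (t : ℝ) (ht : t ≤ cseq f (j + k))
    (hkk : k ≤ k') : Happ f k' j t = Happ f k j t := by
  induction k' with
  | zero => interval_cases k; rfl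
  | succ k' ih =>
    rcases Nat.lt_or_ge k (k'+1) with h | h
    · have hk' : k ≤ k' := Nat.lt_succ_iff.mp h
      have h1 : t ≤ cseq f (j + k') := le_trans ht (cseq_mono hf (by omega))
      rw [Happ_stab hf k' j t h1, ih hk']
    · have : k = k' + 1 := le_antisymm hkk h
      subst this; rfl

def pick (f : ℝ → ℝ) (hf : Continuous f) (t : ℝ) : ℕ := (cseq_unbounded hf t).choose

lemma pick_spec (hf : Continuous f) (t : ℝ) : t < cseq f (pick f hf t) :=
  (cseq_unbounded hf t).choose_spec

def Ffun (f : ℝ → ℝ) (hf : Continuous f) (j : ℕ) (t : ℝ) : ℝ := Happ f (pick f hf t) j t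

lemma Ffun_eq (hf : Continuous f) {j k : ℕ} {t : ℝ} (h : t ≤ cseq f (j + k)) :
    Ffun f hf j t = Happ f k j t := by
  have hp : t ≤ cseq f (j + pick f hf t) :=
    le_trans (pick_spec hf t).le (cseq_mono hf (Nat.le_add_left _ _))
  rcases le_total k (pick f hf t) with hh | hh
  · exact Happ_stab' hf k (pick f hf t) j t h hh
  · exact (Happ_stab' hf (pick f hf t) k j t hp hh).symm


lemma Happ_def (k j : ℕ) (t : ℝ) :
    Happ f (k+1) j t = Real.exp (∫ s in (cseq f j)..t, rho f j s * Happ f k (j+1) s) := rfl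

-- === chunk 4 ===
lemma Ffun_smooth (hf : Continuous f) (j n : ℕ) : ContDiff ℝ n (Ffun f hf j) := by
  rw [contDiff_iff_contDiffAt]
  intro t
  set k := pick f hf (t+1) with hk
  have hck : t + 1 ≤ cseq f (j + k) :=
    le_trans (pick_spec hf (t+1)).le (cseq_mono hf (Nat.le_add_left _ _))
  have hev : Ffun f hf j =ᶠ[nhds t] Happ f k j := by
    have hmem : Iio (t+1) ∈ nhds t := Iio_mem_nhds (by linarith)
    filter_upwards [hmem] with s hs
    exact Ffun_eq hf (le_trans (le_of_lt hs) hck)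
  exact ((Happ_smooth hf k j n).contDiffAt).congr_of_eventuallyEq hev

lemma Ffun_cont (hf : Continuous f) (j : ℕ) : Continuous (Ffun f hf j) :=
  (Ffun_smooth hf j 0).continuous

/-- Key integral identity -/
lemma Ffun_key (hf : Continuous f) (j : ℕ) (t : ℝ) :
    Ffun f hf j t = Real.exp (∫ s in (cseq f j)..t, rho f j s * Ffun f hf (j+1) s) := by
  set M := max t (cseq f j) with hM
  set k := pick f hf M with hk
  have hck : M ≤ cseq f ((j+1) + k) :=
    le_trans (pick_spec hf M).le (cseq_mono hf (Nat.le_add_left _ _))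
  have h1 : t ≤ cseq f (j + (k+1)) := by
    have : cseq f ((j+1)+k) = cseq f (j + (k+1)) := by ring_nf
    rw [this] at hck
    exact le_trans (le_max_left _ _) hck
  rw [Ffun_eq hf h1, Happ_def]
  congr 1
  apply intervalIntegral.integral_congr
  intro s hs
  have hs' : s ≤ cseq f ((j+1) + k) := by
    have := hs.2
    have hmax : max (cseq f j) t ≤ M := by
      apply max_le (le_max_right _ _) (le_max_left _ _)
    exact le_trans this (le_trans hmax hck)
  show rho f j s * Happ f k (j+1) s = rho f j s * Ffun f hf (j+1) s
  rw [Ffun_eq hf hs']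

lemma Ffun_pos (hf : Continuous f) (j : ℕ) (t : ℝ) : 0 < Ffun f hf j t := by
  rw [Ffun_key hf j t]; exact Real.exp_pos _

lemma Ffun_intble (hf : Continuous f) (j : ℕ) (a b : ℝ) :
    IntervalIntegrable (fun s => rho f j s * Ffun f hf (j+1) s) MeasureTheory.volume a b := by
  apply Continuous.intervalIntegrable
  exact ((rho_smooth hf j 0).continuous).mul (Ffun_cont hf (j+1))

lemma Ffun_mult (hf : Continuous f) (j : ℕ) (a b : ℝ) :
    Ffun f hf j b = Ffun f hf j a * Real.exp (∫ s in a..b, rho f j s * Ffun f hf (j+1) s) := by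
  rw [Ffun_key hf j a, Ffun_key hf j b, ← Real.exp_add]
  congr 1
  rw [intervalIntegral.integral_add_adjacent_intervals (Ffun_intble hf j _ _) (Ffun_intble hf j _ _)]

lemma Ffun_mono (hf : Continuous f) (j : ℕ) {a b : ℝ} (hab : a ≤ b) :
    Ffun f hf j a ≤ Ffun f hf j b := by
  rw [Ffun_mult hf j a b]
  have hint : 0 ≤ ∫ s in a..b, rho f j s * Ffun f hf (j+1) s := by
    apply intervalIntegral.integral_nonneg hab
    intro s _
    exact mul_nonneg (rho_nonneg j s) (Ffun_pos hf (j+1) s).le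
  nlinarith [Ffun_pos hf j a, Real.one_le_exp hint]

lemma Ffun_one_of_le (hf : Continuous f) {j : ℕ} {t : ℝ} (h : t ≤ cseq f j) :
    Ffun f hf j t = 1 := by
  rw [Ffun_eq hf (k := 0) (by simpa using h)]
  rfl

lemma Ffun_ge_one (hf : Continuous f) (j : ℕ) (t : ℝ) : 1 ≤ Ffun f hf j t := by
  rcases le_total t (cseq f j) with h | h
  · rw [Ffun_one_of_le hf h]
  · rw [← Ffun_one_of_le hf (le_refl (cseq f j))]
    exact Ffun_mono hf j h

lemma Ffun_hasDeriv (hf : Continuous f) (j : ℕ) (t : ℝ) :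
    HasDerivAt (Ffun f hf j) (Ffun f hf j t * (rho f j t * Ffun f hf (j+1) t)) t := by
  have hg : Continuous (fun s => rho f j s * Ffun f hf (j+1) s) :=
    ((rho_smooth hf j 0).continuous).mul (Ffun_cont hf (j+1))
  have hG : HasDerivAt (fun u => ∫ s in (cseq f j)..u, rho f j s * Ffun f hf (j+1) s)
      (rho f j t * Ffun f hf (j+1) t) t :=
    intervalIntegral.integral_hasDerivAt_right (hg.intervalIntegrable _ _)
      (hg.stronglyMeasurableAtFilter _ _) hg.continuousAt
  have hE := hG.exp
  have hfun : (fun u => Real.exp (∫ s in (cseq f j)..u, rho f j s * Ffun f hf (j+1) s))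
      = Ffun f hf j := funext fun u => (Ffun_key hf j u).symm
  rw [hfun] at hE
  rw [← Ffun_key hf j t] at hE
  exact hE

lemma Ffun_deriv_eq (hf : Continuous f) {j : ℕ} {t : ℝ} (h : cseq f (j+1) ≤ t) :
    deriv (Ffun f hf j) t = Ffun f hf j t * Ffun f hf (j+1) t := by
  rw [(Ffun_hasDeriv hf j t).deriv, rho_one hf h, one_mul]

-- ===== ordering =====
lemma order_aux (hf : Continuous f) :
    ∀ (n j : ℕ) (s : ℝ), cseq f j < s → s ≤ cseq f (j + n) →
      Ffun f hf (j+1) s < Ffun f hf j s := by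
  intro n
  induction n with
  | zero => intro j s h1 h2; simp at h2; linarith
  | succ n ih =>
    intro j s h1 h2
    rw [Ffun_key hf j s, Ffun_key hf (j+1) s]
    apply Real.exp_lt_exp.2  -- check name
    rcases le_total s (cseq f (j+1)) with hc | hc
    · -- RHS integral = 0, LHS > 0
      have hB : (∫ u in (cseq f (j+1))..s, rho f (j+1) u * Ffun f hf (j+2) u) = 0 := by
        have hcongr : EqOn (fun u => rho f (j+1) u * Ffun f hf (j+2) u) (fun _ => (0:ℝ))
            (uIcc (cseq f (j+1)) s) := by
          intro u hu
          have hu' : u ≤ cseq f (j+1) := le_trans hu.2 (le_of_eq (max_eq_left hc))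
          simp [rho_zero hf hu']
        rw [intervalIntegral.integral_congr hcongr]
        simp
      have hA : 0 < ∫ u in (cseq f j)..s, rho f j u * Ffun f hf (j+1) u := by
        apply intervalIntegral.intervalIntegral_pos_of_pos_on (Ffun_intble hf j _ _) _ h1
        intro u hu
        exact mul_pos (rho_pos hf hu.1) (Ffun_pos hf (j+1) u)
      rw [show (j+1+1) = j+2 from rfl] at *
      linarith
    · -- split LHS at c_{j+1}
      have hsplit : (∫ u in (cseq f j)..s, rho f j u * Ffun f hf (j+1) u)
          = (∫ u in (cseq f j)..(cseq f (j+1)), rho f j u * Ffun f hf (j+1) u)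
            + ∫ u in (cseq f (j+1))..s, rho f j u * Ffun f hf (j+1) u := by
        rw [intervalIntegral.integral_add_adjacent_intervals (Ffun_intble hf j _ _)
          (Ffun_intble hf j _ _)]
      have hc1 : cseq f j < cseq f (j+1) := by
        have := gap_pos hf j; rw [cseq_succ]; linarith
      have hpos1 : 0 < ∫ u in (cseq f j)..(cseq f (j+1)), rho f j u * Ffun f hf (j+1) u := by
        apply intervalIntegral.intervalIntegral_pos_of_pos_on (Ffun_intble hf j _ _) _ hc1
        intro u hu
        exact mul_pos (rho_pos hf hu.1) (Ffun_pos hf (j+1) u)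
      have hmono2 : (∫ u in (cseq f (j+1))..s, rho f (j+1) u * Ffun f hf (j+1+1) u)
          ≤ ∫ u in (cseq f (j+1))..s, rho f j u * Ffun f hf (j+1) u := by
        apply intervalIntegral.integral_mono_on hc (Ffun_intble hf (j+1) _ _)
          (Ffun_intble hf j _ _)
        intro u hu
        have hu1 : cseq f (j+1) ≤ u := hu.1
        have hr1 : rho f j u = 1 := rho_one hf hu1
        have hF : Ffun f hf (j+1+1) u ≤ Ffun f hf (j+1) u := by
          rcases eq_or_lt_of_le hu1 with he | hlt
          · rw [Ffun_one_of_le hf (j := j+1+1) (by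
              rw [← he]
              exact cseq_mono hf (by omega))]
            exact Ffun_ge_one hf (j+1) u
          · have hu2 : u ≤ cseq f ((j+1) + n) := by
              have : j + (n+1) = (j+1) + n := by omega
              rw [← this]
              exact le_trans hu.2 h2
            exact (ih (j+1) u hlt hu2).le
        calc rho f (j+1) u * Ffun f hf (j+1+1) u
            ≤ 1 * Ffun f hf (j+1+1) u := by
              apply mul_le_mul_of_nonneg_right (rho_le_one _ _) (Ffun_pos hf _ _).le
          _ = Ffun f hf (j+1+1) u := one_mul _
          _ ≤ Ffun f hf (j+1) u := hF
          _ = rho f j u * Ffun f hf (j+1) u := by rw [hr1, one_mul]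
      rw [hsplit]
      linarith

lemma order_germ (hf : Continuous f) (j : ℕ) :
    ∀ᶠ s in atTop, Ffun f hf (j+1) s < Ffun f hf j s := by
  rw [eventually_atTop]
  refine ⟨cseq f j + 1, fun s hs => ?_⟩
  obtain ⟨i, hi⟩ := cseq_unbounded hf s
  have h2 : s ≤ cseq f (j + i) := le_trans hi.le (cseq_mono hf (Nat.le_add_left _ _))
  exact order_aux hf i j s (by linarith) h2

-- counting lemma
lemma cseq_count (hf : Continuous f) {t : ℝ} (ht : 3 ≤ t) {N : ℕ}
    (hN : (N:ℝ) ≤ (1 + Psi f (t-2))/2) : cseq f N ≤ t - 2 := by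
  classical
  have hex : ∃ j, t - 3 < cseq f j := cseq_unbounded hf (t-3)
  set j₀ := Nat.find hex with hj₀
  have hj0spec : t - 3 < cseq f j₀ := Nat.find_spec hex
  have hj₀pos : 0 < j₀ := by
    rcases Nat.eq_zero_or_pos j₀ with h | h
    · exfalso
      have := hj0spec
      rw [h, cseq_zero] at this
      linarith
    · exact h
  have hprev : cseq f (j₀ - 1) ≤ t - 3 := by
    by_contra hcon
    push_neg at hcon
    exact Nat.find_min hex (by omega) hcon
  have hcj₀ : cseq f j₀ ≤ t - 5/2 := by
    have : cseq f j₀ = cseq f (j₀ - 1) + gap f (j₀ - 1) := by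
      conv_lhs => rw [show j₀ = (j₀ - 1) + 1 by omega]
      exact cseq_succ _
    have := gap_le hf (j₀ - 1)
    linarith [this]
  -- gap bound at j₀
  have hgapj₀ : gap f j₀ ≤ 1 / (1 + Psi f (t - 2)) := by
    rw [gap]
    apply one_div_le_one_div_of_le
    · linarith [Psi_ge hf (t-2)]
    · have : t - 2 ≤ cseq f j₀ + 1 := by linarith
      linarith [Psi_mono hf this]
  rcases le_or_gt (N:ℝ) j₀ with hcase | hcase
  · -- N ≤ j₀ : cseq N ≤ cseq j₀ ≤ t - 5/2
    have : N ≤ j₀ := by exact_mod_cast hcase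
    linarith [cseq_mono hf this]
  · have hNj : j₀ ≤ N := by
      have : (j₀ : ℝ) < N := hcase
      exact_mod_cast this.le
    have h1 : cseq f N ≤ cseq f j₀ + (N - j₀ : ℕ) * gap f j₀ := by
      have := cseq_add_le hf j₀ (N - j₀)
      rwa [show j₀ + (N - j₀) = N by omega] at this
    have h2 : ((N - j₀ : ℕ) : ℝ) ≤ N := by
      have : (N - j₀ : ℕ) ≤ N := Nat.sub_le _ _
      exact_mod_cast this
    have hgappos : 0 < gap f j₀ := gap_pos hf j₀
    have h3 : ((N - j₀ : ℕ) : ℝ) * gap f j₀ ≤ (N:ℝ) * (1 / (1 + Psi f (t-2))) := by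
      apply mul_le_mul h2 hgapj₀ hgappos.le (by positivity)
    have hpsipos : (0:ℝ) < 1 + Psi f (t-2) := by linarith [Psi_ge hf (t-2)]
    have h4 : (N:ℝ) * (1 / (1 + Psi f (t-2))) ≤ 1/2 := by
      rw [mul_one_div, div_le_iff₀ hpsipos] at *
      nlinarith
    linarith

-- Wseq
def Wseq (d : ℝ) : ℕ → ℝ
  | 0 => 1
  | i + 1 => Wseq d i * Real.exp (d * Wseq d i)

lemma Wseq_def0 {d : ℝ} : Wseq d 0 = 1 := rfl

lemma Wseq_defS {d : ℝ} (i : ℕ) : Wseq d (i+1) = Wseq d i * Real.exp (d * Wseq d i) := rfl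

lemma Wseq_ge_one {d : ℝ} (hd : 0 ≤ d) (i : ℕ) : 1 ≤ Wseq d i := by
  induction i with
  | zero => norm_num [Wseq]
  | succ i ih =>
    have h1 : (1:ℝ) ≤ Real.exp (d * Wseq d i) :=
      Real.one_le_exp (mul_nonneg hd (by linarith))
    show 1 ≤ Wseq d i * Real.exp (d * Wseq d i)
    nlinarith

lemma Wseq_final {B : ℝ} (hB : 2 ≤ B) : 2*B ≤ Wseq (1/(4*B)) (Nat.ceil (6*B)) := by
  set d : ℝ := 1/(4*B) with hd
  have hdpos : 0 < d := by positivity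
  set K := Nat.ceil (6*B) with hK
  have main : ∀ i : ℕ, 2*B ≤ Wseq d i ∨ 1/(Wseq d i) ≤ 1 - (2/3)*i*d := by
    intro i
    induction i with
    | zero => right; norm_num [Wseq]
    | succ i ih =>
      have hW1 : 1 ≤ Wseq d i := Wseq_ge_one hdpos.le i
      rcases le_or_gt (2*B) (Wseq d i) with hbig | hsmall
      · left
        have : (1:ℝ) ≤ Real.exp (d * Wseq d i) :=
          Real.one_le_exp (mul_nonneg hdpos.le (by linarith))
        show 2*B ≤ Wseq d i * Real.exp (d * Wseq d i)
        nlinarith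
      · rcases ih with hbig | hih
        · linarith
        · right
          set x := d * Wseq d i with hx
          have hx0 : 0 < x := mul_pos hdpos (by linarith)
          have hxhalf : x ≤ 1/2 := by
            rw [hx, hd]
            rw [div_mul_eq_mul_div, div_le_div_iff₀ (by linarith) (by norm_num)]
            nlinarith
          have hexp : Real.exp (-x) ≤ 1/(1+x) := by
            rw [le_div_iff₀ (by linarith)]
            have h1 := Real.add_one_le_exp x
            have h2 : Real.exp (-x) * Real.exp x = 1 := by
              rw [← Real.exp_add]; norm_num
            have h3 : 0 < Real.exp (-x) := Real.exp_pos _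
            nlinarith
          have hWpos : 0 < Wseq d i := by linarith
          have hEpos : 0 < Real.exp (d * Wseq d i) := Real.exp_pos _
          have key : 1/(Wseq d i * Real.exp x) ≤ 1/(Wseq d i) - (2/3)*d := by
            have h5 : 1/(Wseq d i * Real.exp x) = (1/Wseq d i) * Real.exp (-x) := by
              rw [Real.exp_neg]
              field_simp
            rw [h5]
            have h6 : (1/Wseq d i) * Real.exp (-x) ≤ (1/Wseq d i) * (1/(1+x)) := by
              apply mul_le_mul_of_nonneg_left hexp (by positivity)
            have h7 : (1/Wseq d i) * (1/(1+x)) ≤ 1/Wseq d i - (2/3)*d := by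
              rw [div_mul_div_comm, one_mul, div_le_iff₀ (by nlinarith)]
              have expand : (1/Wseq d i - (2/3)*d) * (Wseq d i * (1+x))
                  = (1 + x) - (2/3)*d*Wseq d i*(1+x) := by
                field_simp
              rw [expand, hx]
              nlinarith
            linarith
          have hfin : 1/(Wseq d i * Real.exp x) ≤ 1 - (2/3)*(i+1)*d := by linarith
          have hstep : Wseq d (i+1) = Wseq d i * Real.exp (d * Wseq d i) := rfl
          rw [hstep, ← hx]
          push_cast
          linarith [hfin]
  rcases main K with h | h
  · exact h
  · exfalso
    have hKge : (6*B : ℝ) ≤ K := Nat.le_ceil _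
    have hWpos : 0 < Wseq d K := by linarith [Wseq_ge_one hdpos.le K]
    have hB0 : (0:ℝ) < B := by linarith
    have heq : (2/3)*(K:ℝ)*d = (K:ℝ)/(6*B) := by
      rw [hd]; field_simp; ring
    have hge1 : 1 ≤ (2/3)*(K:ℝ)*d := by
      rw [heq, le_div_iff₀ (by linarith)]; linarith
    have h1W : 0 < 1/(Wseq d K) := by positivity
    linarith
/-- Phase B climb -/
lemma climb (hf : Continuous f) (m : ℕ) {t : ℝ} {d : ℝ} (hd : 0 < d) (K : ℕ)
    (hc : cseq f (m + K) ≤ t - 2) :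
    ∀ i : ℕ, i ≤ K → ∀ j : ℕ, m ≤ j → j + i ≤ m + K →
      Wseq d i ≤ Ffun f hf j (t - 2 + i * d) := by
  intro i
  induction i with
  | zero =>
    intro _ j _ _
    rw [Wseq_def0]
    push_cast
    simpa using Ffun_ge_one hf j (t - 2 + 0)
  | succ i ih =>
    intro hiK j hmj hjiK
    have hiK' : i ≤ K := by omega
    have hWi : 1 ≤ Wseq d i := Wseq_ge_one hd.le i
    set τ := t - 2 + i * d with hτ
    have hIH : Wseq d i ≤ Ffun f hf j τ := ih hiK' j hmj (by omega)
    have hIH1 : Wseq d i ≤ Ffun f hf (j+1) τ := ih hiK' (j+1) (by omega) (by omega)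
    have hcj1 : cseq f (j+1) ≤ t - 2 := le_trans (cseq_mono hf (by omega : j+1 ≤ m + K)) hc
    have hττd : τ ≤ τ + d := by linarith
    have hint : d * Wseq d i ≤ ∫ s in τ..(τ + d), rho f j s * Ffun f hf (j+1) s := by
      have hconst : (∫ s in τ..(τ+d), (Wseq d i : ℝ)) = d * Wseq d i := by
        rw [intervalIntegral.integral_const, smul_eq_mul]
        ring_nf
      rw [← hconst]
      apply intervalIntegral.integral_mono_on hττd
        (intervalIntegrable_const) (Ffun_intble hf j _ _)
      intro u hu
      have hu1 : τ ≤ u := hu.1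
      have hρ : rho f j u = 1 := by
        apply rho_one hf
        have hτt2 : t - 2 ≤ τ := by
          have : 0 ≤ (i:ℝ) * d := by positivity
          linarith
        linarith [hu.1]
      rw [hρ, one_mul]
      calc (Wseq d i : ℝ) ≤ Ffun f hf (j+1) τ := hIH1
        _ ≤ Ffun f hf (j+1) u := Ffun_mono hf (j+1) hu1
    have hmult := Ffun_mult hf j τ (τ + d)
    have hFpos : 0 < Ffun f hf j τ := Ffun_pos hf j τ
    have hexp : Real.exp (d * Wseq d i)
        ≤ Real.exp (∫ s in τ..(τ+d), rho f j s * Ffun f hf (j+1) s) :=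
      Real.exp_le_exp.2 hint
    have : Wseq d i * Real.exp (d * Wseq d i) ≤ Ffun f hf j (τ + d) := by
      rw [hmult]
      have h1 : 0 < Real.exp (d * Wseq d i) := Real.exp_pos _
      nlinarith
    rw [Wseq_defS]
    have harg : τ + d = t - 2 + (↑(i+1)) * d := by push_cast; ring
    rwa [harg] at this

/-- main domination -/
lemma beats (hf : Continuous f) (m : ℕ) : ∀ᶠ t in atTop, f t < Ffun f hf m t := by
  rw [eventually_atTop]
  refine ⟨max 3 (2*(m:ℝ) + 100), fun t ht => ?_⟩
  have ht3 : 3 ≤ t := le_trans (le_max_left _ _) ht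
  have htm : 2*(m:ℝ) + 100 ≤ t := le_trans (le_max_right _ _) ht
  set B := Phi f t + 1 with hB
  have hPhi1 : 1 ≤ Phi f t := Phi_ge_one hf t
  have hB2 : 2 ≤ B := by linarith
  have hB0 : 0 < B := by linarith
  set K := Nat.ceil (6*B) with hK
  set d : ℝ := 1/(4*B) with hd
  have hdpos : 0 < d := by positivity
  -- counting condition
  have hcount : cseq f (m + K) ≤ t - 2 := by
    apply cseq_count hf ht3
    have hKle : (K:ℝ) ≤ 6*B + 1 := by
      have := Nat.ceil_lt_add_one (by positivity : (0:ℝ) ≤ 6*B)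
      linarith
    have hmax : max (t-2) 0 = t - 2 := max_eq_left (by linarith)
    have hPmono : Phi f t ≤ Phi f (t - 2 + 3) := Phi_mono hf (by linarith)
    rw [Psi, hmax]
    push_cast
    nlinarith [hPmono]
  have hclimb := climb hf m hdpos K hcount K le_rfl m le_rfl (by omega)
  have hW := Wseq_final hB2
  rw [← hK, ← hd] at hW
  have hKd : (K:ℝ)*d ≤ 2 := by
    have hKle : (K:ℝ) ≤ 6*B + 1 := by
      have := Nat.ceil_lt_add_one (by positivity : (0:ℝ) ≤ 6*B)
      linarith
    rw [hd]
    rw [mul_one_div, div_le_iff₀ (by linarith)]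
    nlinarith
  have hmono : Ffun f hf m (t - 2 + K*d) ≤ Ffun f hf m t :=
    Ffun_mono hf m (by linarith)
  have habs : |f t| + 1 ≤ Phi f t := Phi_ge_abs hf (by linarith)
  have : f t ≤ |f t| := le_abs_self _
  nlinarith [hclimb, hW, hmono]


end St4

/-- For every germ `φ` of a continuous real function there is an overhardian
`y ∈ 𝒞^∞` such that `φ <ₑ y⟨m⟩` for all `m`. -/
theorem statement4 (φ : RGerm) (hφ : ContinuousGerm φ) :
    ∃ y : RGerm, SmoothGerm y ∧
      ∃ z : ℕ → RGerm, IsLogDerivSeq y z ∧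
        (∀ i, germLT 0 (z i) ∧ germLT (z (i + 1)) (z i)) ∧
        (∀ m, germLT φ (z m)) := by
  obtain ⟨fF, hfc, hφeq⟩ := hφ
  set F : ℕ → ℝ → ℝ := St4.Ffun fF hfc with hF
  refine ⟨(↑(F 0) : RGerm), ⟨F 0, fun n => St4.Ffun_smooth hfc 0 n, rfl⟩,
    fun i => (↑(F i) : RGerm), ⟨rfl, fun i => ?_⟩, fun i => ⟨?_, ?_⟩, fun m => ?_⟩
  · refine ⟨↑(deriv (F i)), ⟨F i, rfl,
      Eventually.of_forall (fun t => (St4.Ffun_hasDeriv hfc i t).differentiableAt), rfl⟩, ?_⟩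
    rw [← Filter.Germ.coe_mul]
    apply Filter.Germ.coe_eq.mpr
    rw [Filter.eventuallyEq_iff_exists_mem]
    refine ⟨Ici (St4.cseq fF (i+1)), Ici_mem_atTop _, fun t ht => ?_⟩
    show F i t * F (i+1) t = deriv (F i) t
    rw [St4.Ffun_deriv_eq hfc ht]
  · show germLT 0 (↑(F i) : RGerm)
    unfold germLT
    rw [← Filter.Germ.coe_zero, Filter.Germ.liftRel_coe]
    exact Eventually.of_forall (fun t => St4.Ffun_pos hfc i t)
  · show germLT (↑(F (i+1)) : RGerm) (↑(F i) : RGerm)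
    unfold germLT
    rw [Filter.Germ.liftRel_coe]
    exact St4.order_germ hfc i
  · show germLT φ (↑(F m) : RGerm)
    unfold germLT
    rw [hφeq, Filter.Germ.liftRel_coe]
    exact St4.beats hfc m

end
end

section
/- Let S be a linearly ordered set of cardinality strictly less than 𝔠 = 2^{ℵ₀}. Then S has a countable gap: there exist countable subsets P, Q of S with P < Q (every element of P less than every element of Q; P or Q may be empty) such that no s ∈ S satisfies P < s < Q. -/
/-- Auxiliary recursive construction: given a "filler" function `f` on pairs of sets and an
enumeration `q` of the rationals, build a sequence in `S` mimicking the order of `q`. -/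
noncomputable def buildA {S : Type*} [Nonempty S] (f : Set S → Set S → S) (q : ℕ → ℚ) : ℕ → S
  | n => f {x | ∃ k, ∃ _ : k < n, buildA f q k = x ∧ q k < q n}
           {x | ∃ k, ∃ _ : k < n, buildA f q k = x ∧ q n < q k}

theorem buildA_eq {S : Type*} [Nonempty S] (f : Set S → Set S → S) (q : ℕ → ℚ) (n : ℕ) :
    buildA f q n = f {x | ∃ k, ∃ _ : k < n, buildA f q k = x ∧ q k < q n}
           {x | ∃ k, ∃ _ : k < n, buildA f q k = x ∧ q n < q k} := by
  rw [buildA]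

set_option maxHeartbeats 1000000 in
/-- A linearly ordered set of cardinality less than the continuum has a
countable gap: countable subsets `P < Q` such that no `s` satisfies `P < s < Q`. -/
theorem statement10 {S : Type*} [LinearOrder S] (hS : Cardinal.mk S < Cardinal.continuum) :
    ∃ P Q : Set S, P.Countable ∧ Q.Countable ∧ (∀ p ∈ P, ∀ q ∈ Q, p < q) ∧
      ¬ ∃ s : S, (∀ p ∈ P, p < s) ∧ (∀ q ∈ Q, s < q) := by
  by_contra hgap
  push_neg at hgap
  -- hgap : every countable "pre-gap" has a filler
  have hne : Nonempty S := by
    obtain ⟨s, -⟩ := hgap ∅ ∅ Set.countable_empty Set.countable_empty (by simp)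
    exact ⟨s⟩
  classical
  -- the filler function
  set f : Set S → Set S → S := fun P Q =>
    if h : P.Countable ∧ Q.Countable ∧ ∀ p ∈ P, ∀ q ∈ Q, p < q then
      (hgap P Q h.1 h.2.1 h.2.2).choose
    else Classical.arbitrary S with hfdef
  have hf : ∀ P Q : Set S, P.Countable → Q.Countable → (∀ p ∈ P, ∀ q ∈ Q, p < q) →
      (∀ p ∈ P, p < f P Q) ∧ (∀ q ∈ Q, f P Q < q) := by
    intro P Q h1 h2 h3
    have h : P.Countable ∧ Q.Countable ∧ ∀ p ∈ P, ∀ q ∈ Q, p < q := ⟨h1, h2, h3⟩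
    simp only [hfdef, dif_pos h]
    exact (hgap P Q h.1 h.2.1 h.2.2).choose_spec
  -- enumeration of the rationals
  set q : ℕ → ℚ := fun n => Denumerable.ofNat ℚ n with hqdef
  have hqsurj : Function.Surjective q := fun r =>
    ⟨@Encodable.encode ℚ Denumerable.toEncodable r, by simp only [hqdef]; exact Denumerable.ofNat_encode r⟩
  set a : ℕ → S := buildA f q with hadef
  -- the sequence `a` is order-isomorphic to `q`
  have amono : ∀ n, ∀ k k', k < n → k' < n → q k < q k' → a k < a k' := by
    intro n
    induction n with
    | zero => intro k k' hk; omega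
    | succ n ih =>
      -- the key application of `hf` at stage `n`
      have key : (∀ p ∈ {x | ∃ k, ∃ _ : k < n, buildA f q k = x ∧ q k < q n}, p < a n) ∧
          (∀ r ∈ {x | ∃ k, ∃ _ : k < n, buildA f q k = x ∧ q n < q k}, a n < r) := by
        have hP : {x | ∃ k, ∃ _ : k < n, buildA f q k = x ∧ q k < q n} =
            (buildA f q) '' {k | k < n ∧ q k < q n} := by
          ext x
          simp only [Set.mem_setOf_eq, Set.mem_image]
          constructor
          · rintro ⟨k, hk, hx, hq⟩; exact ⟨k, ⟨hk, hq⟩, hx⟩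
          · rintro ⟨k, ⟨hk, hq⟩, hx⟩; exact ⟨k, hk, hx, hq⟩
        have hQ : {x | ∃ k, ∃ _ : k < n, buildA f q k = x ∧ q n < q k} =
            (buildA f q) '' {k | k < n ∧ q n < q k} := by
          ext x
          simp only [Set.mem_setOf_eq, Set.mem_image]
          constructor
          · rintro ⟨k, hk, hx, hq⟩; exact ⟨k, ⟨hk, hq⟩, hx⟩
          · rintro ⟨k, ⟨hk, hq⟩, hx⟩; exact ⟨k, hk, hx, hq⟩
        have hc1 : ({x | ∃ k, ∃ _ : k < n, buildA f q k = x ∧ q k < q n} : Set S).Countable := by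
          rw [hP]; exact (Set.to_countable _).image _
        have hc2 : ({x | ∃ k, ∃ _ : k < n, buildA f q k = x ∧ q n < q k} : Set S).Countable := by
          rw [hQ]; exact (Set.to_countable _).image _
        have hord : ∀ p ∈ {x | ∃ k, ∃ _ : k < n, buildA f q k = x ∧ q k < q n},
            ∀ r ∈ {x | ∃ k, ∃ _ : k < n, buildA f q k = x ∧ q n < q k}, p < r := by
          rintro p ⟨i, hi, hpi, hqi⟩ r ⟨j, hj, hrj, hqj⟩
          rw [← hpi, ← hrj]
          exact ih i j hi hj (lt_trans hqi hqj)
        have := hf _ _ hc1 hc2 hord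
        rw [hadef, buildA_eq]
        exact this
      intro k k' hk hk' hlt
      rcases Nat.lt_succ_iff_lt_or_eq.mp hk with hk | hk
      · rcases Nat.lt_succ_iff_lt_or_eq.mp hk' with hk' | hk'
        · exact ih k k' hk hk' hlt
        · subst hk'
          exact key.1 (a k) ⟨k, hk, rfl, hlt⟩
      · subst hk
        rcases Nat.lt_succ_iff_lt_or_eq.mp hk' with hk' | hk'
        · exact key.2 (a k') ⟨k', hk', rfl, hlt⟩
        · subst hk'; exact absurd hlt (lt_irrefl _)
  have amono' : ∀ k k', q k < q k' → a k < a k' := fun k k' h =>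
    amono (max k k' + 1) k k' (by omega) (by omega) h
  -- now embed the reals
  set s : ℝ → S := fun y =>
    f (a '' {k | (q k : ℝ) < y}) (a '' {k | y < (q k : ℝ)}) with hsdef
  have hs : StrictMono s := by
    intro y y' hyy'
    obtain ⟨r, hr1, hr2⟩ := exists_rat_btwn hyy'
    obtain ⟨k, hk⟩ := hqsurj r
    have sep : ∀ (z : ℝ), (∀ p ∈ a '' {k | (q k : ℝ) < z}, p < s z) ∧
        (∀ r' ∈ a '' {k | z < (q k : ℝ)}, s z < r') := by
      intro z
      apply hf
      · exact (Set.to_countable _).image _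
      · exact (Set.to_countable _).image _
      · rintro p ⟨i, hi, rfl⟩ r' ⟨j, hj, rfl⟩
        apply amono'
        have : (q i : ℝ) < (q j : ℝ) := lt_trans hi hj
        exact_mod_cast this
    have h1 : s y < a k := (sep y).2 (a k) ⟨k, by simp [hk, hr1], rfl⟩
    have h2 : a k < s y' := (sep y').1 (a k) ⟨k, by simp [hk, hr2], rfl⟩
    exact lt_trans h1 h2
  have hinj : Function.Injective (fun y : ULift ℝ => s y.down) := by
    intro y y' h
    exact ULift.down_injective (hs.injective h)
  have : Cardinal.continuum ≤ Cardinal.mk S := by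
    calc Cardinal.continuum = Cardinal.mk (ULift ℝ) := by
          rw [Cardinal.mk_uLift, Cardinal.mk_real, Cardinal.lift_continuum]
      _ ≤ Cardinal.mk S := Cardinal.mk_le_of_injective hinj
  exact absurd hS (not_lt.mpr this)
end

section
/- Let a ∈ ℝ and let θ: [a,∞) → ℝ be continuous with θ(t) > 0 for all t ≥ a. Then there exists a decreasing C^∞ function ζ: [a,∞) → ℝ such that 0 < ζ(t) < θ(t) and ζ'(t) > −1 for all t ≥ a. -/
open Set Filter MeasureTheory Metric

set_option maxHeartbeats 1000000 in
/-- For any continuous `θ : [a,∞) → ℝ^{>0}` there is a decreasing `C^∞`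
function `ζ : [a,∞) → ℝ` with `0 < ζ(t) < θ(t)` and `ζ'(t) > −1` for all `t ≥ a`. -/
theorem statement11 (a : ℝ) (θ : ℝ → ℝ) (hθc : ContinuousOn θ (Set.Ici a))
    (hθpos : ∀ t ∈ Set.Ici a, 0 < θ t) :
    ∃ ζ : ℝ → ℝ, (∀ n : ℕ, ContDiff ℝ n ζ) ∧ AntitoneOn ζ (Set.Ici a) ∧
      ∀ t ∈ Set.Ici a, 0 < ζ t ∧ ζ t < θ t ∧ -1 < deriv ζ t := by
  classical
  set u : ℝ → ℝ := fun t => min (θ t) 1 / 2 with hu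
  have huc : ContinuousOn u (Ici a) := (continuous_min.comp_continuousOn (hθc.prodMk continuousOn_const)).div_const (2 : ℝ)
  have hupos : ∀ t ∈ Ici a, 0 < u t := fun t ht => by
    have := hθpos t ht
    have : 0 < min (θ t) 1 := lt_min this one_pos
    simpa [hu] using half_pos this
  have hult : ∀ t ∈ Ici a, u t < θ t := fun t ht => by
    have h1 := hθpos t ht
    have h2 : min (θ t) 1 ≤ θ t := min_le_left _ _
    simp only [hu]
    linarith
  -- the set used to define `g`
  set S : ℝ → Set ℝ := fun t => (fun r => u r + max (r - t) 0 / 2) '' Ici a with hS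
  have hne : ∀ t, (S t).Nonempty := fun t => ⟨_, mem_image_of_mem _ (self_mem_Ici (a := a))⟩
  have hbdd : ∀ t, BddBelow (S t) := by
    intro t
    refine ⟨0, ?_⟩
    rintro b ⟨r, hr, rfl⟩
    have h1 : 0 ≤ u r := (hupos r hr).le
    have h2 : 0 ≤ max (r - t) 0 := le_max_right _ _
    positivity
  set g : ℝ → ℝ := fun t => sInf (S t) with hg
  have hg_le : ∀ t ∈ Ici a, g t ≤ u t := by
    intro t ht
    have : u t + max (t - t) 0 / 2 ∈ S t := mem_image_of_mem _ ht
    simpa using csInf_le (hbdd t) this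
  have hg_anti : Antitone g := by
    intro x y hxy
    refine le_csInf (hne x) ?_
    rintro b ⟨r, hr, rfl⟩
    have h1 : g y ≤ u r + max (r - y) 0 / 2 := csInf_le (hbdd y) (mem_image_of_mem _ hr)
    have h2 : max (r - y) 0 ≤ max (r - x) 0 :=
      max_le_max (by linarith) le_rfl
    linarith
  have hg_lip : ∀ x y : ℝ, |g x - g y| ≤ |x - y| / 2 := by
    have key : ∀ x y : ℝ, g x ≤ g y + |x - y| / 2 := by
      intro x y
      have : g x - |x - y| / 2 ≤ g y := by
        refine le_csInf (hne y) ?_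
        rintro b ⟨r, hr, rfl⟩
        have h1 : g x ≤ u r + max (r - x) 0 / 2 := csInf_le (hbdd x) (mem_image_of_mem _ hr)
        have h2 : |max (r - x) 0 - max (r - y) 0| ≤ |(r - x) - (r - y)| :=
          abs_max_sub_max_le_abs _ _ _
        have h3 : (r - x) - (r - y) = y - x := by ring
        rw [h3] at h2
        have h4 : max (r - x) 0 - max (r - y) 0 ≤ |y - x| := (abs_le.1 h2).2
        have h5 : |y - x| = |x - y| := abs_sub_comm _ _
        linarith
      linarith
    intro x y
    have h1 := key x y
    have h2 := key y x
    rw [abs_sub_comm y x] at h2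
    rw [abs_le]
    constructor <;> linarith
  have hg_pos : ∀ t : ℝ, 0 < g t := by
    intro t
    set T : ℝ := max t a + 2 with hT
    have haT : a ≤ T := le_trans (le_max_right t a) (by linarith)
    obtain ⟨r₀, hr₀, hmin⟩ := isCompact_Icc.exists_isMinOn (α := ℝ) ⟨a, le_rfl, haT⟩
      (huc.mono (Icc_subset_Ici_self))
    have hε : 0 < u r₀ := hupos r₀ hr₀.1
    have hlb : min (u r₀) 1 ≤ g t := by
      refine le_csInf (hne t) ?_
      rintro b ⟨r, hr, rfl⟩
      by_cases hrT : r ≤ T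
      · have h1 : u r₀ ≤ u r := hmin ⟨hr, hrT⟩
        have h2 : 0 ≤ max (r - t) 0 := le_max_right _ _
        have := min_le_left (u r₀) 1
        linarith
      · push_neg at hrT
        have h1 : t + 2 ≤ T := by
          have := le_max_left t a
          linarith
        have h2 : (2 : ℝ) ≤ r - t := by linarith
        have h3 : (2 : ℝ) ≤ max (r - t) 0 := le_trans h2 (le_max_left _ _)
        have h4 : 0 ≤ u r := (hupos r hr).le
        have := min_le_right (u r₀) 1
        linarith
    exact lt_of_lt_of_le (lt_min hε one_pos) hlb
  have hg_cont : Continuous g := by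
    refine (LipschitzWith.of_dist_le_mul (K := 1/2) ?_).continuous
    intro x y
    have := hg_lip x y
    rw [Real.dist_eq, Real.dist_eq]
    push_cast
    linarith
  -- the bump function
  set φ : ContDiffBump (0 : ℝ) := ⟨1/2, 1, by norm_num, by norm_num⟩ with hφ
  set k : ℝ → ℝ := φ.normed volume with hk
  have hk_nonneg : ∀ s, 0 ≤ k s := φ.nonneg_normed
  have hk_int : ∫ s, k s = 1 := φ.integral_normed
  have hk_supp : ∀ s : ℝ, k s ≠ 0 → |s| < 1 := by
    intro s hs
    have : s ∈ Function.support k := hs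
    rw [hk, φ.support_normed_eq] at this
    simpa [Real.dist_eq, hφ] using mem_ball_iff_norm.1 this
  -- the mollified function
  set ζ : ℝ → ℝ := fun x => ∫ s, k s * g (x + 1 - s) with hζ
  have hInt : ∀ x : ℝ, Integrable (fun s => k s * g (x + 1 - s)) volume := by
    intro x
    refine Continuous.integrable_of_hasCompactSupport ?_ ?_
    · exact (φ.continuous_normed).mul (hg_cont.comp (by continuity))
    · exact (φ.hasCompactSupport_normed).mul_right
  have hIntc : ∀ c : ℝ, Integrable (fun s => k s * c) volume :=
    fun c => (φ.integrable_normed).mul_const c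
  have hIntc_val : ∀ c : ℝ, ∫ s, k s * c = c := by
    intro c
    rw [integral_mul_const, hk_int, one_mul]
  -- smoothness
  have hζ_smooth : ∀ n : ℕ, ContDiff ℝ n ζ := by
    intro n
    have h1 : ContDiff ℝ n (convolution k g (ContinuousLinearMap.lsmul ℝ ℝ) volume) :=
      HasCompactSupport.contDiff_convolution_left _ (φ.hasCompactSupport_normed)
        (φ.contDiff_normed) (hg_cont.locallyIntegrable)
    have h2 : ζ = fun x => (convolution k g (ContinuousLinearMap.lsmul ℝ ℝ) volume) (x + 1) := by
      funext x
      simp [hζ, convolution, ContinuousLinearMap.lsmul_apply, smul_eq_mul]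
    rw [h2]
    exact h1.comp (contDiff_id.add contDiff_const)
  -- ζ ≤ g
  have hζ_le : ∀ x : ℝ, ζ x ≤ g x := by
    intro x
    have hpt : ∀ s : ℝ, k s * g (x + 1 - s) ≤ k s * g x := by
      intro s
      by_cases hks : k s = 0
      · simp [hks]
      · have habs := hk_supp s hks
        have hs1 : s < 1 := (abs_lt.1 habs).2
        have : x ≤ x + 1 - s := by linarith
        exact mul_le_mul_of_nonneg_left (hg_anti this) (hk_nonneg s)
    calc ζ x ≤ ∫ s, k s * g x := integral_mono (hInt x) (hIntc (g x)) hpt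
      _ = g x := hIntc_val (g x)
  -- g (x+2) ≤ ζ
  have hζ_ge : ∀ x : ℝ, g (x + 2) ≤ ζ x := by
    intro x
    have hpt : ∀ s : ℝ, k s * g (x + 2) ≤ k s * g (x + 1 - s) := by
      intro s
      by_cases hks : k s = 0
      · simp [hks]
      · have habs := hk_supp s hks
        have hs1 : -1 < s := (abs_lt.1 habs).1
        have : x + 1 - s ≤ x + 2 := by linarith
        exact mul_le_mul_of_nonneg_left (hg_anti this) (hk_nonneg s)
    calc g (x + 2) = ∫ s, k s * g (x + 2) := (hIntc_val _).symm
      _ ≤ ζ x := integral_mono (hIntc _) (hInt x) hpt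
  have hζ_pos : ∀ x : ℝ, 0 < ζ x := fun x => lt_of_lt_of_le (hg_pos (x + 2)) (hζ_ge x)
  -- antitone
  have hζ_anti : Antitone ζ := by
    intro x y hxy
    refine integral_mono (hInt y) (hInt x) ?_
    intro s
    exact mul_le_mul_of_nonneg_left (hg_anti (by linarith : x + 1 - s ≤ y + 1 - s)) (hk_nonneg s)
  -- Lipschitz
  have hζ_lip : LipschitzWith (1/2 : NNReal) ζ := by
    refine LipschitzWith.of_dist_le_mul ?_
    intro x y
    rw [Real.dist_eq, Real.dist_eq]
    have h1 : ζ x - ζ y = ∫ s, (k s * g (x + 1 - s) - k s * g (y + 1 - s)) :=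
      (integral_sub (hInt x) (hInt y)).symm
    have h2 : |ζ x - ζ y| ≤ ∫ s, |k s * g (x + 1 - s) - k s * g (y + 1 - s)| := by
      rw [h1]
      simpa [Real.norm_eq_abs] using
        norm_integral_le_integral_norm (fun s => k s * g (x + 1 - s) - k s * g (y + 1 - s))
    have h3 : ∀ s : ℝ, |k s * g (x + 1 - s) - k s * g (y + 1 - s)| ≤ k s * (|x - y| / 2) := by
      intro s
      rw [← mul_sub, abs_mul, abs_of_nonneg (hk_nonneg s)]
      refine mul_le_mul_of_nonneg_left ?_ (hk_nonneg s)
      have := hg_lip (x + 1 - s) (y + 1 - s)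
      have heq : (x + 1 - s) - (y + 1 - s) = x - y := by ring
      rwa [heq] at this
    have h4 : (∫ s, |k s * g (x + 1 - s) - k s * g (y + 1 - s)|) ≤ ∫ s, k s * (|x - y| / 2) :=
      integral_mono ((hInt x).sub (hInt y)).abs (hIntc _) h3
    have h5 : (∫ s, k s * (|x - y| / 2)) = |x - y| / 2 := hIntc_val _
    push_cast
    linarith
  -- derivative bound
  have hζ_deriv : ∀ t : ℝ, -1 < deriv ζ t := by
    intro t
    have h1 : ‖deriv ζ t‖ ≤ ((1/2 : NNReal) : ℝ) := norm_deriv_le_of_lipschitz hζ_lip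
    rw [Real.norm_eq_abs] at h1
    have h2 := (abs_le.1 h1).1
    push_cast at h2
    linarith
  refine ⟨ζ, hζ_smooth, hζ_anti.antitoneOn _, fun t ht => ⟨hζ_pos t, ?_, hζ_deriv t⟩⟩
  exact lt_of_le_of_lt (le_trans (hζ_le t) (hg_le t ht)) (hult t ht)
end

section
/- Let a < b be real numbers, let φ, ζ: [a,b] → ℝ be of class C^∞ with φ(a) = ζ(a) and φ(t) < ζ(t) for all t with a < t ≤ b, and let (c_n) be a sequence of real numbers with φ(b) < c_0 < ζ(b). Then there exists a function θ: [a,b] → ℝ of class C^∞ such that θ^{(n)}(a) = φ^{(n)}(a) for all n, φ(t) < θ(t) < ζ(t) for all t with a < t ≤ b, and θ^{(n)}(b) = c_n for all n. -/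
open Set Filter

section helpers

lemma itd_add {n : ℕ} {f g : ℝ → ℝ} (hf : ContDiff ℝ n f) (hg : ContDiff ℝ n g) (x : ℝ) :
    iteratedDeriv n (fun y => f y + g y) x = iteratedDeriv n f x + iteratedDeriv n g x := by
  simp only [← iteratedDerivWithin_univ]
  exact iteratedDerivWithin_add (Set.mem_univ x) uniqueDiffOn_univ hf.contDiffWithinAt hg.contDiffWithinAt

lemma itd_mul_flat {f h : ℝ → ℝ} (hf : ∀ n : ℕ, ContDiff ℝ n f)
    (hh : ∀ n : ℕ, ContDiff ℝ n h) {x : ℝ} (hflat : ∀ n : ℕ, iteratedDeriv n h x = 0)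
    (n : ℕ) : iteratedDeriv n (fun y => h y * f y) x = 0 := by
  have h1 : ‖iteratedFDeriv ℝ n (fun y => h y * f y) x‖ ≤ 0 := by
    refine le_trans (norm_iteratedFDeriv_mul_le (N := (n:ℕ∞)) (hh n) (hf n) x le_rfl) ?_
    refine le_of_eq (Finset.sum_eq_zero fun i hi => ?_)
    have : ‖iteratedFDeriv ℝ i h x‖ = 0 := by
      rw [norm_iteratedFDeriv_eq_norm_iteratedDeriv, hflat i, norm_zero]
    rw [this]; ring
  have h2 : ‖iteratedDeriv n (fun y => h y * f y) x‖ = 0 :=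
    le_antisymm (by rwa [norm_iteratedFDeriv_eq_norm_iteratedDeriv] at h1) (norm_nonneg _)
  simpa using h2

lemma eNIG_flat (n : ℕ) : iteratedDeriv n expNegInvGlue 0 = 0 := by
  have key : ∀ n : ℕ, ∃ p : Polynomial ℝ,
      iteratedDeriv n expNegInvGlue = fun x => p.eval x⁻¹ * expNegInvGlue x := by
    intro n
    induction n with
    | zero => exact ⟨1, by ext x; simp⟩
    | succ n ih =>
      obtain ⟨p, hp⟩ := ih
      refine ⟨Polynomial.X ^ 2 * (p - Polynomial.derivative p), ?_⟩
      rw [iteratedDeriv_succ, hp]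
      ext x
      exact (expNegInvGlue.hasDerivAt_polynomial_eval_inv_mul p x).deriv
  obtain ⟨p, hp⟩ := key n
  rw [hp]
  simp [expNegInvGlue.zero]

lemma eNIG_lt_one (x : ℝ) : expNegInvGlue x < 1 := by
  by_cases hx : x ≤ 0
  · simp [expNegInvGlue.zero_of_nonpos hx]
  · have hx' : 0 < x := not_le.mp hx
    have : expNegInvGlue x = Real.exp (-x⁻¹) := by simp [expNegInvGlue, hx]
    rw [this, Real.exp_lt_one_iff]
    simp [inv_pos.mpr hx']

lemma convex_strict_between {w X Y D : ℝ} (hw0 : 0 ≤ w) (hw1 : w ≤ 1)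
    (hX0 : 0 < X) (hXD : X < D) (hY0 : 0 < Y) (hYD : Y < D) :
    0 < (1 - w) * X + w * Y ∧ (1 - w) * X + w * Y < D := by
  have hw1' : 0 ≤ 1 - w := by linarith
  constructor
  · have h3 : 0 < min X Y := lt_min hX0 hY0
    nlinarith [mul_le_mul_of_nonneg_left (min_le_left X Y) hw1',
      mul_le_mul_of_nonneg_left (min_le_right X Y) hw0]
  · have h4 : max X Y < D := max_lt hXD hYD
    nlinarith [mul_le_mul_of_nonneg_left (le_max_left X Y) hw1',
      mul_le_mul_of_nonneg_left (le_max_right X Y) hw0]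

end helpers

lemma itd_cmul {n : ℕ} (C : ℝ) {f : ℝ → ℝ} (hf : ContDiff ℝ n f) (x : ℝ) :
    iteratedDeriv n (fun y => C * f y) x = C * iteratedDeriv n f x := by
  simp only [← iteratedDerivWithin_univ]
  exact iteratedDerivWithin_const_mul (Set.mem_univ x) uniqueDiffOn_univ C hf.contDiffWithinAt

lemma itd_monomial (n k : ℕ) :
    iteratedDeriv k (fun x : ℝ => x ^ n) = fun x => (n.descFactorial k : ℝ) * x ^ (n - k) := by
  induction k with
  | zero => simp
  | succ k ih =>
    rw [iteratedDeriv_succ, ih]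
    ext x
    rw [deriv_const_mul _ (differentiable_pow _ |>.differentiableAt)]
    rw [deriv_pow_field]
    rw [Nat.descFactorial_succ]
    push_cast
    ring_nf
    rw [Nat.sub_sub]
    simp [Nat.add_comm]

/-- Borel's theorem at 0. -/
lemma borel_zero (c : ℕ → ℝ) : ∃ g : ℝ → ℝ, ContDiff ℝ (⊤ : ℕ∞) g ∧
    ∀ n : ℕ, iteratedDeriv n g 0 = c n := by
  classical
  set ψb : ContDiffBump (0 : ℝ) := ⟨1, 2, one_pos, one_lt_two⟩ with hψb
  set ψ : ℝ → ℝ := fun x => ψb x with hψ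
  have hψc : ContDiff ℝ (⊤ : ℕ∞) ψ := ψb.contDiff
  have hψcs : HasCompactSupport ψ := ψb.hasCompactSupport
  set G : ℕ → ℝ → ℝ := fun n u => (c n / n.factorial) * u ^ n * ψ u with hG
  have hGc : ∀ n, ContDiff ℝ (⊤ : ℕ∞) (G n) := fun n =>
    ((contDiff_const.mul (contDiff_id.pow n)).mul hψc)
  have hGcs : ∀ n, HasCompactSupport (G n) := fun n => HasCompactSupport.mul_left hψcs
  have hB : ∀ n k : ℕ, ∃ C : ℝ, 0 ≤ C ∧ ∀ x, ‖iteratedFDeriv ℝ k (G n) x‖ ≤ C := by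
    intro n k
    obtain ⟨C, hC⟩ := ((hGcs n).iteratedFDeriv k).exists_bound_of_continuous
      ((hGc n).continuous_iteratedFDeriv (mod_cast le_top))
    exact ⟨max C 0, le_max_right _ _, fun x => (hC x).trans (le_max_left _ _)⟩
  set B : ℕ → ℕ → ℝ := fun n k => (hB n k).choose with hB'
  have hBnonneg : ∀ n k, 0 ≤ B n k := fun n k => (hB n k).choose_spec.1
  have hBle : ∀ n k x, ‖iteratedFDeriv ℝ k (G n) x‖ ≤ B n k :=
    fun n k x => (hB n k).choose_spec.2 x
  set M : ℕ → ℝ := fun n => 1 + ∑ k ∈ Finset.range (n + 1), B n k with hM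
  have hM1 : ∀ n, 1 ≤ M n := by
    intro n
    have : 0 ≤ ∑ k ∈ Finset.range (n + 1), B n k :=
      Finset.sum_nonneg fun k _ => hBnonneg n k
    simp only [hM]; linarith
  have hMB : ∀ n k, k ≤ n → B n k ≤ M n := by
    intro n k hk
    have h1 : B n k ≤ ∑ j ∈ Finset.range (n + 1), B n j :=
      Finset.single_le_sum (fun j _ => hBnonneg n j) (Finset.mem_range.mpr (Nat.lt_succ_of_le hk))
    simp only [hM]; linarith
  set r : ℕ → ℝ := fun n => 2 ^ n * M n with hr
  have hr1 : ∀ n, 1 ≤ r n := by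
    intro n
    have h2 : (1:ℝ) ≤ 2 ^ n := one_le_pow₀ (by norm_num)
    calc (1:ℝ) = 1 * 1 := by ring
    _ ≤ 2 ^ n * M n := mul_le_mul h2 (hM1 n) zero_le_one (by positivity)
  have hrpos : ∀ n, 0 < r n := fun n => lt_of_lt_of_le one_pos (hr1 n)
  set f : ℕ → ℝ → ℝ := fun n x => (r n)⁻¹ ^ n * G n (r n * x) with hf'
  have hfc : ∀ n, ContDiff ℝ (⊤ : ℕ∞) (f n) :=
    fun n => contDiff_const.mul ((hGc n).comp (contDiff_const.mul contDiff_id))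
  -- iterated derivative formula
  have hGk : ∀ (n k : ℕ), ContDiff ℝ k (G n) := fun n k => (hGc n).of_le (mod_cast le_top)
  have hGscaled : ∀ (n k : ℕ), ContDiff ℝ k (fun x => G n (r n * x)) :=
    fun n k => (hGk n k).comp (contDiff_const.mul contDiff_id)
  have hitd : ∀ n k : ℕ, ∀ x : ℝ, iteratedDeriv k (f n) x
      = (r n)⁻¹ ^ n * ((r n) ^ k * iteratedDeriv k (G n) (r n * x)) := by
    intro n k x
    have h1 : iteratedDeriv k (fun x => G n (r n * x))
        = fun x => (r n) ^ k * iteratedDeriv k (G n) (r n * x) :=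
      iteratedDeriv_comp_const_mul (hGk n k) (r n)
    have h2 := itd_cmul (n := k) ((r n)⁻¹ ^ n) (hGscaled n k) x
    simp only [hf']
    rw [h2, h1]
  -- norm bound
  have hnorm : ∀ n k : ℕ, ∀ x : ℝ,
      ‖iteratedFDeriv ℝ k (f n) x‖ ≤ (r n)⁻¹ ^ n * (r n) ^ k * B n k := by
    intro n k x
    have h0a : (0:ℝ) ≤ (r n)⁻¹ ^ n := pow_nonneg (inv_nonneg.mpr (hrpos n).le) n
    have h0b : (0:ℝ) ≤ (r n) ^ k := pow_nonneg (hrpos n).le k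
    have hb := hBle n k (r n * x)
    rw [norm_iteratedFDeriv_eq_norm_iteratedDeriv] at hb
    rw [norm_iteratedFDeriv_eq_norm_iteratedDeriv, hitd n k x, norm_mul, norm_mul,
      Real.norm_of_nonneg h0a, Real.norm_of_nonneg h0b, ← mul_assoc]
    exact mul_le_mul_of_nonneg_left hb (mul_nonneg h0a h0b)
  -- decay for k < n
  have hdecay : ∀ n k : ℕ, k < n → (r n)⁻¹ ^ n * (r n) ^ k * B n k ≤ (1/2) ^ n := by
    intro n k hkn
    have hrp := hrpos n
    obtain ⟨m, hm⟩ : ∃ m, n = k + (m + 1) := ⟨n - k - 1, by omega⟩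
    set R := r n with hR
    have hRpos : 0 < R := hrpos n
    have hpow : R ^ n = R ^ k * R ^ (m + 1) := by rw [hm, pow_add]
    have h4 : R⁻¹ ^ n * R ^ k = (R ^ (m + 1))⁻¹ := by
      rw [inv_pow, hpow, mul_inv, mul_comm ((R ^ k)⁻¹) ((R ^ (m + 1))⁻¹), mul_assoc,
        inv_mul_cancel₀ (pow_ne_zero k hRpos.ne'), mul_one]
    rw [h4, inv_mul_eq_div]
    have h5 : R ≤ R ^ (m + 1) := le_self_pow₀ (hr1 n) (Nat.succ_ne_zero m)
    have h6 : B n k / R ^ (m + 1) ≤ B n k / R := by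
      gcongr
      exact hBnonneg n k
    refine h6.trans ?_
    rw [div_le_iff₀ hRpos]
    have h7 : (1/2:ℝ) ^ n * R = M n := by
      show (1/2:ℝ) ^ n * (2 ^ n * M n) = M n
      rw [← mul_assoc, ← mul_pow]
      norm_num
    rw [h7]
    exact hMB n k hkn.le
  -- summable bound
  set v : ℕ → ℕ → ℝ :=
    fun k n => if n ≤ k then (r n)⁻¹ ^ n * (r n) ^ k * B n k else (1/2) ^ n with hv'
  have hvb : ∀ (k n : ℕ) (x : ℝ), ‖iteratedFDeriv ℝ k (f n) x‖ ≤ v k n := by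
    intro k n x
    by_cases h : n ≤ k
    · simp only [hv', if_pos h]; exact hnorm n k x
    · simp only [hv', if_neg h]
      exact (hnorm n k x).trans (hdecay n k (by omega))
  have hvs : ∀ k : ℕ, Summable (v k) := by
    intro k
    rw [← summable_nat_add_iff (k + 1)]
    have he : (fun n => v k (n + (k + 1))) = fun n => (1/2:ℝ) ^ n * (1/2:ℝ) ^ (k + 1) := by
      funext n
      simp only [hv']
      rw [if_neg (by omega), pow_add]
    rw [he]
    exact (summable_geometric_of_lt_one (by norm_num) (by norm_num)).mul_right _
  refine ⟨fun x => ∑' m, f m x, ?_, ?_⟩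
  · exact contDiff_tsum (fun m => hfc m) (fun k _ => hvs k) (fun k m x _ => hvb k m x)
  intro n
  -- local form of f m near 0
  have hloc : ∀ m : ℕ, (f m) =ᶠ[nhds (0:ℝ)] fun x => (c m / m.factorial) * x ^ m := by
    intro m
    have hrm := hrpos m
    have hball : Metric.ball (0:ℝ) ((r m)⁻¹) ∈ nhds (0:ℝ) :=
      Metric.ball_mem_nhds _ (inv_pos.mpr hrm)
    filter_upwards [hball] with x hx
    rw [Metric.mem_ball, dist_zero_right, Real.norm_eq_abs] at hx
    have h1 : ψ (r m * x) = 1 := by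
      apply ψb.one_of_mem_closedBall
      rw [Metric.mem_closedBall, dist_zero_right, Real.norm_eq_abs, abs_mul,
        abs_of_pos hrm]
      show r m * |x| ≤ (1:ℝ)
      calc r m * |x| ≤ r m * (r m)⁻¹ := by
            exact mul_le_mul_of_nonneg_left hx.le hrm.le
      _ = 1 := mul_inv_cancel₀ hrm.ne'
    show (r m)⁻¹ ^ m * G m (r m * x) = c m / m.factorial * x ^ m
    show (r m)⁻¹ ^ m * (c m / m.factorial * (r m * x) ^ m * ψ (r m * x))
        = c m / m.factorial * x ^ m
    rw [h1, mul_one, mul_pow, inv_pow]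
    field_simp
  -- sum of iterated derivatives
  have heq0 : iteratedDeriv n (fun x => ∑' m, f m x) 0 = ∑' m, iteratedDeriv n (f m) 0 := by
    have hFD := iteratedFDeriv_tsum_apply (𝕜 := ℝ) (N := (⊤:ℕ∞)) (fun m => hfc m)
      (fun k _ => hvs k) (fun k m x _ => hvb k m x) (k := n) (by exact_mod_cast le_top) 0
    have hsum : Summable (fun m => iteratedFDeriv ℝ n (f m) 0) :=
      Summable.of_norm_bounded (hvs n) (fun m => hvb n m 0)
    calc iteratedDeriv n (fun x => ∑' m, f m x) 0
        = (iteratedFDeriv ℝ n (fun x => ∑' m, f m x) 0) (fun _ => 1) :=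
          iteratedDeriv_eq_iteratedFDeriv
      _ = (∑' m, iteratedFDeriv ℝ n (f m) 0) (fun _ => 1) := by rw [hFD]
      _ = ∑' m, (iteratedFDeriv ℝ n (f m) 0) (fun _ => 1) :=
          ((ContinuousMultilinearMap.apply ℝ (fun _ : Fin n => ℝ) ℝ)
            (fun _ => 1)).map_tsum hsum
      _ = ∑' m, iteratedDeriv n (f m) 0 := by
          exact tsum_congr fun m => (iteratedDeriv_eq_iteratedFDeriv).symm
  have hval : ∀ m : ℕ, iteratedDeriv n (f m) 0 = if m = n then c n else 0 := by
    intro m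
    have hpm : ContDiff ℝ n (fun x : ℝ => x ^ m) := contDiff_id.pow m
    rw [(hloc m).iteratedDeriv_eq n, itd_cmul (n := n) _ hpm 0, itd_monomial m n]
    by_cases hmn : m = n
    · subst hmn
      have hfac : (m.factorial : ℝ) ≠ 0 := Nat.cast_ne_zero.mpr m.factorial_ne_zero
      rw [if_pos rfl]
      simp only [Nat.descFactorial_self, Nat.sub_self, pow_zero, mul_one]
      field_simp
    · rw [if_neg hmn]
      rcases lt_or_gt_of_ne hmn with h | h
      · simp [Nat.descFactorial_eq_zero_iff_lt.mpr h]
      · simp [zero_pow (show m - n ≠ 0 by omega)]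
  rw [heq0, tsum_congr hval, tsum_eq_single n (fun m hm => if_neg hm), if_pos rfl]

/-- Borel's theorem at an arbitrary point. -/
lemma borel_at (b : ℝ) (c : ℕ → ℝ) : ∃ g : ℝ → ℝ, ContDiff ℝ (⊤ : ℕ∞) g ∧
    ∀ n : ℕ, iteratedDeriv n g b = c n := by
  obtain ⟨g0, hg0c, hg0⟩ := borel_zero c
  refine ⟨fun x => g0 (x + (-b)), hg0c.comp (contDiff_id.add contDiff_const), fun n => ?_⟩
  have h2 := congrFun (iteratedDeriv_comp_add_const n g0 (-b)) b
  rw [h2]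
  simpa using hg0 n

/-- Let `a < b`, let `φ, ζ` be `C^∞` with `φ(a) = ζ(a)` and `φ < ζ` on
`(a,b]`, and let `(c_n)` be reals with `φ(b) < c₀ < ζ(b)`. Then there is a `C^∞` function `θ`
with `θ^{(n)}(a) = φ^{(n)}(a)` for all `n`, `φ < θ < ζ` on `(a,b]`, and `θ^{(n)}(b) = c_n`
for all `n`. -/
theorem statement12 (a b : ℝ) (hab : a < b) (φ ζ : ℝ → ℝ)
    (hφ : ∀ n : ℕ, ContDiff ℝ n φ) (hζ : ∀ n : ℕ, ContDiff ℝ n ζ)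
    (heq : φ a = ζ a) (hlt : ∀ t ∈ Set.Ioc a b, φ t < ζ t)
    (c : ℕ → ℝ) (hc0l : φ b < c 0) (hc0r : c 0 < ζ b) :
    ∃ θ : ℝ → ℝ, (∀ n : ℕ, ContDiff ℝ n θ) ∧
      (∀ n : ℕ, iteratedDeriv n θ a = iteratedDeriv n φ a) ∧
      (∀ t ∈ Set.Ioc a b, φ t < θ t ∧ θ t < ζ t) ∧
      (∀ n : ℕ, iteratedDeriv n θ b = c n) := by
  have hφt : ContDiff ℝ (⊤ : ℕ∞) φ := contDiff_infty.mpr hφ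
  have hζt : ContDiff ℝ (⊤ : ℕ∞) ζ := contDiff_infty.mpr hζ
  obtain ⟨g, hgc, hgd⟩ := borel_at b c
  have hgb : g b = c 0 := by simpa using hgd 0
  set U : Set ℝ := {t | φ t < g t ∧ g t < ζ t} with hU'
  have hUopen : IsOpen U :=
    (isOpen_lt hφt.continuous hgc.continuous).inter (isOpen_lt hgc.continuous hζt.continuous)
  have hbU : b ∈ U := ⟨by rw [hgb]; exact hc0l, by rw [hgb]; exact hc0r⟩
  obtain ⟨ε, hε, hball⟩ := Metric.isOpen_iff.mp hUopen b hbU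
  set t0 : ℝ := max ((a + b) / 2) (b - ε / 2) with ht0'
  set t1 : ℝ := (t0 + b) / 2 with ht1'
  have hat0 : a < t0 := lt_of_lt_of_le (by linarith) (le_max_left _ _)
  have ht0b : t0 < b := max_lt (by linarith) (by linarith)
  have ht01 : t0 < t1 := by simp only [ht1']; linarith
  have ht1b : t1 < b := by simp only [ht1']; linarith
  have hsub : ∀ t, t0 ≤ t → t ≤ b → φ t < g t ∧ g t < ζ t := by
    intro t h1 h2
    apply hball
    rw [Metric.mem_ball, Real.dist_eq, abs_of_nonpos (by linarith)]
    have h3 : b - ε / 2 ≤ t0 := le_max_right _ _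
    linarith
  set χ : ℝ → ℝ := fun t => Real.smoothTransition ((t - t0) / (t1 - t0)) with hχ'
  have hχc : ContDiff ℝ (⊤ : ℕ∞) χ :=
    Real.smoothTransition.contDiff.comp ((contDiff_id.sub contDiff_const).div_const _)
  have hχ0 : ∀ t, t ≤ t0 → χ t = 0 := by
    intro t ht
    apply Real.smoothTransition.zero_of_nonpos
    apply div_nonpos_of_nonpos_of_nonneg <;> linarith
  have hχ1 : ∀ t, t1 ≤ t → χ t = 1 := by
    intro t ht
    apply Real.smoothTransition.one_of_one_le
    rw [le_div_iff₀ (by linarith)]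
    linarith
  have hχmem : ∀ t, 0 ≤ χ t ∧ χ t ≤ 1 :=
    fun t => ⟨Real.smoothTransition.nonneg _, Real.smoothTransition.le_one _⟩
  set h : ℝ → ℝ := fun t => expNegInvGlue (t - a) with hh'
  have hhc : ContDiff ℝ (⊤ : ℕ∞) h :=
    expNegInvGlue.contDiff.comp (contDiff_id.sub contDiff_const)
  have hhpos : ∀ t, a < t → 0 < h t := fun t ht => expNegInvGlue.pos_of_pos (by linarith)
  have hhlt1 : ∀ t, h t < 1 := fun t => eNIG_lt_one _
  have hhflat : ∀ n, iteratedDeriv n h a = 0 := by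
    intro n
    have he : h = fun t => expNegInvGlue (t + (-a)) := by
      funext t
      show expNegInvGlue (t - a) = expNegInvGlue (t + (-a))
      rw [sub_eq_add_neg]
    have h2 := congrFun (iteratedDeriv_comp_add_const n expNegInvGlue (-a)) a
    rw [he, h2]
    simpa using eNIG_flat n
  set θ : ℝ → ℝ := fun t => φ t + (1 - χ t) * (h t * (ζ t - φ t)) + χ t * (g t - φ t) with hθ'
  have hθc : ContDiff ℝ (⊤ : ℕ∞) θ :=
    (hφt.add (((contDiff_const.sub hχc).mul (hhc.mul (hζt.sub hφt))))).add
      (hχc.mul (hgc.sub hφt))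
  refine ⟨θ, fun n => hθc.of_le (mod_cast le_top), ?_, ?_, ?_⟩
  · -- derivatives at a
    intro n
    have hth : θ =ᶠ[nhds a] fun t => φ t + h t * (ζ t - φ t) := by
      filter_upwards [Iio_mem_nhds hat0] with t ht
      have h1 : χ t = 0 := hχ0 t (le_of_lt ht)
      show φ t + (1 - χ t) * (h t * (ζ t - φ t)) + χ t * (g t - φ t)
          = φ t + h t * (ζ t - φ t)
      rw [h1]; ring
    rw [hth.iteratedDeriv_eq n]
    have huc : ContDiff ℝ n (fun t => h t * (ζ t - φ t)) :=
      (hhc.mul (hζt.sub hφt)).of_le (mod_cast le_top)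
    rw [itd_add (hφ n) huc a]
    rw [itd_mul_flat (fun m => ((hζ m).sub (hφ m)))
      (fun m => hhc.of_le (mod_cast le_top)) hhflat n, add_zero]
  · -- inequalities on (a, b]
    intro t ht
    obtain ⟨hta, htb⟩ := ht
    have hD : 0 < ζ t - φ t := sub_pos.mpr (hlt t ⟨hta, htb⟩)
    have hXpos : 0 < h t * (ζ t - φ t) := mul_pos (hhpos t hta) hD
    have hXlt : h t * (ζ t - φ t) < ζ t - φ t := by nlinarith [hhlt1 t]
    by_cases hct : t ≤ t0
    · have h1 : χ t = 0 := hχ0 t hct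
      constructor
      · show φ t < φ t + (1 - χ t) * (h t * (ζ t - φ t)) + χ t * (g t - φ t)
        rw [h1]; nlinarith
      · show φ t + (1 - χ t) * (h t * (ζ t - φ t)) + χ t * (g t - φ t) < ζ t
        rw [h1]; nlinarith
    · have hg1 : φ t < g t ∧ g t < ζ t := hsub t (le_of_not_ge hct) htb
      have hw := hχmem t
      have hYpos : 0 < g t - φ t := by linarith [hg1.1]
      have hYlt : g t - φ t < ζ t - φ t := by linarith [hg1.2]
      obtain ⟨hlo, hhi⟩ := convex_strict_between hw.1 hw.2 hXpos hXlt hYpos hYlt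
      constructor
      · show φ t < φ t + (1 - χ t) * (h t * (ζ t - φ t)) + χ t * (g t - φ t)
        linarith
      · show φ t + (1 - χ t) * (h t * (ζ t - φ t)) + χ t * (g t - φ t) < ζ t
        linarith
  · -- derivatives at b
    intro n
    have hth : θ =ᶠ[nhds b] g := by
      filter_upwards [Ioi_mem_nhds ht1b] with t ht
      have h1 : χ t = 1 := hχ1 t (le_of_lt ht)
      show φ t + (1 - χ t) * (h t * (ζ t - φ t)) + χ t * (g t - φ t) = g t
      rw [h1]; ring
    rw [hth.iteratedDeriv_eq n, hgd n]
end

section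
/- For each n ∈ ℕ let f_n, g_n: ℝ → ℝ be continuous functions such that for each n: f_n(t) ≤ f_{n+1}(t) eventually, g_{n+1}(t) ≤ g_n(t) eventually, and f_n <_e g_n. Then there exists a C^∞ function φ: ℝ → ℝ such that f_n <_e φ <_e g_n for every n. -/
open Set Filter

/-- Telescoping helper: a step-wise chain gives comparison with the endpoint. -/
lemma statement14_chain {h : ℕ → ℝ} : ∀ K : ℕ, (∀ m < K, h m ≤ h (m + 1)) →
    ∀ n ≤ K, h n ≤ h K := by
  intro K
  induction K with
  | zero =>
      intro _ n hn
      have : n = 0 := Nat.le_zero.mp hn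
      simp [this]
  | succ K ih =>
      intro H n hn
      rcases Nat.lt_or_ge n (K + 1) with h1 | h1
      · have hnK : n ≤ K := Nat.lt_succ_iff.mp h1
        calc h n ≤ h K := ih (fun m hm => H m (Nat.lt_succ_of_lt hm)) n hnK
          _ ≤ h (K + 1) := H K (Nat.lt_succ_self K)
      · have : n = K + 1 := le_antisymm hn h1
        simp [this]

/-- Let `f_n, g_n : ℝ → ℝ` be continuous with, for each `n`: `f_n ≤ f_{n+1}`
eventually, `g_{n+1} ≤ g_n` eventually, and `f_n <ₑ g_n`. Then there is a `C^∞` function `φ`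
with `f_n <ₑ φ <ₑ g_n` for every `n`. -/
theorem statement14 (f g : ℕ → ℝ → ℝ)
    (hfc : ∀ n, Continuous (f n)) (hgc : ∀ n, Continuous (g n))
    (hfmono : ∀ n, ∀ᶠ t in Filter.atTop, f n t ≤ f (n + 1) t)
    (hgmono : ∀ n, ∀ᶠ t in Filter.atTop, g (n + 1) t ≤ g n t)
    (hfg : ∀ n, ∀ᶠ t in Filter.atTop, f n t < g n t) :
    ∃ φ : ℝ → ℝ, (∀ n : ℕ, ContDiff ℝ n φ) ∧
      ∀ n, (∀ᶠ t in Filter.atTop, f n t < φ t) ∧ (∀ᶠ t in Filter.atTop, φ t < g n t) := by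
  classical
  -- the "good" property up to level k
  set P : ℕ → ℝ → Prop := fun k t =>
    (∀ n ≤ k, f n t < g n t) ∧ ∀ n < k, f n t ≤ f (n + 1) t ∧ g (n + 1) t ≤ g n t with hP_def
  have hP : ∀ k, ∀ᶠ t in Filter.atTop, P k t := by
    intro k
    have h1 : ∀ᶠ t in Filter.atTop, ∀ n ∈ Set.Iic k, f n t < g n t :=
      (Filter.eventually_all_finite (Set.finite_Iic k)).mpr (fun n _ => hfg n)
    have h2 : ∀ᶠ t in Filter.atTop, ∀ n ∈ Set.Iio k, f n t ≤ f (n + 1) t ∧ g (n + 1) t ≤ g n t :=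
      (Filter.eventually_all_finite (Set.finite_Iio k)).mpr
        (fun n _ => (hfmono n).and (hgmono n))
    filter_upwards [h1, h2] with t h1t h2t
    exact ⟨fun n hn => h1t n (Set.mem_Iic.mpr hn), fun n hn => h2t n (Set.mem_Iio.mpr hn)⟩
  -- choose thresholds B, monotone thresholds b, and strictly growing thresholds a
  have hB : ∀ k, ∃ B : ℝ, ∀ t ≥ B, P k t := fun k => (Filter.eventually_atTop.mp (hP k))
  choose B hB using hB
  obtain ⟨b, hb_mono, hbP⟩ : ∃ b : ℕ → ℝ, Monotone b ∧ ∀ k, ∀ t ≥ b k, P k t := by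
    refine ⟨fun k => (Finset.range (k + 1)).sup' (by simp) B, ?_, ?_⟩
    · intro i j hij
      exact Finset.sup'_mono B (Finset.range_subset_range.mpr (by omega)) (by simp)
    · intro k t ht
      refine hB k t (le_trans ?_ ht)
      exact Finset.le_sup' B (by simp : k ∈ Finset.range (k + 1))
  obtain ⟨a, ha_ge, haP⟩ : ∃ a : ℕ → ℝ,
      (∀ n : ℕ, a 0 + n ≤ a n) ∧ ∀ k : ℕ, ∀ t : ℝ, a k - 1 ≤ t → P (k + 1) t := by
    refine ⟨fun k => b (k + 1) + 1 + k, ?_, ?_⟩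
    · intro n
      have := hb_mono (Nat.one_le_iff_ne_zero.mpr (Nat.succ_ne_zero n))
      simp only [Nat.cast_zero]
      linarith
    · intro k t ht
      simp only at ht
      have hk : (0:ℝ) ≤ (k:ℝ) := Nat.cast_nonneg k
      exact hbP (k + 1) t (by linarith)
  -- the convex-set family
  set T : ℝ → Set ℝ := fun y => ⋂ (n : ℕ) (_ : a n ≤ y), Set.Ioo (f n y) (g n y) with hT_def
  have hconv : ∀ y, Convex ℝ (T y) :=
    fun y => convex_iInter fun n => convex_iInter fun _ => convex_Ioo _ _
  -- the local condition
  have Hloc : ∀ x : ℝ, ∃ c : ℝ, ∀ᶠ y in nhds x, c ∈ T y := by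
    intro x
    rcases lt_or_ge (x + 1/2) (a 0) with hx | hx
    · -- far left: no constraints nearby
      refine ⟨0, ?_⟩
      have : Set.Ioo (x - 1/2) (x + 1/2) ∈ nhds x := by
        apply Ioo_mem_nhds <;> linarith
      filter_upwards [this] with y hy
      simp only [hT_def, Set.mem_iInter]
      intro n hn
      exfalso
      have h1 : a 0 + (n:ℝ) ≤ a n := ha_ge n
      have h2 : y < x + 1/2 := hy.2
      have h3 : (0:ℝ) ≤ (n:ℝ) := Nat.cast_nonneg n
      linarith
    · -- there is a largest K with a K ≤ x + 1/2
      have hbound : ∀ n : ℕ, a n ≤ x + 1/2 → (n : ℝ) ≤ x + 1/2 - a 0 := by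
        intro n hn
        have h1 := ha_ge n
        linarith
      set Bd : ℕ := ⌊x + 1/2 - a 0⌋₊ with hBd
      have hle : ∀ n : ℕ, a n ≤ x + 1/2 → n ≤ Bd := by
        intro n hn
        exact Nat.le_floor (hbound n hn)
      set K : ℕ := Nat.findGreatest (fun n => a n ≤ x + 1/2) Bd with hK
      have hK1 : a K ≤ x + 1/2 :=
        Nat.findGreatest_spec (P := fun n => a n ≤ x + 1/2) (Nat.zero_le Bd) hx
      have hK2 : ∀ n : ℕ, a n ≤ x + 1/2 → n ≤ K := fun n hn =>
        Nat.le_findGreatest (hle n hn) hn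
      -- x is well inside the region where P (K+1) holds
      have hPx : P (K + 1) x := haP K x (by linarith [hK1])
      have hfgx : f K x < g K x := hPx.1 K (Nat.le_succ K)
      refine ⟨(f K x + g K x) / 2, ?_⟩
      have hopen : {y | f K y < (f K x + g K x) / 2 ∧ (f K x + g K x) / 2 < g K y} ∈ nhds x := by
        apply IsOpen.mem_nhds
        · exact (isOpen_lt (hfc K) continuous_const).inter (isOpen_lt continuous_const (hgc K))
        · exact ⟨by linarith, by linarith⟩
      have hball : Set.Ioo (x - 1/2) (x + 1/2) ∈ nhds x := by
        apply Ioo_mem_nhds <;> linarith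
      filter_upwards [hopen, hball] with y hy hyb
      simp only [hT_def, Set.mem_iInter]
      intro n hn
      have hnK : n ≤ K := hK2 n (le_trans hn (le_of_lt hyb.2))
      have hPy : P (K + 1) y := haP K y (by
        have := hyb.1; linarith [hK1])
      have hfchain : f n y ≤ f K y :=
        statement14_chain (h := fun m => f m y) K
          (fun m hm => (hPy.2 m (Nat.lt_succ_of_lt hm)).1) n hnK
      have hgchain : g K y ≤ g n y := by
        have := statement14_chain (h := fun m => - g m y) K
          (fun m hm => by
            have := (hPy.2 m (Nat.lt_succ_of_lt hm)).2
            simpa using this) n hnK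
        simpa using this
      exact ⟨lt_of_le_of_lt hfchain hy.1, lt_of_lt_of_le hy.2 hgchain⟩
  -- apply the smooth selection theorem
  obtain ⟨φ, hφ⟩ := exists_contMDiffMap_forall_mem_convex_of_local_const (modelWithCornersSelf ℝ ℝ) (n := ⊤) hconv Hloc
  have hsmooth : ContDiff ℝ (((⊤:ℕ∞) : WithTop ℕ∞)) ⇑φ := by
    have := φ.contMDiff
    rwa [contMDiff_iff_contDiff] at this
  refine ⟨φ, fun n => hsmooth.of_le (by exact_mod_cast le_top), fun n => ?_⟩
  constructor <;>
  · rw [Filter.eventually_atTop]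
    refine ⟨a n, fun t ht => ?_⟩
    have := hφ t
    simp only [hT_def, Set.mem_iInter, Set.mem_Ioo] at this
    first
    | exact (this n ht).1
    | exact (this n ht).2
end

section
/- Let a ∈ ℝ and for each i ∈ ℕ let f_i: [a,∞) → ℝ be continuous with f_i(t) ≥ 0 for all t ≥ a and f_i ≺ f_{i+1}. Let ε_i > 0 be real numbers such that the series Σ_i ε_i f_i converges, uniformly on every compact subset of [a,∞), to a function f: [a,∞) → ℝ. Then f_n ≺ f for every n; moreover, if every f_i is increasing, then so is f. -/
open Set Filter Topology

/-- `f ≺ g`: for every `c > 0`, `|f(t)| ≤ c·|g(t)|` for all sufficiently large `t`. -/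
def FunPrec (f g : ℝ → ℝ) : Prop :=
  ∀ c : ℝ, 0 < c → ∀ᶠ t in Filter.atTop, |f t| ≤ c * |g t|

/-- Let `f_i : [a,∞) → ℝ` be continuous, nonnegative, with `f_i ≺ f_{i+1}`,
and let `ε_i > 0` be such that `Σ ε_i f_i` converges uniformly on compact subsets of `[a,∞)`
to `F`. Then `f_n ≺ F` for all `n`, and if each `f_i` is increasing then so is `F`. -/
theorem statement15 (a : ℝ) (f : ℕ → ℝ → ℝ) (ε : ℕ → ℝ) (F : ℝ → ℝ)
    (hfc : ∀ i, ContinuousOn (f i) (Set.Ici a))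
    (hnn : ∀ i, ∀ t ∈ Set.Ici a, 0 ≤ f i t)
    (hprec : ∀ i, FunPrec (f i) (f (i + 1)))
    (hε : ∀ i, 0 < ε i)
    (hconv : ∀ K : Set ℝ, K ⊆ Set.Ici a → IsCompact K →
      TendstoUniformlyOn (fun N t => ∑ i ∈ Finset.range N, ε i * f i t) F Filter.atTop K) :
    (∀ n, FunPrec (f n) F) ∧
      ((∀ i, MonotoneOn (f i) (Set.Ici a)) → MonotoneOn F (Set.Ici a)) := by
  have hpt : ∀ t ∈ Set.Ici a, Tendsto (fun N => ∑ i ∈ Finset.range N, ε i * f i t) atTop (𝓝 (F t)) := by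
    intro t ht
    exact (hconv {t} (Set.singleton_subset_iff.2 ht) isCompact_singleton).tendsto_at rfl
  have hge : ∀ t ∈ Set.Ici a, ∀ N, ∑ i ∈ Finset.range N, ε i * f i t ≤ F t := by
    intro t ht N
    refine ge_of_tendsto (hpt t ht) ?_
    filter_upwards [eventually_ge_atTop N] with M hM
    exact Finset.sum_le_sum_of_subset_of_nonneg (Finset.range_subset_range.2 hM)
      (fun i _ _ => mul_nonneg (hε i).le (hnn i t ht))
  constructor
  · intro n c hc
    have h1 := hprec n (c * ε (n+1)) (mul_pos hc (hε (n+1)))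
    filter_upwards [h1, eventually_ge_atTop a] with t h1t hta
    have hF : ε (n+1) * f (n+1) t ≤ F t := by
      refine le_trans ?_ (hge t hta (n+2))
      exact Finset.single_le_sum (f := fun i => ε i * f i t)
        (fun i _ => mul_nonneg (hε i).le (hnn i t hta)) (Finset.self_mem_range_succ (n+1))
    have hFnn : 0 ≤ F t := le_trans (mul_nonneg (hε _).le (hnn _ t hta)) hF
    calc |f n t| ≤ c * ε (n+1) * |f (n+1) t| := h1t
      _ = c * (ε (n+1) * f (n+1) t) := by rw [abs_of_nonneg (hnn _ t hta)]; ring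
      _ ≤ c * F t := by nlinarith
      _ = c * |F t| := by rw [abs_of_nonneg hFnn]
  · intro hmono s hs t ht hst
    refine le_of_tendsto_of_tendsto (hpt s hs) (hpt t ht) ?_
    filter_upwards with N
    exact Finset.sum_le_sum fun i _ => mul_le_mul_of_nonneg_left (hmono i hs ht hst) (hε i).le
end

section
/- Let a ∈ ℝ, for each i ∈ ℕ let f_i: [a,∞) → ℝ be continuous with f_i(t) ≥ 0 for all t ≥ a and f_i ≺ f_{i+1}, and for each n ∈ ℕ let g_n: [a,∞) → ℝ be continuous with g_n(t) > 0 for all t ≥ a, such that f_i ≺ g_n for all i, n. Then there exist real numbers ε_i > 0 such that the series Σ_i ε_i f_i converges, uniformly on every compact subset of [a,∞), to a function f: [a,∞) → ℝ satisfying: for every n, f(t) ≤ g_n(t) for all sufficiently large t. -/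
open Set Filter

/-- Let `f_i : [a,∞) → ℝ` be continuous, nonnegative, with `f_i ≺ f_{i+1}`,
and let `g_n : [a,∞) → ℝ` be continuous and positive with `f_i ≺ g_n` for all `i, n`. Then
there are `ε_i > 0` such that `Σ ε_i f_i` converges uniformly on compact subsets of `[a,∞)`
to a function `F` satisfying `F ≤ g_n` eventually, for every `n`. -/
theorem statement16 (a : ℝ) (f : ℕ → ℝ → ℝ) (g : ℕ → ℝ → ℝ)
    (hfc : ∀ i, ContinuousOn (f i) (Set.Ici a))
    (hnn : ∀ i, ∀ t ∈ Set.Ici a, 0 ≤ f i t)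
    (hprec : ∀ i, FunPrec (f i) (f (i + 1)))
    (hgc : ∀ n, ContinuousOn (g n) (Set.Ici a))
    (hgpos : ∀ n, ∀ t ∈ Set.Ici a, 0 < g n t)
    (hfg : ∀ i n, FunPrec (f i) (g n)) :
    ∃ ε : ℕ → ℝ, (∀ i, 0 < ε i) ∧ ∃ F : ℝ → ℝ,
      (∀ K : Set ℝ, K ⊆ Set.Ici a → IsCompact K →
        TendstoUniformlyOn (fun N t => ∑ i ∈ Finset.range N, ε i * f i t) F Filter.atTop K) ∧
      ∀ n, ∀ᶠ t in Filter.atTop, F t ≤ g n t := by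
  classical
  -- thresholds from `f i ≺ g n` with constant `(1/2)^i`
  have hTex : ∀ i n : ℕ, ∃ T : ℝ, ∀ t ≥ T, |f i t| ≤ (1/2 : ℝ)^i * |g n t| := by
    intro i n
    exact eventually_atTop.mp (hfg i n ((1/2 : ℝ)^i) (by positivity))
  choose T hT using hTex
  -- cut points
  set S : ℕ → ℝ := fun i : ℕ => max (a + (i:ℝ)) ((Finset.range (i+1)).sup' (by simp) (T i)) with hS
  have haS : ∀ i, a ≤ S i := fun i => le_trans (le_add_of_nonneg_right (by positivity) : a ≤ a + (i:ℝ)) (le_max_left _ _)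
  have hTS : ∀ i n, n ≤ i → T i n ≤ S i := by
    intro i n hn
    exact le_trans (Finset.le_sup' (T i) (Finset.mem_range.mpr (Nat.lt_succ_of_le hn)))
      (le_max_right _ _)
  have haiS : ∀ i : ℕ, a + (i:ℝ) ≤ S i := fun i => le_max_left _ _
  -- sup of `f i` on `[a, S i]`
  have hMex : ∀ i, ∃ M : ℝ, ∀ t ∈ Icc a (S i), f i t ≤ M := by
    intro i
    obtain ⟨M, hM⟩ := (isCompact_Icc : IsCompact (Icc a (S i))).exists_bound_of_continuousOn
      ((hfc i).mono (fun t ht => ht.1))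
    exact ⟨M, fun t ht => le_trans (le_abs_self _) (hM t ht)⟩
  choose M hM using hMex
  have hM0 : ∀ i, 0 ≤ M i := fun i =>
    le_trans (hnn i a self_mem_Ici) (hM i a ⟨le_rfl, haS i⟩)
  -- positive lower bounds for `g n` on `[a, S i]`
  have hmex : ∀ i n : ℕ, ∃ m : ℝ, 0 < m ∧ ∀ t ∈ Icc a (S i), m ≤ g n t := by
    intro i n
    obtain ⟨t0, ht0, hmin⟩ := (isCompact_Icc : IsCompact (Icc a (S i))).exists_isMinOn
      ⟨a, le_rfl, haS i⟩ ((hgc n).mono (fun t ht => ht.1))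
    exact ⟨g n t0, hgpos n t0 ht0.1, fun t ht => hmin ht⟩
  choose m hm0 hm using hmex
  set mm : ℕ → ℝ := fun i => (Finset.range (i+1)).inf' (by simp) (m i) with hmm
  have hmm0 : ∀ i, 0 < mm i := by
    intro i
    rw [hmm]
    simp only [Finset.lt_inf'_iff]
    exact fun n _ => hm0 i n
  have hmmle : ∀ i n, n ≤ i → mm i ≤ m i n := by
    intro i n hn
    exact Finset.inf'_le (m i) (Finset.mem_range.mpr (Nat.lt_succ_of_le hn))
  -- the weights
  set ε : ℕ → ℝ := fun i => (1/2 : ℝ)^i / 4 * min 1 (mm i) / (M i + 1) with hε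
  have hεpos : ∀ i, 0 < ε i := by
    intro i
    have h1 : 0 < min 1 (mm i) := lt_min one_pos (hmm0 i)
    have h2 : 0 < M i + 1 := by linarith [hM0 i]
    rw [hε]; positivity
  have hε14 : ∀ i, ε i ≤ 1/4 := by
    intro i
    have h2 : (0:ℝ) < M i + 1 := by linarith [hM0 i]
    have hp : (1/2:ℝ)^i ≤ 1 := pow_le_one₀ (by norm_num) (by norm_num)
    have hp0 : (0:ℝ) ≤ (1/2:ℝ)^i := by positivity
    have hmin1 : min 1 (mm i) ≤ 1 := min_le_left _ _
    have hmin0 : (0:ℝ) ≤ min 1 (mm i) := le_min zero_le_one (hmm0 i).le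
    have hnum : (1/2:ℝ)^i / 4 * min 1 (mm i) ≤ 1/4 := by nlinarith
    have hnum0 : (0:ℝ) ≤ (1/2:ℝ)^i / 4 * min 1 (mm i) := by positivity
    calc ε i ≤ (1/2:ℝ)^i / 4 * min 1 (mm i) := by
          rw [hε]; exact div_le_self hnum0 (by linarith [hM0 i])
      _ ≤ 1/4 := hnum
  -- key pointwise bound on `[a, S i]`
  have keyIcc : ∀ i, ∀ t ∈ Icc a (S i), ε i * f i t ≤ (1/2 : ℝ)^i / 4 * min 1 (mm i) := by
    intro i t ht
    have h2 : (0:ℝ) < M i + 1 := by linarith [hM0 i]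
    have hf : f i t ≤ M i + 1 := by linarith [hM i t ht]
    calc ε i * f i t ≤ ε i * (M i + 1) :=
          mul_le_mul_of_nonneg_left hf (hεpos i).le
      _ = (1/2 : ℝ)^i / 4 * min 1 (mm i) := by
          rw [hε]; field_simp
  -- key bound: for `n ≤ i` and `t ≥ a`, `ε i * f i t ≤ (1/2)^i/4 * g n t`
  have key : ∀ n i, n ≤ i → ∀ t, a ≤ t → ε i * f i t ≤ (1/2 : ℝ)^i / 4 * g n t := by
    intro n i hni t hta
    rcases le_or_gt t (S i) with hle | hlt
    · calc ε i * f i t ≤ (1/2 : ℝ)^i / 4 * min 1 (mm i) := keyIcc i t ⟨hta, hle⟩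
        _ ≤ (1/2 : ℝ)^i / 4 * g n t := by
            apply mul_le_mul_of_nonneg_left _ (by positivity)
            exact le_trans (min_le_right _ _) (le_trans (hmmle i n hni) (hm i n t ⟨hta, hle⟩))
    · have hTt : T i n ≤ t := le_trans (hTS i n hni) hlt.le
      have h1 : f i t ≤ (1/2 : ℝ)^i * g n t := by
        have := hT i n t hTt
        rwa [abs_of_nonneg (hnn i t hta), abs_of_pos (hgpos n t hta)] at this
      have h0 : 0 ≤ f i t := hnn i t hta
      calc ε i * f i t ≤ (1/4) * ((1/2 : ℝ)^i * g n t) := by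
            apply mul_le_mul (hε14 i) h1 h0 (by norm_num)
        _ = (1/2 : ℝ)^i / 4 * g n t := by ring
  -- bound on `[a, S i]` by `(1/2)^i`
  have keyS : ∀ i, ∀ t ∈ Icc a (S i), ε i * f i t ≤ (1/2 : ℝ)^i := by
    intro i t ht
    calc ε i * f i t ≤ (1/2 : ℝ)^i / 4 * min 1 (mm i) := keyIcc i t ht
      _ ≤ (1/2 : ℝ)^i / 4 * 1 := by
          apply mul_le_mul_of_nonneg_left (min_le_left _ _) (by positivity)
      _ ≤ (1/2 : ℝ)^i := by
          have : (0:ℝ) ≤ (1/2:ℝ)^i := by positivity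
          linarith
  -- summability at every point of `[a, ∞)`
  have hsum : ∀ t, a ≤ t → Summable (fun i => ε i * f i t) := by
    intro t hta
    apply Summable.of_nonneg_of_le
      (fun i => mul_nonneg (hεpos i).le (hnn i t hta))
      (fun i => key 0 i (Nat.zero_le i) t hta)
    exact ((summable_geometric_of_lt_one (by norm_num) (by norm_num)).div_const 4).mul_right _
  refine ⟨ε, hεpos, fun t => ∑' i, ε i * f i t, ?_, ?_⟩
  · -- uniform convergence on compacts
    intro K hK hKc
    rcases K.eq_empty_or_nonempty with rfl | hKne
    · exact tendstoUniformlyOn_empty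
    obtain ⟨R, hR⟩ := hKc.bddAbove
    choose C hC using fun i => hKc.exists_bound_of_continuousOn ((hfc i).mono hK)
    set u : ℕ → ℝ := fun i => if R ≤ a + i then (1/2 : ℝ)^i else ε i * C i with hu
    have hub : ∀ i, ∀ t ∈ K, ‖ε i * f i t‖ ≤ u i := by
      intro i t ht
      have hta : a ≤ t := hK ht
      simp only [hu]
      split_ifs with h
      · have htS : t ≤ S i := le_trans (le_trans (hR ht) h) (haiS i)
        rw [Real.norm_eq_abs, abs_of_nonneg (mul_nonneg (hεpos i).le (hnn i t hta))]
        exact keyS i t ⟨hta, htS⟩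
      · rw [Real.norm_eq_abs, abs_mul, abs_of_pos (hεpos i)]
        exact mul_le_mul_of_nonneg_left (hC i t ht) (hεpos i).le
    have hus : Summable u := by
      rw [← summable_nat_add_iff ⌈R - a⌉₊]
      have heq : ∀ i : ℕ, u (i + ⌈R - a⌉₊) = (1/2 : ℝ)^(i + ⌈R - a⌉₊) := by
        intro i
        have : R ≤ a + ((i + ⌈R - a⌉₊ : ℕ) : ℝ) := by
          have h1 : R - a ≤ (⌈R - a⌉₊ : ℝ) := Nat.le_ceil _
          have h2 : ((⌈R - a⌉₊ : ℕ) : ℝ) ≤ ((i + ⌈R - a⌉₊ : ℕ) : ℝ) := by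
            exact_mod_cast Nat.le_add_left _ _
          linarith
        simp only [hu]
        rw [if_pos this]
      rw [show (fun i => u (i + ⌈R - a⌉₊)) = fun i => (1/2 : ℝ)^(i + ⌈R - a⌉₊) from funext heq]
      simpa [pow_add] using
        (summable_geometric_of_lt_one (by norm_num : (0:ℝ) ≤ 1/2) (by norm_num)).mul_right
          ((1/2 : ℝ)^(⌈R - a⌉₊))
    exact tendstoUniformlyOn_tsum_nat hus hub
  · -- eventual domination by `g n`
    intro n
    have hhead : ∀ i ∈ Finset.range n, ∀ᶠ t in atTop,
        ε i * f i t ≤ (1 / (2 * (n + 1))) * g n t := by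
      intro i _
      have hc : (0:ℝ) < 1 / (2 * (n + 1)) / ε i := by
        have := hεpos i; positivity
      filter_upwards [hfg i n _ hc, eventually_ge_atTop a] with t hft hta
      rw [abs_of_nonneg (hnn i t hta), abs_of_pos (hgpos n t hta)] at hft
      have := mul_le_mul_of_nonneg_left hft (hεpos i).le
      calc ε i * f i t ≤ ε i * (1 / (2 * (n + 1)) / ε i * g n t) := this
        _ = (1 / (2 * (n + 1))) * g n t := by
            field_simp [(hεpos i).ne']
    rw [← eventually_all_finset] at hhead
    filter_upwards [hhead, eventually_ge_atTop a] with t hht hta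
    have hsummable := hsum t hta
    rw [← Summable.sum_add_tsum_nat_add n hsummable]
    have hgt : 0 < g n t := hgpos n t hta
    -- head bound
    have hH : ∑ i ∈ Finset.range n, ε i * f i t ≤ (1/2) * g n t := by
      calc ∑ i ∈ Finset.range n, ε i * f i t
          ≤ ∑ i ∈ Finset.range n, (1 / (2 * (n + 1))) * g n t :=
            Finset.sum_le_sum (fun i hi => hht i hi)
        _ = n * ((1 / (2 * ((n:ℝ) + 1))) * g n t) := by
            rw [Finset.sum_const, Finset.card_range, nsmul_eq_mul]
        _ ≤ (1/2) * g n t := by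
            have hn1 : (0:ℝ) < (n:ℝ) + 1 := by positivity
            rw [show (n:ℝ) * ((1 / (2 * ((n:ℝ) + 1))) * g n t)
              = ((n:ℝ) / ((n:ℝ) + 1)) * ((1/2) * g n t) by field_simp]
            have : (n:ℝ) / ((n:ℝ) + 1) ≤ 1 := by
              rw [div_le_one hn1]; linarith
            nlinarith
    -- tail bound
    have hTsummable : Summable (fun i => ε (i + n) * f (i + n) t) :=
      (summable_nat_add_iff n).mpr hsummable
    have hgeo : Summable (fun i : ℕ => (1/2 : ℝ)^(i + n) / 4 * g n t) := by
      simpa [pow_add, div_eq_mul_inv, mul_assoc, mul_comm, mul_left_comm] using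
        (((summable_geometric_of_lt_one (by norm_num : (0:ℝ) ≤ 1/2)
          (by norm_num)).mul_right ((1/2:ℝ)^n)).mul_right ((4:ℝ)⁻¹ * g n t))
    have hTl : ∑' i, ε (i + n) * f (i + n) t ≤ (1/2) * g n t := by
      calc ∑' i, ε (i + n) * f (i + n) t
          ≤ ∑' i : ℕ, (1/2 : ℝ)^(i + n) / 4 * g n t := by
            apply Summable.tsum_le_tsum _ hTsummable hgeo
            intro i
            exact key n (i + n) (Nat.le_add_left n i) t hta
        _ = (1/2 : ℝ)^n * 2 / 4 * g n t := by
            rw [show (fun i : ℕ => (1/2 : ℝ)^(i + n) / 4 * g n t)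
              = fun i : ℕ => (1/2 : ℝ)^i * ((1/2:ℝ)^n / 4 * g n t) by
                funext i; rw [pow_add]; ring]
            rw [tsum_mul_right, tsum_geometric_two]
            ring
        _ ≤ (1/2) * g n t := by
            have h1 : (1/2 : ℝ)^n ≤ 1 :=
              pow_le_one₀ (by norm_num) (by norm_num)
            nlinarith
    linarith
end

section
/- Let a ∈ ℝ and let f: [a,∞) → ℝ be of class C^4, and write f† := f'/f, f†† := (f†)'/f†, f††† := (f††)'/f††, f†††† := (f†††)'/f†††. Suppose that for all t ≥ a: f(t) > 0, f†(t) > 0, f††(t) > 0, f†††(t) > 0, and f†(t) > f††(t) > f†††(t) > f††††(t). Then f†(t) → +∞ as t → +∞, and for every n ∈ ℕ one has f(t) > f†(t)^n for all sufficiently large t. -/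
open Set Filter

/-- The logarithmic derivative `f† = f'/f`. -/
noncomputable def logDer (f : ℝ → ℝ) : ℝ → ℝ := fun t => deriv f t / f t

private lemma hasDerivAt_log_comp {g : ℝ → ℝ} {t : ℝ} (hg : DifferentiableAt ℝ g t)
    (h0 : g t ≠ 0) : HasDerivAt (fun x => Real.log (g x)) (logDer g t) t := by
  simpa [logDer] using hg.hasDerivAt.log h0

private lemma le_of_log_le {x y : ℝ} (hx : 0 < x) (hy : 0 < y)
    (h : Real.log x ≤ Real.log y) : x ≤ y := by
  have := Real.exp_le_exp.mpr h
  rwa [Real.exp_log hx, Real.exp_log hy] at this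

private lemma lt_of_log_lt {x y : ℝ} (hx : 0 < x) (hy : 0 < y)
    (h : Real.log x < Real.log y) : x < y := by
  have := Real.exp_lt_exp.mpr h
  rwa [Real.exp_log hx, Real.exp_log hy] at this

private lemma linear_lower {h : ℝ → ℝ} {T c : ℝ}
    (hder : ∀ t ∈ Ici T, HasDerivAt h (deriv h t) t)
    (hbound : ∀ t ∈ Ioi T, c ≤ deriv h t) :
    ∀ t ∈ Ici T, h T + c * (t - T) ≤ h t := by
  intro t ht
  have key := (convex_Ici T).mul_sub_le_image_sub_of_le_deriv
    (fun x hx => (hder x hx).continuousAt.continuousWithinAt)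
    (fun x hx => by
      rw [interior_Ici] at hx
      exact (hder x (mem_Ici.mpr (le_of_lt (mem_Ioi.mp hx)))).differentiableAt.differentiableWithinAt)
    (fun x hx => by rw [interior_Ici] at hx; exact hbound x hx)
    T self_mem_Ici t ht ht
  linarith

private lemma tendsto_of_linear_lower {h : ℝ → ℝ} {T c C : ℝ} (hc : 0 < c)
    (hb : ∀ t ∈ Ici T, C + c * (t - T) ≤ h t) : Tendsto h atTop atTop := by
  have hlin : Tendsto (fun t : ℝ => C + c * (t - T)) atTop atTop := by
    apply tendsto_atTop_atTop.mpr
    intro A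
    refine ⟨T + (A - C)/c + 1, fun x hx => ?_⟩
    have h1 : (A - C)/c ≤ x - T - 1 := by linarith
    have h2 := (div_le_iff₀ hc).mp h1
    nlinarith
  exact tendsto_atTop_mono' atTop
    ((eventually_ge_atTop T).mono (fun t ht => hb t ht)) hlin

/-- Let `f : [a,∞) → ℝ` be of class `C^4` with `f, f†, f††, f††† > 0` and
`f† > f†† > f††† > f††††` on `[a,∞)`. Then `f†(t) → +∞` as `t → +∞`, and for every `n`,
`f(t) > f†(t)^n` for all sufficiently large `t`. -/
theorem statement18 (a : ℝ) (f : ℝ → ℝ) (hf : ContDiff ℝ 4 f)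
    (hpos : ∀ t ≥ a, 0 < f t)
    (h1 : ∀ t ≥ a, 0 < logDer f t)
    (h2 : ∀ t ≥ a, 0 < logDer (logDer f) t)
    (h3 : ∀ t ≥ a, 0 < logDer (logDer (logDer f)) t)
    (h12 : ∀ t ≥ a, logDer (logDer f) t < logDer f t)
    (h23 : ∀ t ≥ a, logDer (logDer (logDer f)) t < logDer (logDer f) t)
    (h34 : ∀ t ≥ a, logDer (logDer (logDer (logDer f))) t < logDer (logDer (logDer f)) t) :
    Filter.Tendsto (logDer f) Filter.atTop Filter.atTop ∧
      ∀ n : ℕ, ∀ᶠ t in Filter.atTop, (logDer f t) ^ n < f t := by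
  set g1 := logDer f with hg1def
  set g2 := logDer g1 with hg2def
  set g3 := logDer g2 with hg3def
  set g4 := logDer g3 with hg4def
  have hfc : Continuous f := hf.continuous
  set U1 : Set ℝ := f ⁻¹' {y | y ≠ 0} with hU1def
  have hU1 : IsOpen U1 := isOpen_ne.preimage hfc
  have hf4 : ContDiff ℝ (3 + 1) f := by norm_num; exact hf
  have hdf : ContDiff ℝ 3 (deriv f) := (contDiff_succ_iff_deriv.mp hf4).2.2
  have hg1cd : ContDiffOn ℝ 3 g1 U1 :=
    hdf.contDiffOn.div (hf.contDiffOn.of_le (by norm_num)) (fun x hx => hx)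
  set U2 : Set ℝ := U1 ∩ g1 ⁻¹' {y | y ≠ 0} with hU2def
  have hU2 : IsOpen U2 := hg1cd.continuousOn.isOpen_inter_preimage hU1 isOpen_ne
  have hg2cd : ContDiffOn ℝ 2 g2 U2 :=
    ((hg1cd.deriv_of_isOpen hU1 (by norm_num)).mono inter_subset_left).div
      ((hg1cd.of_le (by norm_num)).mono inter_subset_left) (fun x hx => hx.2)
  set U3 : Set ℝ := U2 ∩ g2 ⁻¹' {y | y ≠ 0} with hU3def
  have hU3 : IsOpen U3 := hg2cd.continuousOn.isOpen_inter_preimage hU2 isOpen_ne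
  have hg3cd : ContDiffOn ℝ 1 g3 U3 :=
    ((hg2cd.deriv_of_isOpen hU2 (by norm_num)).mono inter_subset_left).div
      ((hg2cd.of_le (by norm_num)).mono inter_subset_left) (fun x hx => hx.2)
  have hmem : ∀ t, a < t → t ∈ U3 := fun t ht =>
    ⟨⟨(hpos t ht.le).ne', (h1 t ht.le).ne'⟩, (h2 t ht.le).ne'⟩
  have hd1 : ∀ t, a < t → DifferentiableAt ℝ g1 t := fun t ht =>
    (hg1cd.differentiableOn (by norm_num)).differentiableAt
      (hU1.mem_nhds (hmem t ht).1.1)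
  have hd2 : ∀ t, a < t → DifferentiableAt ℝ g2 t := fun t ht =>
    (hg2cd.differentiableOn (by norm_num)).differentiableAt
      (hU2.mem_nhds (hmem t ht).1)
  have hd3 : ∀ t, a < t → DifferentiableAt ℝ g3 t := fun t ht =>
    (hg3cd.differentiableOn (by norm_num)).differentiableAt (hU3.mem_nhds (hmem t ht))
  have hL0 : ∀ t, a < t → HasDerivAt (fun x => Real.log (f x)) (g1 t) t := fun t ht =>
    hasDerivAt_log_comp (hf.differentiable (by norm_num) t) (hpos t ht.le).ne'
  have hL1 : ∀ t, a < t → HasDerivAt (fun x => Real.log (g1 x)) (g2 t) t := fun t ht =>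
    hasDerivAt_log_comp (hd1 t ht) (h1 t ht.le).ne'
  have hL2 : ∀ t, a < t → HasDerivAt (fun x => Real.log (g2 x)) (g3 t) t := fun t ht =>
    hasDerivAt_log_comp (hd2 t ht) (h2 t ht.le).ne'
  have hL3 : ∀ t, a < t → HasDerivAt (fun x => Real.log (g3 x)) (g4 t) t := fun t ht =>
    hasDerivAt_log_comp (hd3 t ht) (h3 t ht.le).ne'
  set b := a + 1 with hbdef
  have hab : a < b := by simp [hbdef]
  have habI : ∀ t, t ∈ Ici b → a < t := fun t ht => lt_of_lt_of_le hab ht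
  -- Step A: g2 is nondecreasing on [b, ∞)
  have hA : ∀ t ∈ Ici b, g2 b ≤ g2 t := by
    intro t ht
    have key := linear_lower (h := fun x => Real.log (g2 x)) (T := b) (c := 0)
      (fun x hx => by
        have h := hL2 x (habI x hx)
        rwa [h.deriv])
      (fun x hx => by
        have h := hL2 x (habI x (mem_Ici.mpr (le_of_lt hx)))
        rw [h.deriv]
        exact (h3 x (habI x (mem_Ici.mpr (le_of_lt hx))).le).le) t ht
    have : Real.log (g2 b) ≤ Real.log (g2 t) := by linarith
    exact le_of_log_le (h2 b hab.le) (h2 t (habI t ht).le) this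
  -- Step B: g3 t ≤ g2 t / r with r = g2 b / g3 b > 1
  set r := g2 b / g3 b with hrdef
  have hg3b : 0 < g3 b := h3 b hab.le
  have hr1 : 1 < r := (one_lt_div hg3b).mpr (h23 b hab.le)
  have hB : ∀ t ∈ Ici b, g3 t ≤ g2 t / r := by
    intro t ht
    have key := linear_lower (h := fun x => Real.log (g2 x) - Real.log (g3 x))
      (T := b) (c := 0)
      (fun x hx => by
        have h := ((hL2 x (habI x hx)).fun_sub (hL3 x (habI x hx)))
        rwa [h.deriv])
      (fun x hx => by
        have hax := habI x (mem_Ici.mpr (le_of_lt hx))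
        have h := ((hL2 x hax).fun_sub (hL3 x hax))
        rw [h.deriv]
        have := h34 x hax.le
        linarith) t ht
    have hlog : Real.log (g3 t) ≤ Real.log (g2 t) - Real.log r := by
      have : Real.log r = Real.log (g2 b) - Real.log (g3 b) :=
        Real.log_div (h2 b hab.le).ne' hg3b.ne'
      linarith [key]
    have h2t : 0 < g2 t := h2 t (habI t ht).le
    have h3t : 0 < g3 t := h3 t (habI t ht).le
    have : Real.log (g2 t) - Real.log r = Real.log (g2 t / r) :=
      (Real.log_div h2t.ne' (by positivity)).symm
    rw [this] at hlog
    exact le_of_log_le h3t (by positivity) hlog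
  -- Step C: log(g1/g2) grows linearly
  set δ := g2 b * (1 - 1/r) with hδdef
  have hg2b : 0 < g2 b := h2 b hab.le
  have hδ : 0 < δ := by
    apply mul_pos hg2b
    have : 1/r < 1 := by
      rw [div_lt_one (by linarith)]; linarith
    linarith
  have hC : ∀ t ∈ Ici b,
      (Real.log (g1 b) - Real.log (g2 b)) + δ * (t - b) ≤
        Real.log (g1 t) - Real.log (g2 t) := by
    apply linear_lower (h := fun x => Real.log (g1 x) - Real.log (g2 x))
    · intro x hx
      have h := ((hL1 x (habI x hx)).fun_sub (hL2 x (habI x hx)))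
      rwa [h.deriv]
    · intro x hx
      have hax := habI x (mem_Ici.mpr (le_of_lt hx))
      have h := ((hL1 x hax).fun_sub (hL2 x hax))
      rw [h.deriv]
      have hBx := hB x (mem_Ici.mpr (le_of_lt hx))
      have hAx := hA x (mem_Ici.mpr (le_of_lt hx))
      have h2x : 0 < g2 x := h2 x hax.le
      have : g2 x - g3 x ≥ g2 x * (1 - 1/r) := by
        have : g2 x / r = g2 x * (1/r) := by ring
        nlinarith
      have : g2 x * (1 - 1/r) ≥ δ := by
        rw [hδdef]
        have h1r : 0 < 1 - 1/r := by
          have : 1/r < 1 := by rw [div_lt_one (by linarith)]; linarith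
          linarith
        nlinarith
      linarith
  have hRtend : Tendsto (fun x => Real.log (g1 x) - Real.log (g2 x)) atTop atTop :=
    tendsto_of_linear_lower hδ hC
  -- Step D: log g1 grows linearly, so g1 → ∞
  have hD : ∀ t ∈ Ici b, Real.log (g1 b) + g2 b * (t - b) ≤ Real.log (g1 t) := by
    apply linear_lower (h := fun x => Real.log (g1 x))
    · intro x hx
      have h := hL1 x (habI x hx)
      rwa [h.deriv]
    · intro x hx
      have h := hL1 x (habI x (mem_Ici.mpr (le_of_lt hx)))
      rw [h.deriv]
      exact hA x (mem_Ici.mpr (le_of_lt hx))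
  have hLtend : Tendsto (fun x => Real.log (g1 x)) atTop atTop :=
    tendsto_of_linear_lower hg2b hD
  have hg1tend : Tendsto g1 atTop atTop := by
    have := Real.tendsto_exp_atTop.comp hLtend
    apply this.congr'
    filter_upwards [eventually_ge_atTop b] with t ht
    exact Real.exp_log (h1 t (habI t ht).le)
  refine ⟨hg1tend, fun n => ?_⟩
  -- Step E
  obtain ⟨T, hT⟩ := eventually_atTop.mp
    ((eventually_ge_atTop b).and
      (hRtend.eventually_ge_atTop (Real.log (2 * (n + 1)))))
  have hTb : b ≤ T := (hT T le_rfl).1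
  have hTa : a < T := habI T hTb
  -- on [T, ∞): n * g2 t ≤ g1 t / 2
  have hE : ∀ t ∈ Ici T, (n : ℝ) * g2 t ≤ g1 t / 2 := by
    intro t ht
    have htb : t ∈ Ici b := le_trans hTb ht
    have hta : a < t := habI t htb
    have h1t : 0 < g1 t := h1 t hta.le
    have h2t : 0 < g2 t := h2 t hta.le
    have hlog := (hT t ht).2
    have hratio : (2 * (n + 1) : ℝ) ≤ g1 t / g2 t := by
      have : Real.log (2 * ((n : ℝ) + 1)) ≤ Real.log (g1 t / g2 t) := by
        rw [Real.log_div h1t.ne' h2t.ne']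
        exact_mod_cast hlog
      exact le_of_log_le (by positivity) (by positivity) this
    have hprod := (le_div_iff₀ h2t).mp hratio
    nlinarith [Nat.cast_nonneg (α := ℝ) n, h2t, hprod]
  -- S = log f - n log g1 grows linearly on [T, ∞)
  have hg1T : 0 < g1 T := h1 T hTa.le
  have hSder : ∀ t, a < t →
      HasDerivAt (fun x => Real.log (f x) - (n : ℝ) * Real.log (g1 x))
        (g1 t - (n : ℝ) * g2 t) t := fun t ht =>
    (hL0 t ht).sub ((hL1 t ht).const_mul (n : ℝ))
  have hg1mono : ∀ t ∈ Ici T, g1 T ≤ g1 t := by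
    intro t ht
    have htb : t ∈ Ici b := le_trans hTb ht
    have key := linear_lower (h := fun x => Real.log (g1 x)) (T := T) (c := 0)
      (fun x hx => by
        have h := hL1 x (lt_of_lt_of_le hTa hx)
        rwa [h.deriv])
      (fun x hx => by
        have hax := lt_of_lt_of_le hTa (le_of_lt hx)
        have h := hL1 x hax
        rw [h.deriv]
        exact (h2 x hax.le).le) t ht
    have : Real.log (g1 T) ≤ Real.log (g1 t) := by linarith
    exact le_of_log_le hg1T (h1 t (habI t htb).le) this
  have hS : ∀ t ∈ Ici T,
      (Real.log (f T) - (n : ℝ) * Real.log (g1 T)) + (g1 T / 2) * (t - T) ≤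
        Real.log (f t) - (n : ℝ) * Real.log (g1 t) := by
    apply linear_lower
    · intro x hx
      have h := hSder x (lt_of_lt_of_le hTa hx)
      rwa [h.deriv]
    · intro x hx
      have hax := lt_of_lt_of_le hTa (le_of_lt hx)
      have h := hSder x hax
      rw [h.deriv]
      have hEx := hE x (mem_Ici.mpr (le_of_lt hx))
      have hmx := hg1mono x (mem_Ici.mpr (le_of_lt hx))
      linarith
  have hStend : Tendsto (fun x => Real.log (f x) - (n : ℝ) * Real.log (g1 x))
      atTop atTop := tendsto_of_linear_lower (by positivity) hS
  filter_upwards [hStend.eventually_gt_atTop 0, eventually_ge_atTop b] with t hSt htb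
  have hta : a < t := habI t htb
  have h1t : 0 < g1 t := h1 t hta.le
  have hft : 0 < f t := hpos t hta.le
  apply lt_of_log_lt (by positivity) hft
  rw [Real.log_pow]
  linarith
end

section
/- If φ ∈ 𝒞^{<∞} is overhardian and θ ∈ 𝒞^{<∞} is hardy-bounded, then φ + θ is overhardian. -/
open Filter Set

noncomputable section

set_option linter.unusedSectionVars false
open Topology


/-- transfer an atTop-eventual property to a nhds-eventual property, eventually -/
lemma ev_atTop_nhds {p : ℝ → Prop} (h : ∀ᶠ t in atTop, p t) :
    ∀ᶠ t in atTop, ∀ᶠ s in 𝓝 t, p s := by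
  rcases eventually_atTop.1 h with ⟨a, ha⟩
  filter_upwards [eventually_gt_atTop a] with t ht
  filter_upwards [(isOpen_Ioi (a := a)).eventually_mem ht] with s hs
  exact ha s (le_of_lt hs)

/-- monotonicity on a half line from derivatives -/
lemma monoOn_of_hasDerivAt {f f' : ℝ → ℝ} {a : ℝ}
    (hd : ∀ t ∈ Ici a, HasDerivAt f (f' t) t) (h0 : ∀ t ∈ Ici a, 0 ≤ f' t) :
    MonotoneOn f (Ici a) := by
  refine monotoneOn_of_deriv_nonneg (convex_Ici a)
    (fun t ht => (hd t ht).continuousAt.continuousWithinAt) ?_ ?_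
  · intro t ht
    rw [interior_Ici] at ht
    exact (hd t (Ioi_subset_Ici_self ht)).differentiableAt.differentiableWithinAt
  · intro t ht
    rw [interior_Ici] at ht
    rw [(hd t (Ioi_subset_Ici_self ht)).deriv]
    exact h0 t (Ioi_subset_Ici_self ht)

/-- linear growth: if the derivative is eventually bounded below by a positive
constant, the function tends to infinity -/
lemma tendsto_atTop_of_hasDerivAt_ge {f f' : ℝ → ℝ} {c : ℝ} (hc : 0 < c)
    (hd : ∀ᶠ t in atTop, HasDerivAt f (f' t) t) (h0 : ∀ᶠ t in atTop, c ≤ f' t) :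
    Tendsto f atTop atTop := by
  rcases eventually_atTop.1 (hd.and h0) with ⟨a, ha⟩
  have hmono : MonotoneOn (fun t => f t - c * t) (Ici a) := by
    refine monoOn_of_hasDerivAt (f' := fun t => f' t - c) (fun t ht => ?_) (fun t ht => ?_)
    · exact ((ha t ht).1).sub (by simpa using (hasDerivAt_id t).const_mul c)
    · show 0 ≤ f' t - c
      linarith [(ha t ht).2]
  have key : ∀ t ≥ a, f a - c * a + c * t ≤ f t := by
    intro t ht
    have := hmono (self_mem_Ici) (show t ∈ Ici a from ht) ht
    simp only at this
    linarith
  have hlin : Tendsto (fun t => f a - c * a + c * t) atTop atTop :=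
    tendsto_atTop_add_const_left _ _ (tendsto_id.const_mul_atTop hc)
  exact tendsto_atTop_mono' atTop
    (by filter_upwards [eventually_ge_atTop a] with t ht using key t ht) hlin

/-- eventually smooth on half-lines -/
def EvS (f : ℝ → ℝ) : Prop := ∀ n : ℕ, ∃ a : ℝ, ContDiffOn ℝ n f (Ioi a)

lemma iteratedDerivWithin_Ioi_eq {f : ℝ → ℝ} {a t : ℝ} (h : t ∈ Ioi a) (k : ℕ) :
    iteratedDerivWithin k f (Ioi a) t = iteratedDeriv k f t := by
  rw [iteratedDerivWithin, iteratedDeriv, iteratedFDerivWithin_of_isOpen k isOpen_Ioi h]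

lemma EvS.hasDerivAt_iter {f : ℝ → ℝ} (hf : EvS f) (k : ℕ) :
    ∀ᶠ t in atTop, HasDerivAt (iteratedDeriv k f) (iteratedDeriv (k + 1) f t) t := by
  obtain ⟨a, hcf⟩ := hf (k + 1)
  filter_upwards [eventually_gt_atTop a] with t ht
  have h1 : DifferentiableWithinAt ℝ (iteratedDerivWithin k f (Ioi a)) (Ioi a) t := by
    refine (hcf t ht).differentiableWithinAt_iteratedDerivWithin ?_ ?_
    · exact_mod_cast lt_add_one k
    · rw [Set.insert_eq_of_mem (show t ∈ Ioi a from ht)]; exact isOpen_Ioi.uniqueDiffOn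
  have heq : iteratedDerivWithin k f (Ioi a) =ᶠ[𝓝 t] iteratedDeriv k f := by
    filter_upwards [isOpen_Ioi.mem_nhds ht] with s hs using iteratedDerivWithin_Ioi_eq hs k
  have h2 : DifferentiableAt ℝ (iteratedDeriv k f) t :=
    (heq.differentiableAt_iff).1 (h1.differentiableAt (isOpen_Ioi.mem_nhds ht))
  rw [iteratedDeriv_succ]
  exact h2.hasDerivAt

lemma EvS.add {f g : ℝ → ℝ} (hf : EvS f) (hg : EvS g) : EvS (fun t => f t + g t) := by
  intro n
  obtain ⟨a, ha⟩ := hf n; obtain ⟨b, hb⟩ := hg n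
  exact ⟨max a b, ((ha.mono (Ioi_subset_Ioi (le_max_left a b))).add
    (hb.mono (Ioi_subset_Ioi (le_max_right a b))))⟩

lemma EvS.mul {f g : ℝ → ℝ} (hf : EvS f) (hg : EvS g) : EvS (fun t => f t * g t) := by
  intro n
  obtain ⟨a, ha⟩ := hf n; obtain ⟨b, hb⟩ := hg n
  exact ⟨max a b, ((ha.mono (Ioi_subset_Ioi (le_max_left a b))).mul
    (hb.mono (Ioi_subset_Ioi (le_max_right a b))))⟩

lemma EvS.neg {f : ℝ → ℝ} (hf : EvS f) : EvS (fun t => -f t) := by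
  intro n
  obtain ⟨a, ha⟩ := hf n
  exact ⟨a, ha.neg⟩

lemma EvS.sub {f g : ℝ → ℝ} (hf : EvS f) (hg : EvS g) : EvS (fun t => f t - g t) := by
  simpa [sub_eq_add_neg] using hf.add hg.neg

lemma EvS.inv {f : ℝ → ℝ} (hf : EvS f) (h0 : ∀ᶠ t in atTop, f t ≠ 0) :
    EvS (fun t => (f t)⁻¹) := by
  intro n
  obtain ⟨a, ha⟩ := hf n
  obtain ⟨b, hb⟩ := eventually_atTop.1 h0
  refine ⟨max a b, ContDiffOn.inv (ha.mono (Ioi_subset_Ioi (le_max_left a b))) ?_⟩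
  intro t ht
  exact hb t (le_of_lt (lt_of_le_of_lt (le_max_right a b) ht))

lemma EvS.deriv {f : ℝ → ℝ} (hf : EvS f) : EvS (fun t => deriv f t) := by
  intro n
  obtain ⟨a, ha⟩ := hf (n + 1)
  refine ⟨a, ?_⟩
  have := ha.deriv_of_isOpen isOpen_Ioi (m := n) (by push_cast; exact le_refl _)
  exact this

/-- eventual congruence lemma for iterated derivatives -/
lemma ev_iteratedDeriv_congr {f g : ℝ → ℝ} (h : ∀ᶠ t in atTop, f t = g t) (k : ℕ) :
    ∀ᶠ t in atTop, iteratedDeriv k f t = iteratedDeriv k g t := by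
  filter_upwards [ev_atTop_nhds h] with t ht
  exact Filter.EventuallyEq.iteratedDeriv_eq k ht

lemma EvS.congr {f g : ℝ → ℝ} (hf : EvS f) (h : ∀ᶠ t in atTop, f t = g t) : EvS g := by
  intro n
  obtain ⟨a, ha⟩ := hf n
  obtain ⟨b, hb⟩ := eventually_atTop.1 h
  refine ⟨max a b, (ha.mono (Ioi_subset_Ioi (le_max_left a b))).congr ?_⟩
  intro t ht
  exact (hb t (le_of_lt (lt_of_le_of_lt (le_max_right a b) ht))).symm

lemma evs_iteratedDeriv_add {f g : ℝ → ℝ} (hf : EvS f) (hg : EvS g) (k : ℕ) :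
    ∀ᶠ t in atTop, iteratedDeriv k (fun s => f s + g s) t
      = iteratedDeriv k f t + iteratedDeriv k g t := by
  obtain ⟨a, ha⟩ := hf k; obtain ⟨b, hb⟩ := hg k
  filter_upwards [eventually_gt_atTop (max a b)] with t ht
  have ht' : t ∈ Ioi (max a b) := ht
  rw [← iteratedDerivWithin_Ioi_eq ht' k, ← iteratedDerivWithin_Ioi_eq ht' k,
    ← iteratedDerivWithin_Ioi_eq ht' k]
  exact iteratedDerivWithin_add ht' isOpen_Ioi.uniqueDiffOn
    ((ha.mono (Ioi_subset_Ioi (le_max_left a b))) t ht')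
    ((hb.mono (Ioi_subset_Ioi (le_max_right a b))) t ht')

lemma pascal_sum (A B : ℕ → ℝ) (k : ℕ) :
    ∑ j ∈ Finset.range (k + 1),
        (k.choose j : ℝ) * (A (j + 1) * B (k - j) + A j * B (k - j + 1))
      = ∑ j ∈ Finset.range (k + 2), ((k + 1).choose j : ℝ) * (A j * B (k + 1 - j)) := by
  rw [Finset.sum_range_succ' (fun j => ((k + 1).choose j : ℝ) * (A j * B (k + 1 - j))) (k + 1)]
  have e1 : ∀ j ∈ Finset.range (k + 1),
      ((k + 1).choose (j + 1) : ℝ) * (A (j + 1) * B (k + 1 - (j + 1)))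
        = (k.choose j : ℝ) * (A (j + 1) * B (k - j))
          + (k.choose (j + 1) : ℝ) * (A (j + 1) * B (k - j)) := by
    intro j hj
    have : k + 1 - (j + 1) = k - j := by omega
    rw [this, Nat.choose_succ_succ]
    push_cast
    ring
  rw [Finset.sum_congr rfl e1, Finset.sum_add_distrib]
  have e2 : ∑ j ∈ Finset.range (k + 1), (k.choose j : ℝ) * (A j * B (k - j + 1))
      = ∑ j ∈ Finset.range (k + 1), (k.choose (j + 1) : ℝ) * (A (j + 1) * B (k - j))
        + ((k + 1).choose 0 : ℝ) * (A 0 * B (k + 1 - 0)) := by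
    rw [Finset.sum_range_succ (fun j => (k.choose (j + 1) : ℝ) * (A (j + 1) * B (k - j))) k]
    rw [Finset.sum_range_succ' (fun j => (k.choose j : ℝ) * (A j * B (k - j + 1))) k]
    have e3 : ∀ j ∈ Finset.range k,
        (k.choose (j + 1) : ℝ) * (A (j + 1) * B (k - (j + 1) + 1))
          = (k.choose (j + 1) : ℝ) * (A (j + 1) * B (k - j)) := by
      intro j hj
      simp only [Finset.mem_range] at hj
      have : k - (j + 1) + 1 = k - j := by omega
      rw [this]
    rw [Finset.sum_congr rfl e3]
    simp [Nat.choose_succ_self]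
  rw [show (∑ j ∈ Finset.range (k + 1),
        (k.choose j : ℝ) * (A (j + 1) * B (k - j) + A j * B (k - j + 1)))
      = ∑ j ∈ Finset.range (k + 1), ((k.choose j : ℝ) * (A (j + 1) * B (k - j))
          + (k.choose j : ℝ) * (A j * B (k - j + 1))) from Finset.sum_congr rfl (by intros; ring),
    Finset.sum_add_distrib, e2]
  ring

lemma evs_leibniz {f g : ℝ → ℝ} (hf : EvS f) (hg : EvS g) (k : ℕ) :
    ∀ᶠ t in atTop, iteratedDeriv k (fun s => f s * g s) t
      = ∑ j ∈ Finset.range (k + 1),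
          (k.choose j : ℝ) * (iteratedDeriv j f t * iteratedDeriv (k - j) g t) := by
  induction k with
  | zero => simp
  | succ k IH =>
    have h1 : ∀ᶠ t in atTop, ∀ j ∈ Finset.range (k + 2),
        HasDerivAt (iteratedDeriv j f) (iteratedDeriv (j + 1) f t) t :=
      (eventually_all_finset _).2 fun j _ => hf.hasDerivAt_iter j
    have h2 : ∀ᶠ t in atTop, ∀ j ∈ Finset.range (k + 2),
        HasDerivAt (iteratedDeriv j g) (iteratedDeriv (j + 1) g t) t :=
      (eventually_all_finset _).2 fun j _ => hg.hasDerivAt_iter j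
    filter_upwards [ev_atTop_nhds IH, h1, h2] with t hIH hf' hg'
    have hD : HasDerivAt (fun s => ∑ j ∈ Finset.range (k + 1), (k.choose j : ℝ) *
          (iteratedDeriv j f s * iteratedDeriv (k - j) g s))
        (∑ j ∈ Finset.range (k + 1), (k.choose j : ℝ) *
          (iteratedDeriv (j + 1) f t * iteratedDeriv (k - j) g t
            + iteratedDeriv j f t * iteratedDeriv (k - j + 1) g t)) t := by
      refine HasDerivAt.fun_sum fun j hj => ?_
      simp only [Finset.mem_range] at hj
      have hjf := hf' j (Finset.mem_range.2 (by omega))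
      have hjg := hg' (k - j) (Finset.mem_range.2 (by omega))
      exact (hjf.mul hjg).const_mul _
    have e0 : iteratedDeriv (k + 1) (fun s => f s * g s) t
        = deriv (iteratedDeriv k fun s => f s * g s) t := by rw [iteratedDeriv_succ]
    rw [e0, Filter.EventuallyEq.deriv_eq hIH, hD.deriv,
      pascal_sum (fun j => iteratedDeriv j f t) (fun j => iteratedDeriv j g t) k]

lemma iteratedDeriv_const' (k : ℕ) (c : ℝ) (t : ℝ) :
    iteratedDeriv k (fun _ : ℝ => c) t = if k = 0 then c else 0 := by
  induction k generalizing c t with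
  | zero => simp
  | succ k IH =>
    rw [iteratedDeriv_succ']
    simp only [deriv_const']
    rw [IH 0 t]
    simp

/-- controlled germs: `f` is eventually smooth, with `k`-th derivative `O(γ ⬝ b^k)`. -/
def Ctl (b γ f : ℝ → ℝ) : Prop :=
  EvS f ∧ ∀ k : ℕ, ∃ C : ℝ, 0 ≤ C ∧
    ∀ᶠ t in atTop, |iteratedDeriv k f t| ≤ C * (γ t * b t ^ k)

variable {b γ γ' f g : ℝ → ℝ}

lemma Ctl.mk' (hb : ∀ᶠ t in atTop, 0 ≤ b t) (hγ : ∀ᶠ t in atTop, 0 ≤ γ t) (hsm : EvS f)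
    (h : ∀ k, ∃ C, ∀ᶠ t in atTop, |iteratedDeriv k f t| ≤ C * (γ t * b t ^ k)) :
    Ctl b γ f := by
  refine ⟨hsm, fun k => ?_⟩
  obtain ⟨C, hC⟩ := h k
  refine ⟨max C 0, le_max_right _ _, ?_⟩
  filter_upwards [hb, hγ, hC] with t h1 h2 h3
  have h4 : 0 ≤ γ t * b t ^ k := mul_nonneg h2 (pow_nonneg h1 k)
  nlinarith [le_max_left C 0]

lemma Ctl.uniform (hb : ∀ᶠ t in atTop, 0 ≤ b t) (hγ : ∀ᶠ t in atTop, 0 ≤ γ t)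
    (hf : Ctl b γ f) (K : ℕ) :
    ∃ C : ℝ, 0 ≤ C ∧ ∀ᶠ t in atTop, ∀ k ≤ K,
      |iteratedDeriv k f t| ≤ C * (γ t * b t ^ k) := by
  induction K with
  | zero =>
    obtain ⟨C, hC0, hC⟩ := hf.2 0
    exact ⟨C, hC0, by filter_upwards [hC] with t ht k hk; rw [Nat.le_zero.1 hk]; exact ht⟩
  | succ K IH =>
    obtain ⟨C, hC0, hC⟩ := IH
    obtain ⟨C', hC'0, hC'⟩ := hf.2 (K + 1)
    refine ⟨max C C', le_trans hC0 (le_max_left _ _), ?_⟩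
    filter_upwards [hb, hγ, hC, hC'] with t h1 h2 h3 h4 k hk
    have h5 : 0 ≤ γ t * b t ^ k := mul_nonneg h2 (pow_nonneg h1 k)
    rcases Nat.lt_or_ge k (K + 1) with h | h
    · exact le_trans (h3 k (by omega)) (by nlinarith [le_max_left C C'])
    · have : k = K + 1 := by omega
      subst this
      exact le_trans h4 (by nlinarith [le_max_right C C'])

lemma Ctl.mono (hb : ∀ᶠ t in atTop, 0 ≤ b t) (hf : Ctl b γ f) {K : ℝ} (hK : 0 ≤ K)
    (h : ∀ᶠ t in atTop, γ t ≤ K * γ' t) : Ctl b γ' f := by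
  refine ⟨hf.1, fun k => ?_⟩
  obtain ⟨C, hC0, hC⟩ := hf.2 k
  refine ⟨C * K, mul_nonneg hC0 hK, ?_⟩
  filter_upwards [hb, hC, h] with t h1 h2 h3
  have h4 : 0 ≤ b t ^ k := pow_nonneg h1 k
  have h5 := mul_le_mul_of_nonneg_left (mul_le_mul_of_nonneg_right h3 h4) hC0
  calc |iteratedDeriv k f t| ≤ C * (γ t * b t ^ k) := h2
    _ ≤ C * K * (γ' t * b t ^ k) := by linarith

lemma Ctl.add (hb : ∀ᶠ t in atTop, 0 ≤ b t) (hγ : ∀ᶠ t in atTop, 0 ≤ γ t)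
    (hf : Ctl b γ f) (hg : Ctl b γ g) : Ctl b γ (fun t => f t + g t) := by
  refine Ctl.mk' hb hγ (hf.1.add hg.1) fun k => ?_
  obtain ⟨C, _, hC⟩ := hf.2 k
  obtain ⟨C', _, hC'⟩ := hg.2 k
  refine ⟨C + C', ?_⟩
  filter_upwards [hC, hC', evs_iteratedDeriv_add hf.1 hg.1 k] with t h1 h2 h3
  rw [h3]
  calc |iteratedDeriv k f t + iteratedDeriv k g t|
      ≤ |iteratedDeriv k f t| + |iteratedDeriv k g t| := abs_add_le _ _
    _ ≤ C * (γ t * b t ^ k) + C' * (γ t * b t ^ k) := add_le_add h1 h2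
    _ = (C + C') * (γ t * b t ^ k) := by ring

lemma Ctl.neg (hf : Ctl b γ f) : Ctl b γ (fun t => -f t) := by
  refine ⟨hf.1.neg, fun k => ?_⟩
  obtain ⟨C, hC0, hC⟩ := hf.2 k
  refine ⟨C, hC0, ?_⟩
  filter_upwards [hC] with t h1
  rw [iteratedDeriv_fun_neg, abs_neg]
  exact h1

lemma Ctl.sub (hb : ∀ᶠ t in atTop, 0 ≤ b t) (hγ : ∀ᶠ t in atTop, 0 ≤ γ t)
    (hf : Ctl b γ f) (hg : Ctl b γ g) : Ctl b γ (fun t => f t - g t) := by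
  have := hf.add hb hγ hg.neg
  refine ⟨this.1.congr (Eventually.of_forall fun t => by ring), fun k => ?_⟩
  obtain ⟨C, hC0, hC⟩ := this.2 k
  refine ⟨C, hC0, ?_⟩
  filter_upwards [hC] with t h1
  have e : (fun t => f t + -g t) = fun t => f t - g t := by funext s; ring
  rw [e] at h1
  exact h1

lemma Ctl.congr (hf : Ctl b γ f) (h : ∀ᶠ t in atTop, f t = g t) : Ctl b γ g := by
  refine ⟨hf.1.congr h, fun k => ?_⟩
  obtain ⟨C, hC0, hC⟩ := hf.2 k
  refine ⟨C, hC0, ?_⟩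
  filter_upwards [hC, ev_iteratedDeriv_congr h k] with t h1 h2
  rw [← h2]; exact h1

lemma Ctl.mul (hb : ∀ᶠ t in atTop, 1 ≤ b t) (hγ : ∀ᶠ t in atTop, 0 ≤ γ t)
    (hγ' : ∀ᶠ t in atTop, 0 ≤ γ' t) (hf : Ctl b γ f) (hg : Ctl b γ' g) :
    Ctl b (fun t => γ t * γ' t) (fun t => f t * g t) := by
  have hb0 : ∀ᶠ t in atTop, 0 ≤ b t := by filter_upwards [hb] with t h using le_trans zero_le_one h
  refine Ctl.mk' hb0 (by filter_upwards [hγ, hγ'] with t h1 h2 using mul_nonneg h1 h2)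
    (hf.1.mul hg.1) fun k => ?_
  obtain ⟨Cf, hCf0, hCf⟩ := hf.uniform hb0 hγ k
  obtain ⟨Cg, hCg0, hCg⟩ := hg.uniform hb0 hγ' k
  refine ⟨∑ j ∈ Finset.range (k + 1), (k.choose j : ℝ) * (Cf * Cg), ?_⟩
  filter_upwards [hb0, hγ, hγ', hCf, hCg, evs_leibniz hf.1 hg.1 k] with t h1 h2 h3 h4 h5 h6
  rw [h6]
  have key : ∀ j ∈ Finset.range (k + 1),
      |(k.choose j : ℝ) * (iteratedDeriv j f t * iteratedDeriv (k - j) g t)|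
        ≤ (k.choose j : ℝ) * (Cf * Cg) * (γ t * γ' t * b t ^ k) := by
    intro j hj
    simp only [Finset.mem_range] at hj
    have hj' : j ≤ k := by omega
    have e1 := h4 j hj'
    have e2 := h5 (k - j) (by omega)
    have hbk : 0 ≤ b t ^ j := pow_nonneg h1 j
    have hbk' : 0 ≤ b t ^ (k - j) := pow_nonneg h1 (k - j)
    have step : |iteratedDeriv j f t| * |iteratedDeriv (k - j) g t|
        ≤ (Cf * (γ t * b t ^ j)) * (Cg * (γ' t * b t ^ (k - j))) :=
      mul_le_mul e1 e2 (abs_nonneg _) (le_trans (abs_nonneg _) e1)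
    have epow : b t ^ j * b t ^ (k - j) = b t ^ k := by
      rw [← pow_add]; congr 1; omega
    rw [abs_mul, abs_mul, Nat.abs_cast]
    calc (k.choose j : ℝ) * (|iteratedDeriv j f t| * |iteratedDeriv (k - j) g t|)
        ≤ (k.choose j : ℝ) * ((Cf * (γ t * b t ^ j)) * (Cg * (γ' t * b t ^ (k - j)))) := by
          have := Nat.cast_nonneg (α := ℝ) (k.choose j)
          nlinarith [mul_le_mul_of_nonneg_left step this]
      _ = (k.choose j : ℝ) * (Cf * Cg) * (γ t * γ' t * (b t ^ j * b t ^ (k - j))) := by ring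
      _ = (k.choose j : ℝ) * (Cf * Cg) * (γ t * γ' t * b t ^ k) := by rw [epow]
  calc |∑ j ∈ Finset.range (k + 1),
        (k.choose j : ℝ) * (iteratedDeriv j f t * iteratedDeriv (k - j) g t)|
      ≤ ∑ j ∈ Finset.range (k + 1),
        |(k.choose j : ℝ) * (iteratedDeriv j f t * iteratedDeriv (k - j) g t)| :=
        Finset.abs_sum_le_sum_abs _ _
    _ ≤ ∑ j ∈ Finset.range (k + 1), (k.choose j : ℝ) * (Cf * Cg) * (γ t * γ' t * b t ^ k) :=
        Finset.sum_le_sum key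
    _ = (∑ j ∈ Finset.range (k + 1), (k.choose j : ℝ) * (Cf * Cg)) * (γ t * γ' t * b t ^ k) := by
        rw [Finset.sum_mul]

lemma Ctl.deriv' (hf : Ctl b γ f) : Ctl b (fun t => γ t * b t) (fun t => deriv f t) := by
  refine ⟨hf.1.deriv, fun k => ?_⟩
  obtain ⟨C, hC0, hC⟩ := hf.2 (k + 1)
  refine ⟨C, hC0, ?_⟩
  filter_upwards [hC] with t h1
  have e : iteratedDeriv k (fun t => deriv f t) t = iteratedDeriv (k + 1) f t := by
    rw [iteratedDeriv_succ']
  rw [e]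
  calc |iteratedDeriv (k + 1) f t| ≤ C * (γ t * b t ^ (k + 1)) := h1
    _ = C * (γ t * b t * b t ^ k) := by ring

lemma Ctl.inv (hb : ∀ᶠ t in atTop, 1 ≤ b t) (hγ : ∀ᶠ t in atTop, 0 < γ t)
    {ε : ℝ} (hε : 0 < ε) (hlow : ∀ᶠ t in atTop, ε * γ t ≤ f t) (hf : Ctl b γ f) :
    Ctl b (fun t => (γ t)⁻¹) (fun t => (f t)⁻¹) := by
  have hb0 : ∀ᶠ t in atTop, 0 ≤ b t := by filter_upwards [hb] with t h using le_trans zero_le_one h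
  have hγ0 : ∀ᶠ t in atTop, 0 ≤ γ t := by filter_upwards [hγ] with t h using le_of_lt h
  have hfpos : ∀ᶠ t in atTop, 0 < f t := by
    filter_upwards [hγ, hlow] with t h1 h2 using lt_of_lt_of_le (mul_pos hε h1) h2
  have hsm : EvS (fun t => (f t)⁻¹) :=
    hf.1.inv (by filter_upwards [hfpos] with t h using ne_of_gt h)
  have hone : ∀ᶠ t in atTop, f t * (f t)⁻¹ = 1 := by
    filter_upwards [hfpos] with t h using mul_inv_cancel₀ (ne_of_gt h)
  have main : ∀ K : ℕ, ∃ C : ℝ, 0 ≤ C ∧ ∀ᶠ t in atTop, ∀ k ≤ K,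
      |iteratedDeriv k (fun t => (f t)⁻¹) t| ≤ C * ((γ t)⁻¹ * b t ^ k) := by
    intro K
    induction K with
    | zero =>
      refine ⟨ε⁻¹, le_of_lt (inv_pos.2 hε), ?_⟩
      filter_upwards [hγ, hlow, hfpos] with t h1 h2 h3 k hk
      rw [Nat.le_zero.1 hk]
      simp only [iteratedDeriv_zero, pow_zero, mul_one]
      rw [abs_of_pos (inv_pos.2 h3)]
      calc (f t)⁻¹ ≤ (ε * γ t)⁻¹ := by
            apply inv_anti₀ (mul_pos hε h1) h2
        _ = ε⁻¹ * (γ t)⁻¹ := by rw [mul_inv]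
    | succ K IH =>
      obtain ⟨C, hC0, hC⟩ := IH
      obtain ⟨Cf, hCf0, hCf⟩ := hf.uniform hb0 hγ0 (K + 1)
      set M : ℝ := ∑ j ∈ Finset.range (K + 1), ((K + 1).choose (j + 1) : ℝ) * (Cf * C) with hM
      have hM0 : 0 ≤ M :=
        Finset.sum_nonneg fun j _ => mul_nonneg (Nat.cast_nonneg _) (mul_nonneg hCf0 hC0)
      refine ⟨max C (M / ε), le_trans hC0 (le_max_left _ _), ?_⟩
      filter_upwards [hb, hγ, hlow, hfpos, hC, hCf,
        evs_leibniz hf.1 hsm (K + 1), ev_iteratedDeriv_congr hone (K + 1)]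
        with t h1 h2 h3 h4 h5 h6 h7 h8 k hk
      have hbt0 : (0:ℝ) ≤ b t := le_trans zero_le_one h1
      have hpos : 0 < (γ t)⁻¹ * b t ^ k := by positivity
      rcases Nat.lt_or_ge k (K + 1) with hlt | hge
      · exact le_trans (h5 k (by omega))
          (mul_le_mul_of_nonneg_right (le_max_left _ _) (le_of_lt hpos))
      · have hkK : k = K + 1 := by omega
        subst hkK
        -- the Leibniz identity for f * f⁻¹ = 1
        have hzero : (∑ j ∈ Finset.range (K + 2), ((K + 1).choose j : ℝ) *
            (iteratedDeriv j f t * iteratedDeriv (K + 1 - j) (fun s => (f s)⁻¹) t)) = 0 := by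
          rw [← h7, h8, iteratedDeriv_const']
          simp
        rw [Finset.sum_range_succ' (fun j => ((K + 1).choose j : ℝ) *
            (iteratedDeriv j f t * iteratedDeriv (K + 1 - j) (fun s => (f s)⁻¹) t)) (K + 1)]
          at hzero
        simp only [Nat.choose_zero_right, Nat.cast_one, one_mul, Nat.sub_zero,
          iteratedDeriv_zero] at hzero
        set X := iteratedDeriv (K + 1) (fun s => (f s)⁻¹) t with hX
        set S := ∑ j ∈ Finset.range (K + 1), ((K + 1).choose (j + 1) : ℝ) *
            (iteratedDeriv (j + 1) f t * iteratedDeriv (K + 1 - (j + 1)) (fun s => (f s)⁻¹) t)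
          with hS
        have hfX : f t * X = -S := by linarith [hzero]
        have hSbound : |S| ≤ M * b t ^ (K + 1) := by
          rw [hS, hM, Finset.sum_mul]
          refine le_trans (Finset.abs_sum_le_sum_abs _ _) (Finset.sum_le_sum ?_)
          intro j hj
          simp only [Finset.mem_range] at hj
          have e1 := h6 (j + 1) (by omega)
          have e2 := h5 (K + 1 - (j + 1)) (by omega)
          have step : |iteratedDeriv (j + 1) f t| *
              |iteratedDeriv (K + 1 - (j + 1)) (fun s => (f s)⁻¹) t|
              ≤ (Cf * (γ t * b t ^ (j + 1))) * (C * ((γ t)⁻¹ * b t ^ (K + 1 - (j + 1)))) :=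
            mul_le_mul e1 e2 (abs_nonneg _) (le_trans (abs_nonneg _) e1)
          have epow : b t ^ (j + 1) * b t ^ (K + 1 - (j + 1)) = b t ^ (K + 1) := by
            rw [← pow_add]; congr 1; omega
          have einv : γ t * (γ t)⁻¹ = 1 := mul_inv_cancel₀ (ne_of_gt h2)
          rw [abs_mul, abs_mul, Nat.abs_cast]
          calc ((K + 1).choose (j + 1) : ℝ) * (|iteratedDeriv (j + 1) f t| *
                |iteratedDeriv (K + 1 - (j + 1)) (fun s => (f s)⁻¹) t|)
              ≤ ((K + 1).choose (j + 1) : ℝ) * ((Cf * (γ t * b t ^ (j + 1))) *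
                (C * ((γ t)⁻¹ * b t ^ (K + 1 - (j + 1))))) :=
                mul_le_mul_of_nonneg_left step (Nat.cast_nonneg _)
            _ = ((K + 1).choose (j + 1) : ℝ) * (Cf * C) * (γ t * (γ t)⁻¹) *
                (b t ^ (j + 1) * b t ^ (K + 1 - (j + 1))) := by ring
            _ = ((K + 1).choose (j + 1) : ℝ) * (Cf * C) * b t ^ (K + 1) := by
                rw [einv, epow]; ring
        have hXeq : X = -S / f t := by
          field_simp [ne_of_gt h4] at hfX ⊢
          linarith [hfX]
        have hXb : |X| ≤ (M / ε) * ((γ t)⁻¹ * b t ^ (K + 1)) := by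
          rw [hXeq, abs_div, abs_neg, abs_of_pos h4]
          have h9 : |S| / f t ≤ |S| / (ε * γ t) :=
            div_le_div_of_nonneg_left (abs_nonneg _) (mul_pos hε h2) h3
          refine le_trans h9 ?_
          rw [div_le_iff₀ (mul_pos hε h2)]
          calc |S| ≤ M * b t ^ (K + 1) := hSbound
            _ = M / ε * ((γ t)⁻¹ * b t ^ (K + 1)) * (ε * γ t) := by
                field_simp
        exact le_trans hXb
          (mul_le_mul_of_nonneg_right (le_max_right _ _) (le_of_lt hpos))
  refine ⟨hsm, fun k => ?_⟩
  obtain ⟨C, hC0, hC⟩ := main k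
  exact ⟨C, hC0, by filter_upwards [hC] with t ht using ht k le_rfl⟩

/-! ### Facts about the sequence of iterated logarithmic derivatives -/

section ZFacts

variable {Z : ℕ → ℝ → ℝ}
  (hd : ∀ n, ∀ᶠ t in atTop, HasDerivAt (Z n) (Z n t * Z (n + 1) t) t)
  (hp : ∀ n, ∀ᶠ t in atTop, 0 < Z n t)
  (hl : ∀ n, ∀ᶠ t in atTop, Z (n + 1) t < Z n t)

/-- an eventually increasing, eventually positive function has an eventual
positive lower bound -/
lemma ev_lb {f f' : ℝ → ℝ} (hdf : ∀ᶠ t in atTop, HasDerivAt f (f' t) t)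
    (h0 : ∀ᶠ t in atTop, 0 ≤ f' t) (hpf : ∀ᶠ t in atTop, 0 < f t) :
    ∃ c : ℝ, 0 < c ∧ ∀ᶠ t in atTop, c ≤ f t := by
  obtain ⟨a, ha⟩ := eventually_atTop.1 (hdf.and (h0.and hpf))
  have hmono : MonotoneOn f (Ici a) :=
    monoOn_of_hasDerivAt (fun t ht => (ha t ht).1) (fun t ht => (ha t ht).2.1)
  refine ⟨f a, (ha a le_rfl).2.2, ?_⟩
  filter_upwards [eventually_ge_atTop a] with t ht
  exact hmono self_mem_Ici ht ht

include hd hp hl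

lemma Z_lb : ∀ n, ∃ c : ℝ, 0 < c ∧ ∀ᶠ t in atTop, c ≤ Z n t := by
  intro n
  refine ev_lb (hd n) ?_ (hp n)
  filter_upwards [hp n, hp (n + 1)] with t h1 h2 using le_of_lt (mul_pos h1 h2)

lemma Z_tendsto : ∀ n, Tendsto (Z n) atTop atTop := by
  intro n
  obtain ⟨c, hc, hcZ⟩ := Z_lb hd hp hl (n + 1)
  obtain ⟨c', hc', hc'Z⟩ := Z_lb hd hp hl n
  refine tendsto_atTop_of_hasDerivAt_ge (mul_pos hc' hc) (hd n) ?_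
  filter_upwards [hcZ, hc'Z, hp n, hp (n + 1)] with t h1 h2 h3 h4
  calc c' * c ≤ Z n t * Z (n + 1) t := by
        exact mul_le_mul h2 h1 (le_of_lt hc) (le_of_lt h3)

/-- key growth lemma: `Z n` eventually dominates any power of `Z (n+1)` -/
lemma Z_ratio_pow : ∀ n m, Tendsto (fun t => Z n t / Z (n + 1) t ^ m) atTop atTop := by
  have base : ∀ n, Tendsto (fun t => Z n t / Z (n + 1) t) atTop atTop := by
    intro n
    -- the difference Z (n+1) - Z (n+2) has an eventual positive lower bound
    have hdiffd : ∀ᶠ t in atTop,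
        HasDerivAt (fun s => Z (n + 1) s - Z (n + 2) s)
          (Z (n + 1) t * Z (n + 2) t - Z (n + 2) t * Z (n + 3) t) t := by
      filter_upwards [hd (n + 1), hd (n + 2)] with t h1 h2 using h1.sub h2
    obtain ⟨c, hc, hcev⟩ := ev_lb hdiffd
      (by filter_upwards [hp (n + 2), hl (n + 1), hl (n + 2)] with t h1 h2 h3; nlinarith)
      (by filter_upwards [hl (n + 1)] with t h1; linarith)
    -- hence log (Z n) - log (Z (n+1)) → ∞
    have hlog : Tendsto (fun t => Real.log (Z n t) - Real.log (Z (n + 1) t)) atTop atTop := by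
      refine tendsto_atTop_of_hasDerivAt_ge hc ?_
        (by filter_upwards [hcev] with t h using h)
      filter_upwards [hd n, hd (n + 1), hp n, hp (n + 1)] with t h1 h2 h3 h4
      have e1 : HasDerivAt (fun s => Real.log (Z n s))
          (Z n t * Z (n + 1) t / Z n t) t := h1.log (ne_of_gt h3)
      have e2 : HasDerivAt (fun s => Real.log (Z (n + 1) s))
          (Z (n + 1) t * Z (n + 2) t / Z (n + 1) t) t := h2.log (ne_of_gt h4)
      have v1 : Z n t * Z (n + 1) t / Z n t = Z (n + 1) t := by
        field_simp
      have v2 : Z (n + 1) t * Z (n + 2) t / Z (n + 1) t = Z (n + 2) t := by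
        field_simp
      rw [v1] at e1; rw [v2] at e2
      exact e1.sub e2
    refine (Real.tendsto_exp_atTop.comp hlog).congr' ?_
    filter_upwards [hp n, hp (n + 1)] with t h1 h2
    simp only [Function.comp]
    rw [Real.exp_sub, Real.exp_log h1, Real.exp_log h2]
  intro n m
  -- now the general case
  obtain ⟨c, hc, hcev⟩ := Z_lb hd hp hl (n + 1)
  have hsmall : ∀ᶠ t in atTop, (m : ℝ) * Z (n + 2) t ≤ Z (n + 1) t / 2 := by
    have := (base (n + 1)).eventually_ge_atTop (2 * (m + 1) : ℝ)
    filter_upwards [this, hp (n + 2), hp (n + 1)] with t h1 h2 h3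
    rw [le_div_iff₀ (show (0:ℝ) < Z (n + 1 + 1) t from h2)] at h1
    have h1' : 2 * ((m : ℝ) + 1) * Z (n + 2) t ≤ Z (n + 1) t := h1
    nlinarith [Nat.cast_nonneg (α := ℝ) m]
  have hlog : Tendsto (fun t => Real.log (Z n t) - m * Real.log (Z (n + 1) t)) atTop atTop := by
    refine tendsto_atTop_of_hasDerivAt_ge
      (f' := fun t => Z (n + 1) t - m * Z (n + 2) t) (half_pos hc) ?_ ?_
    · filter_upwards [hd n, hd (n + 1), hp n, hp (n + 1)] with t h1 h2 h3 h4
      have e1 : HasDerivAt (fun s => Real.log (Z n s))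
          (Z n t * Z (n + 1) t / Z n t) t := h1.log (ne_of_gt h3)
      have e2 : HasDerivAt (fun s => Real.log (Z (n + 1) s))
          (Z (n + 1) t * Z (n + 2) t / Z (n + 1) t) t := h2.log (ne_of_gt h4)
      have v1 : Z n t * Z (n + 1) t / Z n t = Z (n + 1) t := by field_simp
      have v2 : Z (n + 1) t * Z (n + 2) t / Z (n + 1) t = Z (n + 2) t := by field_simp
      rw [v1] at e1; rw [v2] at e2
      exact e1.sub ((e2.const_mul (m : ℝ)))
    · filter_upwards [hsmall, hcev] with t h1 h2
      linarith
  refine (Real.tendsto_exp_atTop.comp hlog).congr' ?_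
  filter_upwards [hp n, hp (n + 1)] with t h1 h2
  simp only [Function.comp]
  rw [Real.exp_sub, Real.exp_log h1, ← Real.log_pow, Real.exp_log (pow_pos h2 m)]

lemma Z_le_one' : ∀ m, 1 ≤ m → ∀ᶠ t in atTop, Z m t ≤ Z 1 t := by
  intro m hm
  induction m with
  | zero => omega
  | succ m IH =>
    rcases Nat.lt_or_ge m 1 with h | h
    · have : m = 0 := by omega
      subst this
      exact Eventually.of_forall fun t => le_rfl
    · filter_upwards [IH h, hl m] with t h1 h2
      linarith

lemma Z_deriv_eq : ∀ n, ∀ᶠ t in atTop, deriv (Z n) t = Z n t * Z (n + 1) t := by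
  intro n
  filter_upwards [hd n] with t h using h.deriv

lemma Z_evS : ∀ n, EvS (Z n) := by
  have key : ∀ m : ℕ, ∀ n : ℕ, ∃ a : ℝ, ContDiffOn ℝ m (Z n) (Ioi a) := by
    intro m
    induction m with
    | zero =>
      intro n
      obtain ⟨a, ha⟩ := eventually_atTop.1 (hd n)
      refine ⟨a, ?_⟩
      rw [show ((0 : ℕ) : WithTop ℕ∞) = 0 from rfl, contDiffOn_zero]
      exact fun t ht => ((ha t (le_of_lt ht)).differentiableAt.continuousAt).continuousWithinAt
    | succ m IH =>
      intro n
      obtain ⟨a1, ha1⟩ := IH n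
      obtain ⟨a2, ha2⟩ := IH (n + 1)
      obtain ⟨a3, ha3⟩ := eventually_atTop.1 (hd n)
      refine ⟨max a1 (max a2 a3), ?_⟩
      rw [show ((m + 1 : ℕ) : WithTop ℕ∞) = (m : WithTop ℕ∞) + 1 by push_cast; rfl]
      rw [contDiffOn_succ_iff_deriv_of_isOpen isOpen_Ioi]
      refine ⟨?_, ?_, ?_⟩
      · intro t ht
        exact (ha3 t (le_of_lt (lt_of_le_of_lt (le_max_of_le_right (le_max_right a2 a3)) ht)))
          |>.differentiableAt.differentiableWithinAt
      · intro h
        exact absurd h (by simp)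
      · have hprod : ContDiffOn ℝ m (fun t => Z n t * Z (n + 1) t) (Ioi (max a1 (max a2 a3))) :=
          (ha1.mono (Ioi_subset_Ioi (le_max_left _ _))).mul
            (ha2.mono (Ioi_subset_Ioi (le_max_of_le_right (le_max_left a2 a3))))
        refine hprod.congr ?_
        intro t ht
        exact (ha3 t (le_of_lt (lt_of_le_of_lt (le_max_of_le_right (le_max_right a2 a3)) ht))).deriv
  intro n m
  exact key m n

lemma Z_ctl : ∀ n, Ctl (Z 1) (Z n) (Z n) := by
  have hb0 : ∀ᶠ t in atTop, 0 ≤ Z 1 t := (hp 1).mono fun t h => le_of_lt h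
  have key : ∀ k : ℕ, ∀ n : ℕ, ∃ C : ℝ, 0 ≤ C ∧ ∀ᶠ t in atTop, ∀ j ≤ k,
      |iteratedDeriv j (Z n) t| ≤ C * (Z n t * Z 1 t ^ j) := by
    intro k
    induction k with
    | zero =>
      intro n
      refine ⟨1, zero_le_one, ?_⟩
      filter_upwards [hp n] with t h1 j hj
      rw [Nat.le_zero.1 hj, iteratedDeriv_zero, abs_of_pos h1]
      simp
    | succ k IH =>
      intro n
      obtain ⟨C1, hC10, hC1⟩ := IH n
      obtain ⟨C2, hC20, hC2⟩ := IH (n + 1)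
      set M : ℝ := ∑ j ∈ Finset.range (k + 1), (k.choose j : ℝ) * (C1 * C2) with hM
      have hM0 : 0 ≤ M :=
        Finset.sum_nonneg fun j _ => mul_nonneg (Nat.cast_nonneg _) (mul_nonneg hC10 hC20)
      refine ⟨max C1 M, le_trans hC10 (le_max_left _ _), ?_⟩
      have hcongr : ∀ᶠ t in atTop,
          iteratedDeriv k (deriv (Z n)) t
            = iteratedDeriv k (fun s => Z n s * Z (n + 1) s) t :=
        ev_iteratedDeriv_congr (Z_deriv_eq hd hp hl n) k
      filter_upwards [hp n, hp (n + 1), hb0, hC1, hC2, hcongr,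
        evs_leibniz (Z_evS hd hp hl n) (Z_evS hd hp hl (n + 1)) k, Z_le_one' hd hp hl (n + 1) (by omega),
        (hp 1)] with t h1 h2 h3 h4 h5 h6 h7 h8 h9 j hj
      have hZn0 : 0 ≤ Z n t := le_of_lt h1
      rcases Nat.lt_or_ge j (k + 1) with hlt | hge
      · refine le_trans (h4 j (by omega)) ?_
        have : 0 ≤ Z n t * Z 1 t ^ j := mul_nonneg hZn0 (pow_nonneg h3 j)
        nlinarith [le_max_left C1 M]
      · have hj' : j = k + 1 := by omega
        subst hj'
        have e0 : iteratedDeriv (k + 1) (Z n) t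
            = iteratedDeriv k (fun s => Z n s * Z (n + 1) s) t := by
          rw [iteratedDeriv_succ', h6]
        rw [e0, h7]
        have key2 : ∀ j ∈ Finset.range (k + 1),
            |(k.choose j : ℝ) * (iteratedDeriv j (Z n) t * iteratedDeriv (k - j) (Z (n + 1)) t)|
              ≤ (k.choose j : ℝ) * (C1 * C2) * (Z n t * Z 1 t ^ (k + 1)) := by
          intro j hjm
          simp only [Finset.mem_range] at hjm
          have e1 := h4 j (by omega)
          have e2 := h5 (k - j) (by omega)
          have step : |iteratedDeriv j (Z n) t| * |iteratedDeriv (k - j) (Z (n + 1)) t|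
              ≤ (C1 * (Z n t * Z 1 t ^ j)) * (C2 * (Z (n + 1) t * Z 1 t ^ (k - j))) :=
            mul_le_mul e1 e2 (abs_nonneg _) (le_trans (abs_nonneg _) e1)
          have epow : Z 1 t ^ j * Z 1 t ^ (k - j) = Z 1 t ^ k := by
            rw [← pow_add]; congr 1; omega
          rw [abs_mul, abs_mul, Nat.abs_cast]
          calc (k.choose j : ℝ) *
                (|iteratedDeriv j (Z n) t| * |iteratedDeriv (k - j) (Z (n + 1)) t|)
              ≤ (k.choose j : ℝ) *
                ((C1 * (Z n t * Z 1 t ^ j)) * (C2 * (Z (n + 1) t * Z 1 t ^ (k - j)))) :=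
                mul_le_mul_of_nonneg_left step (Nat.cast_nonneg _)
            _ = (k.choose j : ℝ) * (C1 * C2) *
                (Z n t * (Z 1 t ^ j * Z 1 t ^ (k - j)) * Z (n + 1) t) := by ring
            _ = (k.choose j : ℝ) * (C1 * C2) * (Z n t * Z 1 t ^ k * Z (n + 1) t) := by rw [epow]
            _ ≤ (k.choose j : ℝ) * (C1 * C2) * (Z n t * Z 1 t ^ k * Z 1 t) := by
                have hnn : (0:ℝ) ≤ (k.choose j : ℝ) * (C1 * C2) :=
                  mul_nonneg (Nat.cast_nonneg _) (mul_nonneg hC10 hC20)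
                have hzz : Z n t * Z 1 t ^ k * Z (n + 1) t ≤ Z n t * Z 1 t ^ k * Z 1 t := by
                  apply mul_le_mul_of_nonneg_left h8
                  exact mul_nonneg hZn0 (pow_nonneg h3 k)
                exact mul_le_mul_of_nonneg_left hzz hnn
            _ = (k.choose j : ℝ) * (C1 * C2) * (Z n t * Z 1 t ^ (k + 1)) := by ring
        calc |∑ j ∈ Finset.range (k + 1), (k.choose j : ℝ) *
              (iteratedDeriv j (Z n) t * iteratedDeriv (k - j) (Z (n + 1)) t)|
            ≤ ∑ j ∈ Finset.range (k + 1), |(k.choose j : ℝ) *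
              (iteratedDeriv j (Z n) t * iteratedDeriv (k - j) (Z (n + 1)) t)| :=
              Finset.abs_sum_le_sum_abs _ _
          _ ≤ ∑ j ∈ Finset.range (k + 1),
              (k.choose j : ℝ) * (C1 * C2) * (Z n t * Z 1 t ^ (k + 1)) :=
              Finset.sum_le_sum key2
          _ = M * (Z n t * Z 1 t ^ (k + 1)) := by rw [hM, Finset.sum_mul]
          _ ≤ max C1 M * (Z n t * Z 1 t ^ (k + 1)) := by
              apply mul_le_mul_of_nonneg_right (le_max_right _ _)
              exact mul_nonneg hZn0 (pow_nonneg h3 (k + 1))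
  intro n
  refine ⟨Z_evS hd hp hl n, fun k => ?_⟩
  obtain ⟨C, hC0, hC⟩ := key k n
  exact ⟨C, hC0, by filter_upwards [hC] with t ht using ht k le_rfl⟩

end ZFacts

/-! ### The perturbed sequence -/

lemma EvS.evDiff {f : ℝ → ℝ} (hf : EvS f) : ∀ᶠ t in atTop, DifferentiableAt ℝ f t := by
  obtain ⟨a, ha⟩ := hf 1
  filter_upwards [eventually_gt_atTop a] with t ht
  have := (ha.differentiableOn (by simp)) t ht
  exact this.differentiableAt (isOpen_Ioi.mem_nhds ht)

lemma evS_of_contDiffAt {f : ℝ → ℝ} (h : ∀ n : ℕ, ∀ᶠ t in atTop, ContDiffAt ℝ n f t) :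
    EvS f := by
  intro n
  obtain ⟨a, ha⟩ := eventually_atTop.1 (h n)
  exact ⟨a, fun t ht => (ha t (le_of_lt ht)).contDiffWithinAt⟩

noncomputable def Wseq (h F : ℝ → ℝ) : ℕ → ℝ → ℝ
  | 0 => fun t => h t + F t
  | (n + 1) => fun t => deriv (Wseq h F n) t / Wseq h F n t

noncomputable def gseq (Z : ℕ → ℝ → ℝ) : ℕ → ℝ → ℝ
  | 0 => fun _ => 1
  | (n + 1) => fun t => gseq Z n t * Z 1 t * (Z n t)⁻¹

section Main

variable {Z : ℕ → ℝ → ℝ}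
  (hd : ∀ n, ∀ᶠ t in atTop, HasDerivAt (Z n) (Z n t * Z (n + 1) t) t)
  (hp : ∀ n, ∀ᶠ t in atTop, 0 < Z n t)
  (hl : ∀ n, ∀ᶠ t in atTop, Z (n + 1) t < Z n t)

include hd hp hl

lemma g_pos : ∀ n, ∀ᶠ t in atTop, 0 < gseq Z n t := by
  intro n
  induction n with
  | zero => exact Eventually.of_forall fun t => one_pos
  | succ n IH =>
    filter_upwards [IH, hp 1, hp n] with t h1 h2 h3
    exact mul_pos (mul_pos h1 h2) (inv_pos.2 h3)

lemma g_bound : ∀ n, ∀ C : ℝ, ∀ᶠ t in atTop, C * gseq Z n t ≤ Z n t := by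
  have gup : ∀ n, ∀ᶠ t in atTop, gseq Z (n + 1) t ≤ Z 1 t ^ (n + 1) * (Z 0 t)⁻¹ := by
    intro n
    induction n with
    | zero =>
      apply Eventually.of_forall
      intro t
      simp [gseq, pow_one]
    | succ n IH =>
      filter_upwards [IH, (Z_tendsto hd hp hl (n + 1)).eventually_ge_atTop 1,
        hp 1, hp (n + 1), hp 0, g_pos hd hp hl (n + 1)] with t h1 h2 h3 h4 h5 hg
      show gseq Z (n + 1) t * Z 1 t * (Z (n + 1) t)⁻¹ ≤ Z 1 t ^ (n + 2) * (Z 0 t)⁻¹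
      have hinv : (Z (n + 1) t)⁻¹ ≤ 1 := inv_le_one_of_one_le₀ h2
      have h6 : 0 ≤ gseq Z (n + 1) t * Z 1 t := le_of_lt (mul_pos hg h3)
      calc gseq Z (n + 1) t * Z 1 t * (Z (n + 1) t)⁻¹
          ≤ gseq Z (n + 1) t * Z 1 t * 1 := by
            exact mul_le_mul_of_nonneg_left hinv h6
        _ = gseq Z (n + 1) t * Z 1 t := by ring
        _ ≤ (Z 1 t ^ (n + 1) * (Z 0 t)⁻¹) * Z 1 t :=
            mul_le_mul_of_nonneg_right h1 (le_of_lt h3)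
        _ = Z 1 t ^ (n + 2) * (Z 0 t)⁻¹ := by ring
  intro n C
  rcases n with _ | n
  · -- n = 0 : gseq = 1
    filter_upwards [(Z_tendsto hd hp hl 0).eventually_ge_atTop C] with t ht
    simpa [gseq] using ht
  · rcases le_or_gt C 0 with hC | hC
    · filter_upwards [g_pos hd hp hl (n + 1), hp (n + 1)] with t h1 h2
      nlinarith
    · have hrat := (Z_ratio_pow hd hp hl 0 (n + 1)).eventually_ge_atTop C
      filter_upwards [gup n, hrat, hp 0, hp 1,
        (Z_tendsto hd hp hl (n + 1)).eventually_ge_atTop 1, g_pos hd hp hl (n + 1)]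
        with t h1 h2 h3 h4 h5 h6
      -- C * Z 1 t ^ (n+1) ≤ Z 0 t
      rw [le_div_iff₀ (show (0:ℝ) < Z (0 + 1) t ^ (n + 1) from pow_pos h4 (n + 1))] at h2
      have h2' : C * Z 1 t ^ (n + 1) ≤ Z 0 t := h2
      have s1 : C * gseq Z (n + 1) t ≤ C * (Z 1 t ^ (n + 1) * (Z 0 t)⁻¹) :=
        mul_le_mul_of_nonneg_left h1 (le_of_lt hC)
      have s3 : (C * Z 1 t ^ (n + 1)) * (Z 0 t)⁻¹ ≤ Z 0 t * (Z 0 t)⁻¹ :=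
        mul_le_mul_of_nonneg_right h2' (le_of_lt (inv_pos.2 h3))
      have s4 : Z 0 t * (Z 0 t)⁻¹ = 1 := mul_inv_cancel₀ (ne_of_gt h3)
      nlinarith

variable {F : ℝ → ℝ}
  (hFsm : ∀ n : ℕ, ∀ᶠ t in atTop, ContDiffAt ℝ n F t)
  (hFbd : ∀ n : ℕ, ∃ C : ℝ, ∀ᶠ t in atTop, |iteratedDeriv n F t| ≤ C)

include hFsm hFbd

lemma main_inv : ∀ n, Ctl (Z 1) (gseq Z n) (fun t => Wseq (Z 0) F n t - Z n t) := by
  have hb1 : ∀ᶠ t in atTop, 1 ≤ Z 1 t := (Z_tendsto hd hp hl 1).eventually_ge_atTop 1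
  have hb0 : ∀ᶠ t in atTop, 0 ≤ Z 1 t := hb1.mono fun t h => le_trans zero_le_one h
  intro n
  induction n with
  | zero =>
    have heq : (fun t => Wseq (Z 0) F 0 t - Z 0 t) = F := by
      funext t; show (Z 0 t + F t) - Z 0 t = F t; ring
    rw [heq]
    refine ⟨evS_of_contDiffAt hFsm, fun k => ?_⟩
    obtain ⟨C, hC⟩ := hFbd k
    refine ⟨max C 0, le_max_right _ _, ?_⟩
    filter_upwards [hC, hb1] with t h1 h2
    have h3 : (1:ℝ) ≤ Z 1 t ^ k := one_le_pow₀ h2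
    have : gseq Z 0 t = 1 := rfl
    rw [this]
    nlinarith [le_max_left C 0, le_max_right C 0]
  | succ n IH =>
    set δ : ℝ → ℝ := fun t => Wseq (Z 0) F n t - Z n t with hδ
    have hγ0 : ∀ᶠ t in atTop, 0 ≤ gseq Z n t := (g_pos hd hp hl n).mono fun t h => le_of_lt h
    have hWeq : Wseq (Z 0) F n = fun t => Z n t + δ t := by
      funext t; rw [hδ]; ring
    have hWsm : EvS (Wseq (Z 0) F n) :=
      ((Z_evS hd hp hl n).add IH.1).congr (Eventually.of_forall fun t => by rw [hWeq])
    -- δ is small compared to Z n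
    obtain ⟨C0, hC00, hC0b⟩ := IH.2 0
    have hδsmall : ∀ᶠ t in atTop, |δ t| ≤ (1/4) * Z n t := by
      filter_upwards [hC0b, g_bound hd hp hl n (4 * C0), g_pos hd hp hl n] with t h1 h2 h3
      have : |δ t| ≤ C0 * gseq Z n t := by simpa using h1
      nlinarith
    have hWlow : ∀ᶠ t in atTop, (1/2 : ℝ) * Z n t ≤ Wseq (Z 0) F n t := by
      filter_upwards [hδsmall, hp n] with t h1 h2
      have := abs_le.1 h1
      rw [hWeq]
      dsimp only
      linarith [this.1]
    have hWpos : ∀ᶠ t in atTop, 0 < Wseq (Z 0) F n t := by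
      filter_upwards [hWlow, hp n] with t h1 h2
      linarith
    -- Ctl for W n
    have hWctl : Ctl (Z 1) (Z n) (Wseq (Z 0) F n) := by
      have hmono : Ctl (Z 1) (Z n) δ := by
        refine IH.mono hb0 zero_le_one ?_
        filter_upwards [g_bound hd hp hl n 1] with t h1
        linarith
      have hadd := (Z_ctl hd hp hl n).add hb0 ((hp n).mono fun t h => le_of_lt h) hmono
      exact hadd.congr (Eventually.of_forall fun t => by rw [hWeq])
    -- Ctl for (W n)⁻¹
    have hWinv : Ctl (Z 1) (fun t => (Z n t)⁻¹) (fun t => (Wseq (Z 0) F n t)⁻¹) :=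
      hWctl.inv hb1 (hp n) one_half_pos (by
        filter_upwards [hWlow] with t h1
        calc (1/2 : ℝ) * Z n t ≤ Wseq (Z 0) F n t := h1)
    -- Ctl for deriv δ
    have hδd : Ctl (Z 1) (fun t => gseq Z n t * Z 1 t) (fun t => deriv δ t) := IH.deriv'
    -- Ctl for Z (n+1) * δ
    have hZδ : Ctl (Z 1) (fun t => gseq Z n t * Z 1 t) (fun t => Z (n + 1) t * δ t) := by
      have h1 := (Z_ctl hd hp hl (n + 1)).mul hb1
        ((hp (n + 1)).mono fun t h => le_of_lt h) hγ0 IH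
      refine h1.mono hb0 zero_le_one ?_
      filter_upwards [Z_le_one' hd hp hl (n + 1) (by omega), hγ0] with t h2 h3
      calc Z (n + 1) t * gseq Z n t ≤ Z 1 t * gseq Z n t :=
            mul_le_mul_of_nonneg_right h2 h3
        _ = 1 * (gseq Z n t * Z 1 t) := by ring
    have hγγ : ∀ᶠ t in atTop, 0 ≤ gseq Z n t * Z 1 t := by
      filter_upwards [hγ0, hb0] with t h1 h2 using mul_nonneg h1 h2
    have hE : Ctl (Z 1) (fun t => gseq Z n t * Z 1 t)
        (fun t => deriv δ t - Z (n + 1) t * δ t) := hδd.sub hb0 hγγ hZδ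
    have hprod : Ctl (Z 1) (fun t => gseq Z n t * Z 1 t * (Z n t)⁻¹)
        (fun t => (deriv δ t - Z (n + 1) t * δ t) * (Wseq (Z 0) F n t)⁻¹) := by
      have := hE.mul hb1 hγγ ((hp n).mono fun t h => le_of_lt (inv_pos.2 h)) hWinv
      exact this
    have hgseq : gseq Z (n + 1) = fun t => gseq Z n t * Z 1 t * (Z n t)⁻¹ := rfl
    rw [hgseq]
    refine hprod.congr ?_
    -- the identity W (n+1) - Z (n+1) = (δ' - Z(n+1) δ) / W n
    filter_upwards [hWpos, hd n, IH.1.evDiff, hp n] with t h1 h2 h3 h4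
    have hdW : deriv (Wseq (Z 0) F n) t = Z n t * Z (n + 1) t + deriv δ t := by
      rw [hWeq]
      rw [deriv_fun_add h2.differentiableAt h3]
      rw [h2.deriv]
    have hWn1 : Wseq (Z 0) F (n + 1) t
        = deriv (Wseq (Z 0) F n) t / Wseq (Z 0) F n t := rfl
    rw [hWn1, hdW]
    have hWval : Wseq (Z 0) F n t = Z n t + δ t := by rw [hWeq]
    rw [hWval]
    have hne : Z n t + δ t ≠ 0 := by rw [← hWval]; exact ne_of_gt h1
    field_simp
    ring

lemma delta_small : ∀ n, ∀ᶠ t in atTop,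
    |Wseq (Z 0) F n t - Z n t| ≤ (1/4) * Z n t := by
  intro n
  obtain ⟨C0, hC00, hC0b⟩ := (main_inv hd hp hl hFsm hFbd n).2 0
  filter_upwards [hC0b, g_bound hd hp hl n (4 * C0), g_pos hd hp hl n] with t h1 h2 h3
  have : |Wseq (Z 0) F n t - Z n t| ≤ C0 * gseq Z n t := by simpa using h1
  nlinarith

lemma main_facts : ∀ n,
    (∀ᶠ t in atTop, DifferentiableAt ℝ (Wseq (Z 0) F n) t) ∧
    (∀ᶠ t in atTop, 0 < Wseq (Z 0) F n t) ∧
    (∀ᶠ t in atTop, Wseq (Z 0) F (n + 1) t < Wseq (Z 0) F n t) ∧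
    (∀ᶠ t in atTop, Wseq (Z 0) F n t * Wseq (Z 0) F (n + 1) t = deriv (Wseq (Z 0) F n) t) := by
  have hsm : ∀ n, EvS (Wseq (Z 0) F n) := by
    intro n
    refine ((Z_evS hd hp hl n).add (main_inv hd hp hl hFsm hFbd n).1).congr
      (Eventually.of_forall fun t => by ring)
  have hpos : ∀ n, ∀ᶠ t in atTop, 0 < Wseq (Z 0) F n t := by
    intro n
    filter_upwards [delta_small hd hp hl hFsm hFbd n, hp n] with t h1 h2
    have := abs_le.1 h1
    nlinarith [this.1]
  intro n
  refine ⟨(hsm n).evDiff, hpos n, ?_, ?_⟩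
  · -- W (n+1) < W n
    have hrat := (Z_ratio_pow hd hp hl n 1).eventually_ge_atTop 2
    filter_upwards [delta_small hd hp hl hFsm hFbd n,
      delta_small hd hp hl hFsm hFbd (n + 1), hp n, hp (n + 1), hrat] with t h1 h2 h3 h4 h5
    have e1 := abs_le.1 h1
    have e2 := abs_le.1 h2
    rw [le_div_iff₀ (show (0:ℝ) < Z (n + 1) t ^ 1 from pow_pos h4 1)] at h5
    have h5' : 2 * Z (n + 1) t ≤ Z n t := by nlinarith [h5, pow_one (Z (n + 1) t)]
    nlinarith [e1.1, e2.2]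
  · -- product identity
    filter_upwards [hpos n] with t h1
    have : Wseq (Z 0) F (n + 1) t = deriv (Wseq (Z 0) F n) t / Wseq (Z 0) F n t := rfl
    rw [this]
    field_simp

end Main

/-- If `φ ∈ 𝒞^{<∞}` is overhardian and `θ ∈ 𝒞^{<∞}` is hardy-bounded,
then `φ + θ` is overhardian. -/
theorem statement19 (φ θ : RGerm) (hφ : IsOverhardian φ) (hθ : IsHardyBounded θ) :
    IsOverhardian (φ + θ) := by
  obtain ⟨z, ⟨hz0, hder⟩, hineq⟩ := hφ
  choose d hd1 hd2 using hder
  choose Zf hZeq hZdiff hZd using hd1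
  obtain ⟨Ff, hFeq, hFprops⟩ := hθ
  have hd' : ∀ n, ∀ᶠ t in atTop, HasDerivAt (Zf n) (Zf n t * Zf (n + 1) t) t := by
    intro n
    have h1 : (↑(deriv (Zf n)) : RGerm) = ↑(Zf n * Zf (n + 1)) := by
      rw [← hZd n, ← hd2 n, hZeq n, hZeq (n + 1), Filter.Germ.coe_mul]
    have h2 : deriv (Zf n) =ᶠ[atTop] Zf n * Zf (n + 1) := Filter.Germ.coe_eq.1 h1
    filter_upwards [hZdiff n, h2] with t ht he
    have h3 := ht.hasDerivAt
    rw [he] at h3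
    exact h3
  have hp' : ∀ n, ∀ᶠ t in atTop, 0 < Zf n t := by
    intro n
    have h1 := (hineq n).1
    rw [germLT, hZeq n, ← Filter.Germ.coe_zero] at h1
    exact Filter.Germ.liftRel_coe.1 h1
  have hl' : ∀ n, ∀ᶠ t in atTop, Zf (n + 1) t < Zf n t := by
    intro n
    have h1 := (hineq n).2
    rw [germLT, hZeq n, hZeq (n + 1)] at h1
    exact Filter.Germ.liftRel_coe.1 h1
  have hFsm : ∀ n : ℕ, ∀ᶠ t in atTop, ContDiffAt ℝ n Ff t := fun n => (hFprops n).1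
  have hFbd : ∀ n : ℕ, ∃ C : ℝ, ∀ᶠ t in atTop, |iteratedDeriv n Ff t| ≤ C :=
    fun n => (hFprops n).2
  have facts := main_facts hd' hp' hl' hFsm hFbd
  refine ⟨fun n => ↑(Wseq (Zf 0) Ff n), ⟨?_, ?_⟩, ?_⟩
  · -- W 0 = φ + θ
    rw [← hz0, hZeq 0, hFeq, ← Filter.Germ.coe_add]
    rfl
  · intro i
    refine ⟨↑(deriv (Wseq (Zf 0) Ff i)), ⟨Wseq (Zf 0) Ff i, rfl, (facts i).1, rfl⟩, ?_⟩
    rw [← Filter.Germ.coe_mul]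
    exact Filter.Germ.coe_eq.2 ((facts i).2.2.2)
  · intro i
    constructor
    · rw [germLT, ← Filter.Germ.coe_zero]
      exact Filter.Germ.liftRel_coe.2 ((facts i).2.1)
    · rw [germLT]
      exact Filter.Germ.liftRel_coe.2 ((facts i).2.2.1)


end
end
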